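/- arXiv:1812.06448 — 11 statements merged into one kernel-verified Lean document; each statement's English description precedes it below -/
import Mathlib

section
/- For every n ≥ 2, f(n, C₃) ≤ 2^{n-2}; that is, the power set 𝒫(n) can be partitioned into 2^{n-2} triangle-free parts. (Explicitly, placing into one part the four sets A, [n]\A, A∪{n}, [n]\(A∪{n}) for each A ⊆ [n-1] gives such a partition.) -/
/-!
Fix two points `p ≠ q` and group the subsets of `[n]` by the cut `{A, Aᶜ}` of `[n] \ {p}` they
induce; there are `2 ^ (n - 2)` groups of four sets each. Two sets of a group of which exactly one
contains `q` lie on opposite sides of the same cut, so they meet at most in `p`. At most one of the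
three witnesses of a Berge triangle is `p`, so its three sets all contain `q` or all avoid it.
Then they agree off `p`, and two of them coincide.
-/

/-- Three distinct sets `A, B, C ⊆ [n]` form a Berge triangle if there exist pairwise
distinct elements `x ∈ A ∩ B`, `y ∈ A ∩ C`, `z ∈ B ∩ C`. -/
def BergeTriangle {n : ℕ} (A B C : Finset (Fin n)) : Prop :=
  A ≠ B ∧ A ≠ C ∧ B ≠ C ∧
    ∃ x y z : Fin n, x ≠ y ∧ x ≠ z ∧ y ≠ z ∧
      x ∈ A ∩ B ∧ y ∈ A ∩ C ∧ z ∈ B ∩ C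

/-- A family of subsets of `[n]` is triangle-free if no three of its members form a
Berge triangle. -/
def TriangleFree {n : ℕ} (F : Set (Finset (Fin n))) : Prop :=
  ∀ A ∈ F, ∀ B ∈ F, ∀ C ∈ F, ¬ BergeTriangle A B C

section CutKey

variable {α : Type*} [Fintype α] [DecidableEq α] {p q : α} {A B : Finset α}

/-- The points other than `p` and `q` on the same side of the cut `{A, Aᶜ}` as `q`. Its fibres
are the paper's classes `{S, [n] \ S, S ∪ {n}, [n] \ (S ∪ {n})}`, with `n` in the role of `p`. -/
def cutKey (p q : α) (A : Finset α) : Finset {x // x ∉ ({p, q} : Finset α)} :=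
  {x | x.1 ∈ A ↔ q ∈ A}

theorem mem_cutKey {x : {x // x ∉ ({p, q} : Finset α)}} :
    x ∈ cutKey p q A ↔ (x.1 ∈ A ↔ q ∈ A) := by
  simp [cutKey]

theorem cutKey_congr (h : cutKey p q A = cutKey p q B) {x : α} (hx : x ∉ ({p, q} : Finset α)) :
    (x ∈ A ↔ q ∈ A) ↔ (x ∈ B ↔ q ∈ B) := by
  simpa only [mem_cutKey] using Finset.ext_iff.mp h ⟨x, hx⟩

theorem mem_iff_mem_of_cutKey_eq (h : cutKey p q A = cutKey p q B) {x : α} (hxA : x ∈ A)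
    (hxB : x ∈ B) (hxp : x ≠ p) : q ∈ A ↔ q ∈ B := by
  by_cases hxq : x = q
  · subst hxq
    exact iff_of_true hxA hxB
  · have := cutKey_congr h (x := x) (by simp [hxp, hxq])
    tauto

theorem eq_of_cutKey_eq (h : cutKey p q A = cutKey p q B) (hp : p ∈ A ↔ p ∈ B)
    (hq : q ∈ A ↔ q ∈ B) : A = B := by
  ext x
  by_cases hx : x ∈ ({p, q} : Finset α)
  · rcases Finset.mem_insert.mp hx with rfl | hx
    · exact hp
    · rw [Finset.mem_singleton.mp hx]
      exact hq
  · have := cutKey_congr h hx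
    tauto

theorem card_finset_subtype_notMem_pair (hpq : p ≠ q) :
    Fintype.card (Finset {x // x ∉ ({p, q} : Finset α)}) = 2 ^ (Fintype.card α - 2) := by
  rw [Fintype.card_finset, Fintype.card_subtype_compl, Fintype.card_coe, Finset.card_pair hpq]

end CutKey

theorem not_bergeTriangle_of_cutKey_eq {n : ℕ} {p q : Fin n} {A B C : Finset (Fin n)}
    (hB : cutKey p q B = cutKey p q A) (hC : cutKey p q C = cutKey p q A) :
    ¬ BergeTriangle A B C := by
  rintro ⟨hAB, hAC, hBC, x, y, z, hxy, hxz, hyz, hx, hy, hz⟩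
  rw [Finset.mem_inter] at hx hy hz
  have hqAB := fun hxp : x ≠ p => mem_iff_mem_of_cutKey_eq hB.symm hx.1 hx.2 hxp
  have hqAC := fun hyp : y ≠ p => mem_iff_mem_of_cutKey_eq hC.symm hy.1 hy.2 hyp
  have hqBC := fun hzp : z ≠ p => mem_iff_mem_of_cutKey_eq (hB.trans hC.symm) hz.1 hz.2 hzp
  have hq : (q ∈ A ↔ q ∈ B) ∧ (q ∈ A ↔ q ∈ C) := by
    rcases eq_or_ne x p with rfl | hxp
    · exact ⟨(hqAC hxy.symm).trans (hqBC hxz.symm).symm, hqAC hxy.symm⟩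
    · rcases eq_or_ne y p with rfl | hyp
      · exact ⟨hqAB hxp, (hqAB hxp).trans (hqBC hyz.symm)⟩
      · exact ⟨hqAB hxp, hqAC hyp⟩
  have hp : (p ∈ A ↔ p ∈ B) ∨ (p ∈ A ↔ p ∈ C) ∨ (p ∈ B ↔ p ∈ C) := by
    by_cases hpA : p ∈ A <;> by_cases hpB : p ∈ B <;> simp [hpA, hpB, em, or_comm]
  rcases hp with hp | hp | hp
  · exact hAB (eq_of_cutKey_eq hB.symm hp hq.1)
  · exact hAC (eq_of_cutKey_eq hC.symm hp hq.2)
  · exact hBC (eq_of_cutKey_eq (hB.trans hC.symm) hp (hq.1.symm.trans hq.2))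

/-- For every `n ≥ 2`, the power set of `[n]` can be partitioned into `2 ^ (n - 2)`
triangle-free parts, i.e. `f(n, C₃) ≤ 2 ^ (n - 2)`. -/
theorem f_C3_upper (n : ℕ) (hn : 2 ≤ n) :
    ∃ c : Finset (Fin n) → Fin (2 ^ (n - 2)),
      ∀ i : Fin (2 ^ (n - 2)), TriangleFree {A | c A = i} := by
  let p : Fin n := ⟨0, by omega⟩
  let q : Fin n := ⟨1, by omega⟩
  have hpq : p ≠ q := by simp [p, q, Fin.ext_iff]
  have hcard := card_finset_subtype_notMem_pair hpq
  rw [Fintype.card_fin] at hcard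
  let e := Fintype.equivFinOfCardEq hcard
  refine ⟨fun A => e (cutKey p q A), fun i A hA B hB C hC => ?_⟩
  exact not_bergeTriangle_of_cutKey_eq (e.injective (hB.trans hA.symm))
    (e.injective (hC.trans hA.symm))
end

section
/- For every n ≥ 2, f(n, C₄) ≤ 2^{n-2}; that is, the power set 𝒫(n) can be partitioned into 2^{n-2} parts each of which is C₄-free. -/
/-- Four distinct sets `A, B, C, D ⊆ [n]` form a Berge four-cycle in that cyclic order if
there exist pairwise distinct elements `x₁ ∈ A ∩ B`, `x₂ ∈ B ∩ C`, `x₃ ∈ C ∩ D`,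
`x₄ ∈ D ∩ A`. -/
def BergeC4 {n : ℕ} (A B C D : Finset (Fin n)) : Prop :=
  A ≠ B ∧ A ≠ C ∧ A ≠ D ∧ B ≠ C ∧ B ≠ D ∧ C ≠ D ∧
    ∃ x₁ x₂ x₃ x₄ : Fin n,
      x₁ ≠ x₂ ∧ x₁ ≠ x₃ ∧ x₁ ≠ x₄ ∧ x₂ ≠ x₃ ∧ x₂ ≠ x₄ ∧ x₃ ≠ x₄ ∧
      x₁ ∈ A ∩ B ∧ x₂ ∈ B ∩ C ∧ x₃ ∈ C ∩ D ∧ x₄ ∈ D ∩ A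

/-- A family of subsets of `[n]` is `C₄`-free if no four of its members, in any cyclic
order, form a Berge four-cycle. -/
def C4Free {n : ℕ} (F : Set (Finset (Fin n))) : Prop :=
  ∀ A ∈ F, ∀ B ∈ F, ∀ C ∈ F, ∀ D ∈ F, ¬ BergeC4 A B C D

/-!
Fix two points `z ≠ o` of `[n]`. Identify each set `X` with its complement when `X` separates
`z` from `o`, and then forget `z` and `o`: the result is a subset `T` of `[n] \ {z, o}`, so there
are `2 ^ (n - 2)` classes. The class of `T` is contained in
`{T, T ∪ {z, o}, (T ∪ {z, o})ᶜ ∪ {z}, (T ∪ {z, o})ᶜ ∪ {o}}`, in which `T` meets only `T ∪ {z, o}`.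
A Berge four-cycle inside a family of four sets passes through all of them, and there every
set meets its two distinct neighbours; so no class contains one.
-/

namespace BergeC4

variable {n : ℕ} {A B C D : Finset (Fin n)}

theorem rotate (h : BergeC4 A B C D) : BergeC4 B C D A := by
  obtain ⟨hAB, hAC, hAD, hBC, hBD, hCD, x₁, x₂, x₃, x₄, h₁₂, h₁₃, h₁₄, h₂₃, h₂₄, h₃₄,
    hx₁, hx₂, hx₃, hx₄⟩ := h
  exact ⟨hBC, hBD, hAB.symm, hCD, hAC.symm, hAD.symm, x₂, x₃, x₄, x₁,
    h₂₃, h₂₄, h₁₂.symm, h₃₄, h₁₃.symm, h₁₄.symm, hx₂, hx₃, hx₄, hx₁⟩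

theorem not_disjoint (h : BergeC4 A B C D) : ¬Disjoint A B := by
  obtain ⟨-, -, -, -, -, -, x, -, -, -, -, -, -, -, -, -, hx, -⟩ := h
  exact Finset.not_disjoint_iff_nonempty_inter.2 ⟨x, hx⟩

end BergeC4

section FourSets

variable {n : ℕ} {P Q R S : Finset (Fin n)}

theorem not_bergeC4_of_disjoint {B C D : Finset (Fin n)}
    (hB : B ∈ ({P, Q, R, S} : Set (Finset (Fin n))))
    (hD : D ∈ ({P, Q, R, S} : Set (Finset (Fin n))))
    (hR : Disjoint P R) (hS : Disjoint P S) : ¬BergeC4 P B C D := by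
  intro h
  have eq_Q : ∀ X ∈ ({P, Q, R, S} : Set (Finset (Fin n))), X ≠ P → ¬Disjoint P X → X = Q := by
    rintro X (rfl | rfl | rfl | rfl) hXP hPX <;> tauto
  have hBQ : B = Q := eq_Q B hB h.1.symm h.not_disjoint
  have hDQ : D = Q :=
    eq_Q D hD h.2.2.1.symm fun hPD => h.rotate.rotate.rotate.not_disjoint hPD.symm
  exact h.2.2.2.2.1 (hBQ.trans hDQ.symm)

theorem BergeC4.mem_of_mem_four {A B C D : Finset (Fin n)} (h : BergeC4 A B C D)
    (hA : A ∈ ({P, Q, R, S} : Set (Finset (Fin n))))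
    (hB : B ∈ ({P, Q, R, S} : Set (Finset (Fin n))))
    (hC : C ∈ ({P, Q, R, S} : Set (Finset (Fin n))))
    (hD : D ∈ ({P, Q, R, S} : Set (Finset (Fin n)))) :
    P ∈ ({A, B, C, D} : Set (Finset (Fin n))) := by
  by_contra! hP
  simp only [Set.mem_insert_iff, Set.mem_singleton_iff, not_or] at hP
  have mem_QRS : ∀ X ∈ ({P, Q, R, S} : Set (Finset (Fin n))), P ≠ X →
      X ∈ ({Q, R, S} : Finset (Finset (Fin n))) := by
    rintro X (rfl | rfl | rfl | rfl) hPX <;> simp_all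
  have hsub : ({A, B, C, D} : Finset (Finset (Fin n))) ⊆ {Q, R, S} := by
    simp only [Finset.insert_subset_iff, Finset.singleton_subset_iff]
    exact ⟨mem_QRS A hA hP.1, mem_QRS B hB hP.2.1, mem_QRS C hC hP.2.2.1,
      mem_QRS D hD hP.2.2.2⟩
  obtain ⟨hAB, hAC, hAD, hBC, hBD, hCD, -⟩ := h
  have hcard : ({A, B, C, D} : Finset (Finset (Fin n))).card = 4 :=
    Finset.card_eq_four.2 ⟨A, B, C, D, hAB, hAC, hAD, hBC, hBD, hCD, rfl⟩
  have := (Finset.card_le_card hsub).trans Finset.card_le_three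
  omega

theorem c4Free_of_subset_of_disjoint {F : Set (Finset (Fin n))}
    (hF : F ⊆ {P, Q, R, S}) (hR : Disjoint P R) (hS : Disjoint P S) : C4Free F := by
  intro A hA B hB C hC D hD h
  rcases h.mem_of_mem_four (hF hA) (hF hB) (hF hC) (hF hD) with rfl | rfl | rfl | rfl
  · exact not_bergeC4_of_disjoint (hF hB) (hF hD) hR hS h
  · exact not_bergeC4_of_disjoint (hF hC) (hF hA) hR hS h.rotate
  · exact not_bergeC4_of_disjoint (hF hD) (hF hB) hR hS h.rotate.rotate
  · exact not_bergeC4_of_disjoint (hF hA) (hF hC) hR hS h.rotate.rotate.rotate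

end FourSets

section PairCore

variable {n : ℕ}

def pairCore (z o : Fin n) (X : Finset (Fin n)) : Finset (Fin n) :=
  if (z ∈ X ↔ o ∈ X) then X \ {z, o} else Xᶜ \ {z, o}

theorem pairCore_subset (z o : Fin n) (X : Finset (Fin n)) : pairCore z o X ⊆ {z, o}ᶜ := by
  unfold pairCore
  split <;> exact Finset.subset_compl_iff_disjoint_right.2 Finset.sdiff_disjoint

theorem mem_classes_of_pairCore_eq {z o : Fin n} {X T : Finset (Fin n)}
    (hX : pairCore z o X = T) :
    X ∈ ({T, T ∪ {z, o}, insert z (T ∪ {z, o})ᶜ, insert o (T ∪ {z, o})ᶜ} :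
      Set (Finset (Fin n))) := by
  subst hX
  simp only [Set.mem_insert_iff, Set.mem_singleton_iff, Finset.ext_iff, pairCore]
  by_cases hz : z ∈ X <;> by_cases ho : o ∈ X <;> simp [hz, ho] <;> grind

end PairCore

theorem Finset.disjoint_insert_compl_union {α : Type*} [DecidableEq α] [Fintype α]
    {s t : Finset α} {y : α} (hy : y ∉ s) : Disjoint s (insert y (s ∪ t)ᶜ) :=
  Finset.disjoint_insert_right.2 ⟨hy, disjoint_compl_right_iff.2 Finset.subset_union_left⟩

/-- For every `n ≥ 2`, the power set of `[n]` can be partitioned into `2 ^ (n - 2)`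
`C₄`-free parts, i.e. `f(n, C₄) ≤ 2 ^ (n - 2)`. -/
theorem f_C4_upper (n : ℕ) (hn : 2 ≤ n) :
    ∃ c : Finset (Fin n) → Fin (2 ^ (n - 2)),
      ∀ i : Fin (2 ^ (n - 2)), C4Free {A | c A = i} := by
  let z : Fin n := ⟨0, by omega⟩
  let o : Fin n := ⟨1, by omega⟩
  have hzo : z ≠ o := by simp [z, o, Fin.ext_iff]
  have hcard : (({z, o}ᶜ : Finset (Fin n)).powerset).card = 2 ^ (n - 2) := by
    rw [Finset.card_powerset, Finset.card_compl, Finset.card_pair hzo, Fintype.card_fin]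
  let e := Finset.equivFinOfCardEq hcard
  refine ⟨fun X => e ⟨pairCore z o X, Finset.mem_powerset.2 (pairCore_subset z o X)⟩,
    fun i => ?_⟩
  let T : Finset (Fin n) := e.symm i
  have hT : T ⊆ {z, o}ᶜ := Finset.mem_powerset.1 (e.symm i).2
  have hzT : z ∉ T := fun h => Finset.mem_compl.1 (hT h) (by simp)
  have hoT : o ∉ T := fun h => Finset.mem_compl.1 (hT h) (by simp)
  refine c4Free_of_subset_of_disjoint (fun X hX => mem_classes_of_pairCore_eq ?_)
    (Finset.disjoint_insert_compl_union hzT) (Finset.disjoint_insert_compl_union hoT)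
  simp only [T, ← show _ = i from hX, Equiv.symm_apply_apply]
end

section
/- For every n ≥ 2, f(n, S₃) ≤ 2^{n-2}; that is, the power set 𝒫(n) can be partitioned into 2^{n-2} parts each of which is claw-free. -/
/-- A Berge claw consists of three distinct sets `E₁, E₂, E₃ ⊆ [n]` together with four
pairwise distinct elements `v, u₁, u₂, u₃` such that `{v, uᵢ} ⊆ Eᵢ` for `i = 1, 2, 3`. -/
def BergeClaw {n : ℕ} (E₁ E₂ E₃ : Finset (Fin n)) : Prop :=
  E₁ ≠ E₂ ∧ E₁ ≠ E₃ ∧ E₂ ≠ E₃ ∧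
    ∃ v u₁ u₂ u₃ : Fin n,
      v ≠ u₁ ∧ v ≠ u₂ ∧ v ≠ u₃ ∧ u₁ ≠ u₂ ∧ u₁ ≠ u₃ ∧ u₂ ≠ u₃ ∧
      v ∈ E₁ ∧ u₁ ∈ E₁ ∧ v ∈ E₂ ∧ u₂ ∈ E₂ ∧ v ∈ E₃ ∧ u₃ ∈ E₃

/-- A family of subsets of `[n]` is claw-free if it contains no Berge claw. -/
def ClawFree {n : ℕ} (F : Set (Finset (Fin n))) : Prop :=
  ∀ E₁ ∈ F, ∀ E₂ ∈ F, ∀ E₃ ∈ F, ¬ BergeClaw E₁ E₂ E₃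

/-- The key function: complement if `z ∈ A`, then remove `o`. -/
def kfun {n : ℕ} (z o : Fin n) (A : Finset (Fin n)) : Finset (Fin n) :=
  (if z ∈ A then Aᶜ else A) \ {o}

lemma o_notMem_kfun {n : ℕ} (z o : Fin n) (A : Finset (Fin n)) : o ∉ kfun z o A := by
  simp [kfun]

lemma z_notMem_kfun {n : ℕ} (z o : Fin n) (A : Finset (Fin n)) : z ∉ kfun z o A := by
  unfold kfun
  by_cases h : z ∈ A <;> simp [h]

lemma kfun_cases {n : ℕ} (z o : Fin n) (A : Finset (Fin n)) :
    A = kfun z o A ∨ A = insert o (kfun z o A) ∨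
    A = (kfun z o A)ᶜ ∨ A = (insert o (kfun z o A))ᶜ := by
  unfold kfun
  by_cases hz : z ∈ A <;> by_cases ho : o ∈ A <;>
    simp only [hz, ho, if_true, if_false, Finset.sdiff_singleton_eq_erase]
  · -- z ∈ A, o ∈ A : o ∉ Aᶜ so erase does nothing, A = (Aᶜ)ᶜ
    have h1 : (Aᶜ).erase o = Aᶜ := Finset.erase_eq_of_notMem (by simp [ho])
    right; right; left
    rw [h1, compl_compl]
  · -- z ∈ A, o ∉ A : o ∈ Aᶜ, Aᶜ = insert o (Aᶜ.erase o)
    right; right; right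
    rw [Finset.insert_erase (by simp [ho] : o ∈ Aᶜ), compl_compl]
  · -- z ∉ A, o ∈ A : A = insert o (A.erase o)
    right; left
    rw [Finset.insert_erase ho]
  · -- z ∉ A, o ∉ A
    left
    rw [Finset.erase_eq_of_notMem ho]

lemma two_pigeon {α : Type*} {a b c X Y : α} (h1 : a = X ∨ a = Y) (h2 : b = X ∨ b = Y)
    (h3 : c = X ∨ c = Y) (d12 : a ≠ b) (d13 : a ≠ c) (d23 : b ≠ c) : False := by
  rcases h1 with rfl | rfl <;> rcases h2 with rfl | rfl <;> rcases h3 with rfl | rfl <;> simp_all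

/-- For every `n ≥ 2`, the power set of `[n]` can be partitioned into `2 ^ (n - 2)`
claw-free parts, i.e. `f(n, S₃) ≤ 2 ^ (n - 2)`. -/
theorem f_S3_upper (n : ℕ) (hn : 2 ≤ n) :
    ∃ c : Finset (Fin n) → Fin (2 ^ (n - 2)),
      ∀ i : Fin (2 ^ (n - 2)), ClawFree {A | c A = i} := by
  classical
  set z : Fin n := ⟨0, by omega⟩ with hzdef
  set o : Fin n := ⟨1, by omega⟩ with hodef
  have hzo : z ≠ o := by simp [hzdef, hodef, Fin.ext_iff]
  set T : Finset (Fin n) := Finset.univ \ {z, o} with hTdef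
  have hTcard : T.card = n - 2 := by
    rw [hTdef, Finset.card_sdiff_of_subset (by simp)]
    rw [Finset.card_univ, Fintype.card_fin]
    rw [Finset.card_insert_of_notMem (by simp [hzo]), Finset.card_singleton]
  have hmem : ∀ A : Finset (Fin n), kfun z o A ∈ T.powerset := by
    intro A
    rw [Finset.mem_powerset]
    intro x hx
    rw [hTdef]
    simp only [Finset.mem_sdiff, Finset.mem_univ, true_and, Finset.mem_insert,
      Finset.mem_singleton]
    push_neg
    constructor
    · rintro rfl; exact z_notMem_kfun z o A hx
    · rintro rfl; exact o_notMem_kfun z o A hx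
  have hPcard : T.powerset.card = 2 ^ (n - 2) := by
    rw [Finset.card_powerset, hTcard]
  let eqv := T.powerset.equivFin
  refine ⟨fun A => finCongr hPcard (eqv ⟨kfun z o A, hmem A⟩), ?_⟩
  intro i E₁ h₁ E₂ h₂ E₃ h₃ claw
  simp only [Set.mem_setOf_eq] at h₁ h₂ h₃
  have key : ∀ {A B : Finset (Fin n)},
      finCongr hPcard (eqv ⟨kfun z o A, hmem A⟩) = finCongr hPcard (eqv ⟨kfun z o B, hmem B⟩) →
      kfun z o A = kfun z o B := by
    intro A B h
    have h2 := eqv.injective ((finCongr hPcard).injective h)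
    exact Subtype.ext_iff.mp h2
  have e12 : kfun z o E₁ = kfun z o E₂ := key (h₁.trans h₂.symm)
  have e13 : kfun z o E₁ = kfun z o E₃ := key (h₁.trans h₃.symm)
  obtain ⟨d12, d13, d23, v, u₁, u₂, u₃, hvu₁, hvu₂, hvu₃, h12, h13, h23,
    hv1, hu1, hv2, hu2, hv3, hu3⟩ := claw
  set e := kfun z o E₁ with he
  have c1 := kfun_cases z o E₁
  have c2 := kfun_cases z o E₂
  have c3 := kfun_cases z o E₃
  rw [← e12] at c2
  rw [← e13] at c3
  have hoe : o ∉ e := o_notMem_kfun z o E₁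
  -- In each case, the common vertex `v` lies in exactly two of the four candidate sets,
  -- so the three pairwise-distinct sets E₁, E₂, E₃ cannot all contain `v`.
  by_cases hve : v ∈ e
  · have filt : ∀ {A : Finset (Fin n)}, v ∈ A →
        (A = e ∨ A = insert o e ∨ A = eᶜ ∨ A = (insert o e)ᶜ) →
        A = e ∨ A = insert o e := by
      rintro A hv (h | h | h | h)
      · exact Or.inl h
      · exact Or.inr h
      · exfalso; subst h; rw [Finset.mem_compl] at hv; exact hv hve
      · exfalso; subst h; rw [Finset.mem_compl] at hv
        exact hv (Finset.mem_insert_of_mem hve)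
    exact two_pigeon (filt hv1 c1) (filt hv2 c2) (filt hv3 c3) d12 d13 d23
  · by_cases hvo : v = o
    · have filt : ∀ {A : Finset (Fin n)}, v ∈ A →
          (A = e ∨ A = insert o e ∨ A = eᶜ ∨ A = (insert o e)ᶜ) →
          A = insert o e ∨ A = eᶜ := by
        rintro A hv (h | h | h | h)
        · exfalso; subst h; exact hve hv
        · exact Or.inl h
        · exact Or.inr h
        · exfalso; subst h; rw [Finset.mem_compl] at hv
          exact hv (hvo ▸ Finset.mem_insert_self o e)
      exact two_pigeon (filt hv1 c1) (filt hv2 c2) (filt hv3 c3) d12 d13 d23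
    · have filt : ∀ {A : Finset (Fin n)}, v ∈ A →
          (A = e ∨ A = insert o e ∨ A = eᶜ ∨ A = (insert o e)ᶜ) →
          A = eᶜ ∨ A = (insert o e)ᶜ := by
        rintro A hv (h | h | h | h)
        · exfalso; subst h; exact hve hv
        · exfalso; subst h
          rcases Finset.mem_insert.mp hv with h' | h'
          · exact hvo h'
          · exact hve h'
        · exact Or.inl h
        · exact Or.inr h
      exact two_pigeon (filt hv1 c1) (filt hv2 c2) (filt hv3 c3) d12 d13 d23
end

section
/- For every n ≥ 2, every partition of 𝒫(n) into claw-free parts has at least 2^{n-2} − n/2 parts; that is, f(n, S₃) ≥ 2^{n-2} − n/2. -/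
open Finset

/-- Three finsets, pairwise distinct (only `A₁ ≠ A₂` is needed), each of size `≥ 2`,
have a system of distinct representatives. -/
lemma sdr3 {α : Type*} [DecidableEq α] (A₁ A₂ A₃ : Finset α)
    (h12 : A₁ ≠ A₂)
    (c1 : 2 ≤ A₁.card) (c2 : 2 ≤ A₂.card) (c3 : 2 ≤ A₃.card) :
    ∃ u₁ ∈ A₁, ∃ u₂ ∈ A₂, ∃ u₃ ∈ A₃, u₁ ≠ u₂ ∧ u₁ ≠ u₃ ∧ u₂ ≠ u₃ := by
  obtain ⟨u₃, hu₃⟩ := Finset.card_pos.mp (by omega : 0 < A₃.card)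
  have hb1 : (A₁.erase u₃).Nonempty := by
    obtain ⟨x, hx, hxne⟩ := Finset.exists_mem_ne (s := A₁) (by omega) u₃
    exact ⟨x, Finset.mem_erase.mpr ⟨hxne, hx⟩⟩
  have hb2 : (A₂.erase u₃).Nonempty := by
    obtain ⟨x, hx, hxne⟩ := Finset.exists_mem_ne (s := A₂) (by omega) u₃
    exact ⟨x, Finset.mem_erase.mpr ⟨hxne, hx⟩⟩
  set B₁ := A₁.erase u₃ with hB₁
  set B₂ := A₂.erase u₃ with hB₂
  by_cases hBeq : B₁ = B₂
  · by_cases hcard : 2 ≤ B₁.card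
    · obtain ⟨y, hy⟩ := hb1
      obtain ⟨x, hx, hxy⟩ := Finset.exists_mem_ne (s := B₁) (by omega) y
      refine ⟨y, Finset.mem_of_mem_erase hy, x, ?_, u₃, hu₃, ?_, ?_, ?_⟩
      · exact Finset.mem_of_mem_erase (hBeq ▸ hx)
      · exact fun h => hxy h.symm
      · exact Finset.ne_of_mem_erase hy
      · exact Finset.ne_of_mem_erase (hBeq ▸ hx)
    · exfalso
      obtain ⟨w, hw⟩ := Finset.card_eq_one.mp (by
        have := Finset.card_pos.mpr hb1; omega : B₁.card = 1)
      have key : ∀ (A : Finset α), 2 ≤ A.card → A.erase u₃ = {w} → A = insert u₃ {w} := by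
        intro A hA hAe
        apply Finset.eq_of_subset_of_card_le
        · intro x hx
          by_cases hxu : x = u₃
          · simp [hxu]
          · have hxB : x ∈ A.erase u₃ := Finset.mem_erase.mpr ⟨hxu, hx⟩
            rw [hAe] at hxB
            simp_all
        · have : (insert u₃ ({w} : Finset α)).card ≤ 2 :=
            le_trans (Finset.card_insert_le _ _) (by simp)
          omega
      have hA1 : A₁ = insert u₃ {w} := key A₁ c1 hw
      have hA2 : A₂ = insert u₃ {w} := key A₂ c2 (hBeq.symm.trans hw)
      exact h12 (hA1.trans hA2.symm)
  · by_cases hsub : B₁ ⊆ B₂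
    · obtain ⟨x, hx2, hx1⟩ :=
        Finset.exists_of_ssubset (Finset.ssubset_iff_subset_ne.mpr ⟨hsub, hBeq⟩)
      obtain ⟨y, hy⟩ := hb1
      exact ⟨y, Finset.mem_of_mem_erase hy, x, Finset.mem_of_mem_erase hx2, u₃, hu₃,
        fun h => hx1 (h ▸ hy), Finset.ne_of_mem_erase hy, Finset.ne_of_mem_erase hx2⟩
    · obtain ⟨x, hx1, hx2⟩ := Finset.not_subset.mp hsub
      obtain ⟨y, hy⟩ := hb2
      exact ⟨x, Finset.mem_of_mem_erase hx1, y, Finset.mem_of_mem_erase hy, u₃, hu₃,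
        fun h => hx2 (h ▸ hy), Finset.ne_of_mem_erase hx1, Finset.ne_of_mem_erase hy⟩

/-- For every `n ≥ 2`, every partition of the power set of `[n]` into claw-free parts
has at least `2 ^ (n - 2) - n / 2` parts, i.e. `f(n, S₃) ≥ 2 ^ (n - 2) - n / 2`. -/
theorem f_S3_lower (n : ℕ) (hn : 2 ≤ n) (t : ℕ)
    (c : Finset (Fin n) → Fin t)
    (hfree : ∀ i : Fin t, ClawFree {A | c A = i}) :
    (2 : ℝ) ^ (n - 2) - n / 2 ≤ t := by
  haveI : NeZero n := ⟨by omega⟩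
  classical
  set v : Fin n := 0 with hv
  set U : Finset (Finset (Fin n)) := univ.filter (fun A => v ∈ A) with hUdef
  set S : Finset (Finset (Fin n)) := U.filter (fun A => 3 ≤ A.card) with hSdef
  set T : Finset (Finset (Fin n)) := U.filter (fun A => ¬ 3 ≤ A.card) with hTdef
  -- card U = 2^(n-1)
  have hUcard : U.card = 2 ^ (n - 1) := by
    have : U.card = ((univ.erase v).powerset).card := by
      refine Finset.card_bij' (fun A _ => A.erase v) (fun B _ => insert v B) ?_ ?_ ?_ ?_
      · intro A hA
        simp only [Finset.mem_powerset]
        intro x hx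
        exact Finset.mem_erase.mpr ⟨(Finset.mem_erase.mp hx).1, mem_univ x⟩
      · intro B hB
        simp only [hUdef, Finset.mem_filter, mem_univ, true_and]
        exact Finset.mem_insert_self v B
      · intro A hA
        simp only [hUdef, Finset.mem_filter] at hA
        exact Finset.insert_erase hA.2
      · intro B hB
        simp only [Finset.mem_powerset] at hB
        exact Finset.erase_insert (fun h => (Finset.mem_erase.mp (hB h)).1 rfl)
    rw [this, Finset.card_powerset, Finset.card_erase_of_mem (mem_univ v), Finset.card_univ,
      Fintype.card_fin]
  -- card T = n
  have hTcard : T.card = n := by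
    have hTeq : T = insert {v} ((univ.erase v).image (fun x => insert v {x})) := by
      ext A
      simp only [hTdef, hUdef, Finset.mem_filter, Finset.mem_insert, Finset.mem_image,
        Finset.mem_erase, mem_univ, true_and, and_true, not_le]
      constructor
      · rintro ⟨hvA, hcard⟩
        have h1 : 1 ≤ A.card := Finset.card_pos.mpr ⟨v, hvA⟩
        rcases (by omega : A.card = 1 ∨ A.card = 2) with h | h
        · left
          obtain ⟨a, ha⟩ := Finset.card_eq_one.mp h
          subst ha
          have : v = a := Finset.mem_singleton.mp hvA
          rw [this]
        · right
          obtain ⟨a, b, hab, hA⟩ := Finset.card_eq_two.mp h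
          subst hA
          simp only [Finset.mem_insert, Finset.mem_singleton] at hvA
          rcases hvA with h' | h'
          · subst h'
            exact ⟨b, fun hb => hab hb.symm, rfl⟩
          · subst h'
            exact ⟨a, fun ha => hab ha, by rw [Finset.pair_comm]⟩
      · rintro (rfl | ⟨x, hx, rfl⟩)
        · simp
        · refine ⟨Finset.mem_insert_self _ _, ?_⟩
          have : (insert v ({x} : Finset (Fin n))).card ≤ 2 := by
            refine le_trans (Finset.card_insert_le _ _) ?_
            rw [Finset.card_singleton]
          omega
    rw [hTeq, Finset.card_insert_of_notMem, Finset.card_image_of_injOn,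
      Finset.card_erase_of_mem (mem_univ v), Finset.card_univ, Fintype.card_fin]
    · omega
    · intro a ha b hb hab
      have hab' : insert v ({a} : Finset (Fin n)) = insert v {b} := hab
      have : a ∈ insert v ({b} : Finset (Fin n)) :=
        hab' ▸ Finset.mem_insert_of_mem (Finset.mem_singleton_self a)
      simp only [Finset.mem_insert, Finset.mem_singleton] at this
      rcases this with h | h
      · exact absurd h (Finset.mem_erase.mp ha).1
      · exact h
    · intro h
      simp only [Finset.mem_image, Finset.mem_erase] at h
      obtain ⟨x, ⟨hx, -⟩, hx2⟩ := h
      have : x ∈ ({v} : Finset (Fin n)) := hx2 ▸ Finset.mem_insert_of_mem (Finset.mem_singleton_self x)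
      exact hx (Finset.mem_singleton.mp this)
  have hST : S.card + T.card = U.card := Finset.card_filter_add_card_filter_not _
  -- each fiber of c on S has at most 2 elements
  have hfib : ∀ i : Fin t, (S.filter (fun A => c A = i)).card ≤ 2 := by
    intro i
    by_contra h
    push_neg at h
    obtain ⟨s, hs, hscard⟩ := Finset.exists_subset_card_eq (show 3 ≤ _ from h)
    obtain ⟨E₁, E₂, E₃, h12, h13, h23, hseq⟩ := Finset.card_eq_three.mp hscard
    have hmem : ∀ E ∈ s, v ∈ E ∧ 3 ≤ E.card ∧ c E = i := by
      intro E hE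
      have := hs hE
      simp only [hSdef, hUdef, Finset.mem_filter, mem_univ, true_and] at this
      tauto
    have m1 := hmem E₁ (by rw [hseq]; simp)
    have m2 := hmem E₂ (by rw [hseq]; simp)
    have m3 := hmem E₃ (by rw [hseq]; simp)
    have hc1 : 2 ≤ (E₁.erase v).card := by
      rw [Finset.card_erase_of_mem m1.1]; omega
    have hc2 : 2 ≤ (E₂.erase v).card := by
      rw [Finset.card_erase_of_mem m2.1]; omega
    have hc3 : 2 ≤ (E₃.erase v).card := by
      rw [Finset.card_erase_of_mem m3.1]; omega
    have hne : E₁.erase v ≠ E₂.erase v := by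
      intro he
      apply h12
      rw [← Finset.insert_erase m1.1, ← Finset.insert_erase m2.1, he]
    obtain ⟨u₁, hu₁, u₂, hu₂, u₃, hu₃, n12, n13, n23⟩ :=
      sdr3 (E₁.erase v) (E₂.erase v) (E₃.erase v) hne hc1 hc2 hc3
    exact hfree i E₁ m1.2.2 E₂ m2.2.2 E₃ m3.2.2
      ⟨h12, h13, h23, v, u₁, u₂, u₃,
        (Finset.ne_of_mem_erase hu₁).symm, (Finset.ne_of_mem_erase hu₂).symm,
        (Finset.ne_of_mem_erase hu₃).symm, n12, n13, n23,
        m1.1, Finset.mem_of_mem_erase hu₁, m2.1, Finset.mem_of_mem_erase hu₂,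
        m3.1, Finset.mem_of_mem_erase hu₃⟩
  -- total count
  have hsum : S.card = ∑ i : Fin t, (S.filter (fun A => c A = i)).card :=
    Finset.card_eq_sum_card_fiberwise (fun A _ => mem_univ (c A))
  have hS2t : S.card ≤ 2 * t := by
    rw [hsum]
    calc ∑ i : Fin t, (S.filter (fun A => c A = i)).card
        ≤ ∑ _i : Fin t, 2 := Finset.sum_le_sum (fun i _ => hfib i)
      _ = 2 * t := by simp [mul_comm]
  -- final arithmetic
  obtain ⟨m, rfl⟩ : ∃ m, n = m + 2 := ⟨n - 2, by omega⟩
  have hSn : S.card + (m + 2) = 2 ^ (m + 1) := by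
    rw [hTcard] at hST
    rw [hUcard] at hST
    simpa using hST
  have hr : (S.card : ℝ) + (m + 2) = 2 ^ (m + 1) := by exact_mod_cast hSn
  have hr2 : (S.card : ℝ) ≤ 2 * t := by exact_mod_cast hS2t
  simp only [Nat.add_sub_cancel]
  push_cast
  nlinarith [hr, hr2, pow_succ (2:ℝ) m]
end

section
/- Let k ≥ 2. For every n, every partition of 𝒫(n) into t parts, each of which is S_k-free, satisfies (k−1)·t ≥ 2^{n−1} − ∑_{i=0}^{k−2} C(n−1, i); equivalently, f(n, S_k) ≥ 2^{n−1}/(k−1) − (1/(k−1))·∑_{i=0}^{k−2} C(n−1, i). -/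
/-!
Fix a vertex `v`. The sets containing `v` with at least `k` elements number
`2 ^ (n - 1) - ∑_{i < k - 1} C(n - 1, i)`. An `S_k`-free part contains at most `k - 1` of them:
any `k` of them, with `v` removed, are `k` distinct sets of size at least `k - 1`. Two distinct
such sets already cover `k` elements, so Hall's condition holds, and a system of distinct
representatives `uᵢ` turns them into a Berge-`S_k` centred at `v`.
-/

/-- A family `F` of subsets of `[n]` contains a Berge star with `k` edges if there are
`k` distinct sets `E₁, …, E_k` in `F` together with `k + 1` pairwise distinct elements
`v, u₁, …, u_k` such that `{v, uᵢ} ⊆ Eᵢ` for each `i`. -/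
def ContainsBergeStar {n : ℕ} (k : ℕ) (F : Set (Finset (Fin n))) : Prop :=
  ∃ (E : Fin k → Finset (Fin n)) (v : Fin n) (u : Fin k → Fin n),
    Function.Injective E ∧ Function.Injective u ∧ (∀ i, v ≠ u i) ∧
    ∀ i, E i ∈ F ∧ v ∈ E i ∧ u i ∈ E i

/-- A family of subsets of `[n]` is `S_k`-free if it contains no Berge-`S_k`. -/
def StarFree {n : ℕ} (k : ℕ) (F : Set (Finset (Fin n))) : Prop :=
  ¬ ContainsBergeStar k F

open Finset Function

theorem Finset.lt_card_union_of_ne {α : Type*} [DecidableEq α] {s t : Finset α} {m : ℕ}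
    (hst : s ≠ t) (hs : m ≤ #s) (ht : m ≤ #t) : m < #(s ∪ t) := by
  by_contra! h
  exact hst <| (eq_of_subset_of_card_le subset_union_left (h.trans hs)).trans
    (eq_of_subset_of_card_le subset_union_right (h.trans ht)).symm

theorem exists_injective_forall_mem_of_card_sub_one_le {ι α : Type*} [Fintype ι] [Nontrivial ι]
    [DecidableEq α] (f : ι → Finset α) (hf : Injective f)
    (hcard : ∀ i, Fintype.card ι - 1 ≤ #(f i)) :
    ∃ u : ι → α, Injective u ∧ ∀ i, u i ∈ f i := by
  refine (all_card_le_biUnion_card_iff_exists_injective f).1 fun s => ?_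
  rcases s.eq_empty_or_nonempty with rfl | ⟨i, hi⟩
  · simp
  by_cases hs : #s ≤ Fintype.card ι - 1
  · exact hs.trans ((hcard i).trans (card_le_card (subset_biUnion_of_mem f hi)))
  have hι := Fintype.one_lt_card (α := ι)
  obtain ⟨a, ha, b, hb, hab⟩ := one_lt_card.1 (by omega : 1 < #s)
  calc #s ≤ Fintype.card ι := card_le_univ s
    _ ≤ #(f a ∪ f b) := by
      have := lt_card_union_of_ne (hf.ne hab) (hcard a) (hcard b)
      omega
    _ ≤ #(s.biUnion f) :=
      card_le_card (union_subset (subset_biUnion_of_mem f ha) (subset_biUnion_of_mem f hb))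

theorem card_filter_card_lt_le_sum_choose {α : Type*} [DecidableEq α] (s : Finset α) (m : ℕ) :
    #{B ∈ s.powerset | #B < m} ≤ ∑ i ∈ range m, (#s).choose i :=
  calc #{B ∈ s.powerset | #B < m}
      ≤ #((range m).biUnion (powersetCard · s)) := by
        refine card_le_card fun B hB => ?_
        rw [mem_filter, mem_powerset] at hB
        exact mem_biUnion.2 ⟨#B, mem_range.2 hB.2, mem_powersetCard.2 ⟨hB.1, rfl⟩⟩
    _ ≤ ∑ i ∈ range m, #(powersetCard i s) := card_biUnion_le
    _ = ∑ i ∈ range m, (#s).choose i := by simp only [card_powersetCard]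

theorem two_pow_sub_sum_choose_le_card_filter_mem {α : Type*} [Fintype α] [DecidableEq α]
    (v : α) (k : ℕ) :
    2 ^ (Fintype.card α - 1) - ∑ i ∈ range (k - 1), (Fintype.card α - 1).choose i
      ≤ #{A : Finset α | v ∈ A ∧ k ≤ #A} := by
  set U := univ.erase v
  have hU : #U = Fintype.card α - 1 := by rw [card_erase_of_mem (mem_univ v), card_univ]
  have hsmall := card_filter_card_lt_le_sum_choose U (k - 1)
  have hlarge : #{B ∈ U.powerset | ¬ #B < k - 1} ≤ #{A : Finset α | v ∈ A ∧ k ≤ #A} := by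
    have hv : ∀ B ∈ U.powerset, v ∉ B := fun B hB =>
      notMem_of_mem_powerset_of_notMem hB (notMem_erase v univ)
    refine card_le_card_of_injOn (insert v) (fun B hB => ?_) (fun B hB B' hB' hBB' => ?_)
    · rw [mem_coe, mem_filter] at hB
      rw [mem_coe, mem_filter, card_insert_of_notMem (hv B hB.1)]
      exact ⟨mem_univ _, mem_insert_self v B, by omega⟩
    · rw [mem_coe, mem_filter] at hB hB'
      exact insert_erase_invOn.2.injOn (hv B hB.1) (hv B' hB'.1) hBB'
  have hsplit := card_filter_add_card_filter_not (s := U.powerset) (fun B => #B < k - 1)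
  rw [card_powerset, hU] at hsplit
  rw [hU] at hsmall
  omega

theorem StarFree.card_le_sub_one {n k : ℕ} {F : Set (Finset (Fin n))} (hF : StarFree k F)
    (hk : 2 ≤ k) (v : Fin n) (G : Finset (Finset (Fin n)))
    (hG : ∀ A ∈ G, A ∈ F ∧ v ∈ A ∧ k ≤ #A) : #G ≤ k - 1 := by
  by_contra! hGk
  have hcard : Fintype.card (Fin k) ≤ Fintype.card G := by
    rw [Fintype.card_fin, Fintype.card_coe]
    omega
  obtain ⟨E⟩ := Function.Embedding.nonempty_of_card_le hcard
  have hE : ∀ i, (E i : Finset (Fin n)) ∈ F ∧ v ∈ (E i : Finset (Fin n)) ∧ k ≤ #(E i).1 :=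
    fun i => hG _ (E i).2
  have : Nontrivial (Fin k) := Fin.nontrivial_iff_two_le.2 hk
  have hEinj : Injective fun i => (E i : Finset (Fin n)) :=
    Subtype.val_injective.comp E.injective
  obtain ⟨u, hu, huE⟩ := exists_injective_forall_mem_of_card_sub_one_le
    (fun i => (E i : Finset (Fin n)).erase v)
    (fun i j hij => hEinj (erase_injOn' v (hE i).2.1 (hE j).2.1 hij))
    (fun i => by
      rw [card_erase_of_mem (hE i).2.1, Fintype.card_fin]
      exact Nat.sub_le_sub_right (hE i).2.2 1)
  exact hF ⟨fun i => E i, v, u, hEinj, hu, fun i => (ne_of_mem_erase (huE i)).symm,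
    fun i => ⟨(hE i).1, (hE i).2.1, mem_of_mem_erase (huE i)⟩⟩

/-- For `k ≥ 2`, every partition of the power set of `[n]` into `t` parts, each
`S_k`-free, satisfies `(k - 1) · t ≥ 2 ^ (n - 1) - ∑_{i = 0}^{k - 2} C(n - 1, i)`. -/
theorem f_Sk_lower (k : ℕ) (hk : 2 ≤ k) (n t : ℕ)
    (c : Finset (Fin n) → Fin t)
    (hfree : ∀ i : Fin t, StarFree k {A | c A = i}) :
    2 ^ (n - 1) - ∑ i ∈ Finset.range (k - 1), (n - 1).choose i ≤ (k - 1) * t := by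
  rcases Nat.eq_zero_or_pos n with rfl | hn
  · obtain ⟨j, rfl⟩ : ∃ j, k = j + 2 := ⟨k - 2, by omega⟩
    simp [Finset.sum_range_succ']
  let v : Fin n := ⟨0, hn⟩
  calc 2 ^ (n - 1) - ∑ i ∈ range (k - 1), (n - 1).choose i
      ≤ #{A : Finset (Fin n) | v ∈ A ∧ k ≤ #A} := by
        simpa using two_pow_sub_sum_choose_le_card_filter_mem v k
    _ = ∑ i : Fin t, #{A : Finset (Fin n) | (v ∈ A ∧ k ≤ #A) ∧ c A = i} := by
        rw [card_eq_sum_card_fiberwise fun A _ => mem_univ (c A)]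
        simp only [filter_filter]
    _ ≤ ∑ _i : Fin t, (k - 1) := sum_le_sum fun i _ =>
        (hfree i).card_le_sub_one hk v _ fun A hA => by
          simp only [mem_filter, mem_univ, true_and] at hA
          exact ⟨hA.2, hA.1⟩
    _ = (k - 1) * t := by simp [mul_comm]
end

section
/- f(5, C₃) = 7: the power set 𝒫(5) can be partitioned into 7 triangle-free parts, but not into 6 triangle-free parts. -/
set_option synthInstance.maxSize 4000
set_option synthInstance.maxHeartbeats 2000000
set_option maxHeartbeats 8000000
set_option maxRecDepth 100000

/-! ### Bitmask encodings -/

def msk (A : Finset (Fin 5)) : ℕ := ∑ i ∈ A, 2 ^ (i : ℕ)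

def pc (n : ℕ) : ℕ := (List.range 5).countP (fun i => n.testBit i)

def tb (a b c : ℕ) : Bool :=
  (a != b) && (a != c) && (b != c) &&
  ((List.finRange 5).any fun x => (a &&& b).testBit x.val &&
    ((List.finRange 5).any fun y => (x != y) && (a &&& c).testBit y.val &&
      ((List.finRange 5).any fun z => (x != z) && (y != z) && (b &&& c).testBit z.val)))

lemma mem_iff_testBit : ∀ (A : Finset (Fin 5)) (x : Fin 5),
    (msk A).testBit x.val = true ↔ x ∈ A := by decide

lemma msk_inj : ∀ A B : Finset (Fin 5), msk A = msk B → A = B := by decide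

lemma msk_land : ∀ A B : Finset (Fin 5), msk A &&& msk B = msk (A ∩ B) := by decide

lemma msk_lt : ∀ A : Finset (Fin 5), msk A < 32 := by decide

lemma pc_msk : ∀ A : Finset (Fin 5), pc (msk A) = A.card := by decide

lemma tb_iff (A B C : Finset (Fin 5)) :
    tb (msk A) (msk B) (msk C) = true ↔ BergeTriangle A B C := by
  have hne : ∀ X Y : Finset (Fin 5), (msk X ≠ msk Y) ↔ X ≠ Y := fun X Y =>
    ⟨fun h hXY => h (by rw [hXY]), fun h hm => h (msk_inj _ _ hm)⟩
  unfold tb BergeTriangle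
  simp only [Bool.and_eq_true, bne_iff_ne, List.any_eq_true, List.mem_finRange, true_and,
    msk_land, mem_iff_testBit, hne]
  constructor
  · rintro ⟨⟨⟨h1, h2⟩, h3⟩, x, hx, y, ⟨⟨hxy, hy⟩, z, ⟨hxz, hyz⟩, hz⟩⟩
    exact ⟨h1, h2, h3, x, y, z, hxy, hxz, hyz, hx, hy, hz⟩
  · rintro ⟨h1, h2, h3, x, y, z, hxy, hxz, hyz, hx, hy, hz⟩
    exact ⟨⟨⟨h1, h2⟩, h3⟩, x, hx, y, ⟨⟨hxy, hy⟩, z, ⟨hxz, hyz⟩, hz⟩⟩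

/-! ### Core decidable facts about masks -/

-- three big sets always form a triangle
lemma P1 : ∀ a b c : Fin 32, a.val < b.val → b.val < c.val → 4 ≤ pc a.val → 4 ≤ pc b.val →
    4 ≤ pc c.val → tb a.val b.val c.val = true := by decide

-- two bigs + any 2/3-set form a triangle
lemma P2 : ∀ a b s : Fin 32, a.val < b.val → 4 ≤ pc a.val → 4 ≤ pc b.val →
    (pc s.val = 2 ∨ pc s.val = 3) → tb a.val b.val s.val = true := by decide

-- big + two 3-sets form a triangle
lemma P3 : ∀ a t1 t2 : Fin 32, 4 ≤ pc a.val → t1.val < t2.val → pc t1.val = 3 →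
    pc t2.val = 3 → tb a.val t1.val t2.val = true := by decide

-- big + 3-set + 3 edges: impossible to be triangle-free
lemma P4 : ∀ a : Fin 32, 4 ≤ pc a.val → ∀ t : Fin 32, pc t.val = 3 →
    ∀ e1 : Fin 32, pc e1.val = 2 → tb a.val t.val e1.val = false →
    ∀ e2 : Fin 32, e1.val < e2.val → pc e2.val = 2 → tb a.val t.val e2.val = false →
      tb a.val e1.val e2.val = false → tb t.val e1.val e2.val = false →
    ∀ e3 : Fin 32, e2.val < e3.val → pc e3.val = 2 →
      tb a.val t.val e3.val = false → tb a.val e1.val e3.val = false →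
      tb a.val e2.val e3.val = false → tb t.val e1.val e3.val = false →
      tb t.val e2.val e3.val = false → tb e1.val e2.val e3.val = false → False := by decide

-- big + 4 edges: impossible
lemma P5 : ∀ a : Fin 32, 4 ≤ pc a.val →
    ∀ e1 : Fin 32, pc e1.val = 2 →
    ∀ e2 : Fin 32, e1.val < e2.val → pc e2.val = 2 → tb a.val e1.val e2.val = false →
    ∀ e3 : Fin 32, e2.val < e3.val → pc e3.val = 2 →
      tb a.val e1.val e3.val = false → tb a.val e2.val e3.val = false →
      tb e1.val e2.val e3.val = false →
    ∀ e4 : Fin 32, e3.val < e4.val → pc e4.val = 2 →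
      tb a.val e1.val e4.val = false → tb a.val e2.val e4.val = false →
      tb a.val e3.val e4.val = false → tb e1.val e2.val e4.val = false →
      tb e1.val e3.val e4.val = false → tb e2.val e3.val e4.val = false → False := by decide

-- four 3-sets: impossible
lemma P6 : ∀ t1 : Fin 32, pc t1.val = 3 →
    ∀ t2 : Fin 32, t1.val < t2.val → pc t2.val = 3 →
    ∀ t3 : Fin 32, t2.val < t3.val → pc t3.val = 3 → tb t1.val t2.val t3.val = false →
    ∀ t4 : Fin 32, t3.val < t4.val → pc t4.val = 3 →
      tb t1.val t2.val t4.val = false → tb t1.val t3.val t4.val = false →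
      tb t2.val t3.val t4.val = false → False := by decide

-- three 3-sets + 2 edges: impossible
lemma P7 : ∀ t1 : Fin 32, pc t1.val = 3 →
    ∀ t2 : Fin 32, t1.val < t2.val → pc t2.val = 3 →
    ∀ t3 : Fin 32, t2.val < t3.val → pc t3.val = 3 → tb t1.val t2.val t3.val = false →
    ∀ e1 : Fin 32, pc e1.val = 2 → tb t1.val t2.val e1.val = false →
      tb t1.val t3.val e1.val = false → tb t2.val t3.val e1.val = false →
    ∀ e2 : Fin 32, e1.val < e2.val → pc e2.val = 2 → tb t1.val t2.val e2.val = false →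
      tb t1.val t3.val e2.val = false → tb t2.val t3.val e2.val = false →
      tb t1.val e1.val e2.val = false → tb t2.val e1.val e2.val = false →
      tb t3.val e1.val e2.val = false → False := by decide

-- two 3-sets + 4 edges: impossible
lemma P8 : ∀ t1 : Fin 32, pc t1.val = 3 →
    ∀ t2 : Fin 32, t1.val < t2.val → pc t2.val = 3 →
    ∀ e1 : Fin 32, pc e1.val = 2 → tb t1.val t2.val e1.val = false →
    ∀ e2 : Fin 32, e1.val < e2.val → pc e2.val = 2 → tb t1.val t2.val e2.val = false →
      tb t1.val e1.val e2.val = false → tb t2.val e1.val e2.val = false →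
    ∀ e3 : Fin 32, e2.val < e3.val → pc e3.val = 2 →
      tb t1.val t2.val e3.val = false → tb t1.val e1.val e3.val = false →
      tb t1.val e2.val e3.val = false → tb t2.val e1.val e3.val = false →
      tb t2.val e2.val e3.val = false → tb e1.val e2.val e3.val = false →
    ∀ e4 : Fin 32, e3.val < e4.val → pc e4.val = 2 →
      tb t1.val t2.val e4.val = false → tb t1.val e1.val e4.val = false →
      tb t1.val e2.val e4.val = false → tb t1.val e3.val e4.val = false →
      tb t2.val e1.val e4.val = false → tb t2.val e2.val e4.val = false →
      tb t2.val e3.val e4.val = false → tb e1.val e2.val e4.val = false →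
      tb e1.val e3.val e4.val = false → tb e2.val e3.val e4.val = false → False := by decide

-- one 3-set + 5 edges: impossible
lemma P9 : ∀ t1 : Fin 32, pc t1.val = 3 →
    ∀ e1 : Fin 32, pc e1.val = 2 →
    ∀ e2 : Fin 32, e1.val < e2.val → pc e2.val = 2 → tb t1.val e1.val e2.val = false →
    ∀ e3 : Fin 32, e2.val < e3.val → pc e3.val = 2 →
      tb t1.val e1.val e3.val = false → tb t1.val e2.val e3.val = false →
      tb e1.val e2.val e3.val = false →
    ∀ e4 : Fin 32, e3.val < e4.val → pc e4.val = 2 →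
      tb t1.val e1.val e4.val = false → tb t1.val e2.val e4.val = false →
      tb t1.val e3.val e4.val = false → tb e1.val e2.val e4.val = false →
      tb e1.val e3.val e4.val = false → tb e2.val e3.val e4.val = false →
    ∀ e5 : Fin 32, e4.val < e5.val → pc e5.val = 2 →
      tb t1.val e1.val e5.val = false → tb t1.val e2.val e5.val = false →
      tb t1.val e3.val e5.val = false → tb t1.val e4.val e5.val = false →
      tb e1.val e2.val e5.val = false → tb e1.val e3.val e5.val = false →
      tb e1.val e4.val e5.val = false → tb e2.val e3.val e5.val = false →
      tb e2.val e4.val e5.val = false → tb e3.val e4.val e5.val = false → False := by decide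

/-! ### Sorted element extraction -/

section picks
variable {s : Finset (Fin 32)}

lemma spick1 (h : 1 ≤ s.card) : ∃ a, a ∈ s := by
  obtain ⟨a, ha⟩ := Finset.card_pos.mp h
  exact ⟨a, ha⟩

lemma spick2 (h : 2 ≤ s.card) : ∃ a b, a ∈ s ∧ b ∈ s ∧ a < b := by
  have hl : (s.sort (· ≤ ·)).length = s.card := Finset.length_sort _
  have hs : (s.sort (· ≤ ·)).Pairwise (· < ·) := s.sortedLT_sort.pairwise
  have hm : ∀ x ∈ s.sort (· ≤ ·), x ∈ s := fun x hx => (Finset.mem_sort _).mp hx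
  rcases hsl : s.sort (· ≤ ·) with _ | ⟨a, _ | ⟨b, rest⟩⟩ <;> rw [hsl] at hl hs hm
  · simp at hl; omega
  · simp at hl; omega
  · obtain ⟨h1, _⟩ := List.pairwise_cons.mp hs
    exact ⟨a, b, hm a (by simp), hm b (by simp), h1 b (by simp)⟩

lemma spick3 (h : 3 ≤ s.card) : ∃ a b c, a ∈ s ∧ b ∈ s ∧ c ∈ s ∧ a < b ∧ b < c := by
  have hl : (s.sort (· ≤ ·)).length = s.card := Finset.length_sort _
  have hs : (s.sort (· ≤ ·)).Pairwise (· < ·) := s.sortedLT_sort.pairwise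
  have hm : ∀ x ∈ s.sort (· ≤ ·), x ∈ s := fun x hx => (Finset.mem_sort _).mp hx
  rcases hsl : s.sort (· ≤ ·) with _ | ⟨a, _ | ⟨b, _ | ⟨c, rest⟩⟩⟩ <;> rw [hsl] at hl hs hm
  · simp at hl; omega
  · simp at hl; omega
  · simp at hl; omega
  · obtain ⟨h1, h2⟩ := List.pairwise_cons.mp hs
    obtain ⟨h3, _⟩ := List.pairwise_cons.mp h2
    exact ⟨a, b, c, hm a (by simp), hm b (by simp), hm c (by simp),
      h1 b (by simp), h3 c (by simp)⟩

lemma spick4 (h : 4 ≤ s.card) :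
    ∃ a b c d, a ∈ s ∧ b ∈ s ∧ c ∈ s ∧ d ∈ s ∧ a < b ∧ b < c ∧ c < d := by
  have hl : (s.sort (· ≤ ·)).length = s.card := Finset.length_sort _
  have hs : (s.sort (· ≤ ·)).Pairwise (· < ·) := s.sortedLT_sort.pairwise
  have hm : ∀ x ∈ s.sort (· ≤ ·), x ∈ s := fun x hx => (Finset.mem_sort _).mp hx
  rcases hsl : s.sort (· ≤ ·) with _ | ⟨a, _ | ⟨b, _ | ⟨c, _ | ⟨d, rest⟩⟩⟩⟩ <;>
    rw [hsl] at hl hs hm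
  · simp at hl; omega
  · simp at hl; omega
  · simp at hl; omega
  · simp at hl; omega
  · obtain ⟨h1, h2⟩ := List.pairwise_cons.mp hs
    obtain ⟨h3, h4⟩ := List.pairwise_cons.mp h2
    obtain ⟨h5, _⟩ := List.pairwise_cons.mp h4
    exact ⟨a, b, c, d, hm a (by simp), hm b (by simp), hm c (by simp), hm d (by simp),
      h1 b (by simp), h3 c (by simp), h5 d (by simp)⟩

lemma spick5 (h : 5 ≤ s.card) :
    ∃ a b c d e, a ∈ s ∧ b ∈ s ∧ c ∈ s ∧ d ∈ s ∧ e ∈ s ∧ a < b ∧ b < c ∧ c < d ∧ d < e := by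
  have hl : (s.sort (· ≤ ·)).length = s.card := Finset.length_sort _
  have hs : (s.sort (· ≤ ·)).Pairwise (· < ·) := s.sortedLT_sort.pairwise
  have hm : ∀ x ∈ s.sort (· ≤ ·), x ∈ s := fun x hx => (Finset.mem_sort _).mp hx
  rcases hsl : s.sort (· ≤ ·) with _ | ⟨a, _ | ⟨b, _ | ⟨c, _ | ⟨d, _ | ⟨e, rest⟩⟩⟩⟩⟩ <;>
    rw [hsl] at hl hs hm
  · simp at hl; omega
  · simp at hl; omega
  · simp at hl; omega
  · simp at hl; omega
  · simp at hl; omega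
  · obtain ⟨h1, h2⟩ := List.pairwise_cons.mp hs
    obtain ⟨h3, h4⟩ := List.pairwise_cons.mp h2
    obtain ⟨h5, h6⟩ := List.pairwise_cons.mp h4
    obtain ⟨h7, _⟩ := List.pairwise_cons.mp h6
    exact ⟨a, b, c, d, e, hm a (by simp), hm b (by simp), hm c (by simp), hm d (by simp),
      hm e (by simp), h1 b (by simp), h3 c (by simp), h5 d (by simp), h7 e (by simp)⟩

end picks

/-! ### The weight function -/

def w (A : Finset (Fin 5)) : ℕ :=
  (if A.card = 2 then 1 else 0) + (if A.card = 3 then 3 else 0) + (if 4 ≤ A.card then 5 else 0)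

lemma sum_w_split (F : Finset (Finset (Fin 5))) : ∑ A ∈ F, w A =
    (F.filter fun A => A.card = 2).card * 1 + (F.filter fun A => A.card = 3).card * 3 +
    (F.filter fun A => 4 ≤ A.card).card * 5 := by
  unfold w
  rw [Finset.sum_add_distrib, Finset.sum_add_distrib,
    ← Finset.sum_filter, ← Finset.sum_filter, ← Finset.sum_filter]
  simp [Finset.sum_const, mul_comm]

lemma card_pc2 : (Finset.univ.filter fun m : Fin 32 => pc m.val = 2).card = 10 := by decide

lemma sum_w_total : ∑ A : Finset (Fin 5), w A = 70 := by decide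

/-! ### Any triangle-free family has weight at most 10 -/

lemma class_bound (F : Finset (Finset (Fin 5)))
    (htf : ∀ A ∈ F, ∀ B ∈ F, ∀ C ∈ F, ¬ BergeTriangle A B C) :
    ∑ A ∈ F, w A ≤ 10 := by
  classical
  set f : Finset (Fin 5) → Fin 32 := fun A => ⟨msk A, msk_lt A⟩ with hf
  have finj : ∀ A B : Finset (Fin 5), f A = f B → A = B := fun A B h =>
    msk_inj A B (congrArg Fin.val h)
  set M2 := (F.filter fun A => A.card = 2).image f with hM2def
  set M3 := (F.filter fun A => A.card = 3).image f with hM3def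
  set MB := (F.filter fun A => 4 ≤ A.card).image f with hMBdef
  have c2 : M2.card = (F.filter fun A => A.card = 2).card :=
    Finset.card_image_of_injOn fun A _ B _ h => finj A B h
  have c3 : M3.card = (F.filter fun A => A.card = 3).card :=
    Finset.card_image_of_injOn fun A _ B _ h => finj A B h
  have cB : MB.card = (F.filter fun A => 4 ≤ A.card).card :=
    Finset.card_image_of_injOn fun A _ B _ h => finj A B h
  have hd2 : ∀ m ∈ M2, pc m.val = 2 ∧ ∃ A ∈ F, f A = m := by
    intro m hm
    obtain ⟨A, hA, rfl⟩ := Finset.mem_image.mp hm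
    obtain ⟨hAF, hA2⟩ := Finset.mem_filter.mp hA
    exact ⟨by show pc (msk A) = 2; rw [pc_msk]; exact hA2, A, hAF, rfl⟩
  have hd3 : ∀ m ∈ M3, pc m.val = 3 ∧ ∃ A ∈ F, f A = m := by
    intro m hm
    obtain ⟨A, hA, rfl⟩ := Finset.mem_image.mp hm
    obtain ⟨hAF, hA3⟩ := Finset.mem_filter.mp hA
    exact ⟨by show pc (msk A) = 3; rw [pc_msk]; exact hA3, A, hAF, rfl⟩
  have hdB : ∀ m ∈ MB, 4 ≤ pc m.val ∧ ∃ A ∈ F, f A = m := by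
    intro m hm
    obtain ⟨A, hA, rfl⟩ := Finset.mem_image.mp hm
    obtain ⟨hAF, hAB⟩ := Finset.mem_filter.mp hA
    exact ⟨by show 4 ≤ pc (msk A); rw [pc_msk]; exact hAB, A, hAF, rfl⟩
  have tbf : ∀ {m1 m2 m3 : Fin 32}, (∃ A ∈ F, f A = m1) → (∃ A ∈ F, f A = m2) →
      (∃ A ∈ F, f A = m3) → tb m1.val m2.val m3.val = false := by
    rintro m1 m2 m3 ⟨A, hA, rfl⟩ ⟨B, hB, rfl⟩ ⟨C, hC, rfl⟩
    exact Bool.eq_false_iff.mpr fun ht => htf A hA B hB C hC ((tb_iff A B C).mp ht)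
  rw [sum_w_split, ← c2, ← c3, ← cB]
  have hB2 : MB.card ≤ 2 := by
    by_contra hc; push_neg at hc
    obtain ⟨a, b, c, ha, hb, hc', hab, hbc⟩ := spick3 (s := MB) (by omega)
    have ht := P1 a b c hab hbc (hdB a ha).1 (hdB b hb).1 (hdB c hc').1
    rw [tbf (hdB a ha).2 (hdB b hb).2 (hdB c hc').2] at ht
    simp at ht
  rcases (show MB.card = 0 ∨ MB.card = 1 ∨ MB.card = 2 by omega) with hB | hB | hB
  · -- no big sets
    have h3le : M3.card ≤ 3 := by
      by_contra hcon; push_neg at hcon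
      obtain ⟨t1, t2, t3, t4, h1, h2, h3, h4, l12, l23, l34⟩ := spick4 (s := M3) (by omega)
      have q1 := (hd3 t1 h1); have q2 := (hd3 t2 h2)
      have q3 := (hd3 t3 h3); have q4 := (hd3 t4 h4)
      exact P6 t1 q1.1 t2 l12 q2.1 t3 l23 q3.1 (tbf q1.2 q2.2 q3.2)
        t4 l34 q4.1 (tbf q1.2 q2.2 q4.2) (tbf q1.2 q3.2 q4.2) (tbf q2.2 q3.2 q4.2)
    rcases (show M3.card = 0 ∨ M3.card = 1 ∨ M3.card = 2 ∨ M3.card = 3 by omega)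
      with h3 | h3 | h3 | h3
    · -- only edges: at most 10 of them
      have h2le : M2.card ≤ 10 := by
        have hsub : M2 ⊆ Finset.univ.filter fun m : Fin 32 => pc m.val = 2 :=
          fun m hm => Finset.mem_filter.mpr ⟨Finset.mem_univ m, (hd2 m hm).1⟩
        have := Finset.card_le_card hsub
        rwa [card_pc2] at this
      omega
    · -- one 3-set: at most 4 edges
      obtain ⟨t, htm⟩ := spick1 (s := M3) (by omega)
      have qt := hd3 t htm
      have h2le : M2.card ≤ 4 := by
        by_contra hcon; push_neg at hcon
        obtain ⟨e1, e2, e3, e4, e5, m1, m2, m3, m4, m5, l12, l23, l34, l45⟩ := spick5 (s := M2) (by omega)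
        have q1 := hd2 e1 m1; have q2 := hd2 e2 m2; have q3 := hd2 e3 m3
        have q4 := hd2 e4 m4; have q5 := hd2 e5 m5
        exact P9 t qt.1 e1 q1.1
          e2 l12 q2.1 (tbf qt.2 q1.2 q2.2)
          e3 l23 q3.1 (tbf qt.2 q1.2 q3.2) (tbf qt.2 q2.2 q3.2) (tbf q1.2 q2.2 q3.2)
          e4 l34 q4.1 (tbf qt.2 q1.2 q4.2) (tbf qt.2 q2.2 q4.2) (tbf qt.2 q3.2 q4.2)
            (tbf q1.2 q2.2 q4.2) (tbf q1.2 q3.2 q4.2) (tbf q2.2 q3.2 q4.2)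
          e5 l45 q5.1 (tbf qt.2 q1.2 q5.2) (tbf qt.2 q2.2 q5.2) (tbf qt.2 q3.2 q5.2)
            (tbf qt.2 q4.2 q5.2) (tbf q1.2 q2.2 q5.2) (tbf q1.2 q3.2 q5.2)
            (tbf q1.2 q4.2 q5.2) (tbf q2.2 q3.2 q5.2) (tbf q2.2 q4.2 q5.2)
            (tbf q3.2 q4.2 q5.2)
      omega
    · -- two 3-sets: at most 3 edges
      obtain ⟨t1, t2, h1, h2, l⟩ := spick2 (s := M3) (by omega)
      have qt1 := hd3 t1 h1; have qt2 := hd3 t2 h2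
      have h2le : M2.card ≤ 3 := by
        by_contra hcon; push_neg at hcon
        obtain ⟨e1, e2, e3, e4, m1, m2, m3, m4, l12, l23, l34⟩ := spick4 (s := M2) (by omega)
        have q1 := hd2 e1 m1; have q2 := hd2 e2 m2
        have q3 := hd2 e3 m3; have q4 := hd2 e4 m4
        exact P8 t1 qt1.1 t2 l qt2.1
          e1 q1.1 (tbf qt1.2 qt2.2 q1.2)
          e2 l12 q2.1 (tbf qt1.2 qt2.2 q2.2) (tbf qt1.2 q1.2 q2.2) (tbf qt2.2 q1.2 q2.2)
          e3 l23 q3.1 (tbf qt1.2 qt2.2 q3.2) (tbf qt1.2 q1.2 q3.2) (tbf qt1.2 q2.2 q3.2)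
            (tbf qt2.2 q1.2 q3.2) (tbf qt2.2 q2.2 q3.2) (tbf q1.2 q2.2 q3.2)
          e4 l34 q4.1 (tbf qt1.2 qt2.2 q4.2) (tbf qt1.2 q1.2 q4.2) (tbf qt1.2 q2.2 q4.2)
            (tbf qt1.2 q3.2 q4.2) (tbf qt2.2 q1.2 q4.2) (tbf qt2.2 q2.2 q4.2)
            (tbf qt2.2 q3.2 q4.2) (tbf q1.2 q2.2 q4.2) (tbf q1.2 q3.2 q4.2)
            (tbf q2.2 q3.2 q4.2)
      omega
    · -- three 3-sets: at most 1 edge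
      obtain ⟨t1, t2, t3, h1, h2, h3, l12, l23⟩ := spick3 (s := M3) (by omega)
      have qt1 := hd3 t1 h1; have qt2 := hd3 t2 h2; have qt3 := hd3 t3 h3
      have h2le : M2.card ≤ 1 := by
        by_contra hcon; push_neg at hcon
        obtain ⟨e1, e2, m1, m2, le⟩ := spick2 (s := M2) (by omega)
        have q1 := hd2 e1 m1; have q2 := hd2 e2 m2
        exact P7 t1 qt1.1 t2 l12 qt2.1 t3 l23 qt3.1 (tbf qt1.2 qt2.2 qt3.2)
          e1 q1.1 (tbf qt1.2 qt2.2 q1.2) (tbf qt1.2 qt3.2 q1.2) (tbf qt2.2 qt3.2 q1.2)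
          e2 le q2.1 (tbf qt1.2 qt2.2 q2.2) (tbf qt1.2 qt3.2 q2.2) (tbf qt2.2 qt3.2 q2.2)
            (tbf qt1.2 q1.2 q2.2) (tbf qt2.2 q1.2 q2.2) (tbf qt3.2 q1.2 q2.2)
      omega
  · -- exactly one big set
    obtain ⟨a, ha⟩ := spick1 (s := MB) (by omega)
    have qa := hdB a ha
    have h3le : M3.card ≤ 1 := by
      by_contra hcon; push_neg at hcon
      obtain ⟨t1, t2, h1, h2, l⟩ := spick2 (s := M3) (by omega)
      have ht := P3 a t1 t2 qa.1 l (hd3 t1 h1).1 (hd3 t2 h2).1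
      rw [tbf qa.2 (hd3 t1 h1).2 (hd3 t2 h2).2] at ht
      simp at ht
    rcases (show M3.card = 0 ∨ M3.card = 1 by omega) with h3 | h3
    · -- big + edges only: at most 3 edges
      have h2le : M2.card ≤ 3 := by
        by_contra hcon; push_neg at hcon
        obtain ⟨e1, e2, e3, e4, m1, m2, m3, m4, l12, l23, l34⟩ := spick4 (s := M2) (by omega)
        have q1 := hd2 e1 m1; have q2 := hd2 e2 m2
        have q3 := hd2 e3 m3; have q4 := hd2 e4 m4
        exact P5 a qa.1 e1 q1.1
          e2 l12 q2.1 (tbf qa.2 q1.2 q2.2)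
          e3 l23 q3.1 (tbf qa.2 q1.2 q3.2) (tbf qa.2 q2.2 q3.2) (tbf q1.2 q2.2 q3.2)
          e4 l34 q4.1 (tbf qa.2 q1.2 q4.2) (tbf qa.2 q2.2 q4.2) (tbf qa.2 q3.2 q4.2)
            (tbf q1.2 q2.2 q4.2) (tbf q1.2 q3.2 q4.2) (tbf q2.2 q3.2 q4.2)
      omega
    · -- big + one 3-set: at most 2 edges
      obtain ⟨t, htm⟩ := spick1 (s := M3) (by omega)
      have qt := hd3 t htm
      have h2le : M2.card ≤ 2 := by
        by_contra hcon; push_neg at hcon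
        obtain ⟨e1, e2, e3, m1, m2, m3, l12, l23⟩ := spick3 (s := M2) (by omega)
        have q1 := hd2 e1 m1; have q2 := hd2 e2 m2; have q3 := hd2 e3 m3
        exact P4 a qa.1 t qt.1 e1 q1.1 (tbf qa.2 qt.2 q1.2)
          e2 l12 q2.1 (tbf qa.2 qt.2 q2.2) (tbf qa.2 q1.2 q2.2) (tbf qt.2 q1.2 q2.2)
          e3 l23 q3.1 (tbf qa.2 qt.2 q3.2) (tbf qa.2 q1.2 q3.2) (tbf qa.2 q2.2 q3.2)
            (tbf qt.2 q1.2 q3.2) (tbf qt.2 q2.2 q3.2) (tbf q1.2 q2.2 q3.2)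
      omega
  · -- two big sets: nothing else
    obtain ⟨a, b, ha, hb, hab⟩ := spick2 (s := MB) (by omega)
    have qa := hdB a ha; have qb := hdB b hb
    have h20 : M2.card = 0 := by
      by_contra hcon
      obtain ⟨m, hm⟩ := spick1 (s := M2) (by omega)
      have ht := P2 a b m hab qa.1 qb.1 (Or.inl (hd2 m hm).1)
      rw [tbf qa.2 qb.2 (hd2 m hm).2] at ht
      simp at ht
    have h30 : M3.card = 0 := by
      by_contra hcon
      obtain ⟨m, hm⟩ := spick1 (s := M3) (by omega)
      have ht := P2 a b m hab qa.1 qb.1 (Or.inr (hd3 m hm).1)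
      rw [tbf qa.2 qb.2 (hd3 m hm).2] at ht
      simp at ht
    omega

/-! ### The 7-coloring -/

def colors : List (Fin 7) :=
  [0, 0, 0, 5, 0, 3, 1, 5, 0, 2, 4, 5, 6, 6, 6, 0,
   0, 1, 2, 5, 4, 4, 2, 1, 3, 1, 3, 2, 6, 3, 4, 0]

def col (A : Finset (Fin 5)) : Fin 7 := colors.getD (msk A) 0

lemma PU : ∀ a b c : Fin 32, colors.getD a.val 0 = colors.getD b.val 0 →
    colors.getD b.val 0 = colors.getD c.val 0 → tb a.val b.val c.val = false := by decide

/-! ### Main theorem -/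

/-- `f(5, C₃) = 7`: the power set of `[5]` can be partitioned into `7` triangle-free
parts, but not into `6` triangle-free parts. -/
theorem f_C3_five :
    (∃ c : Finset (Fin 5) → Fin 7, ∀ i : Fin 7, TriangleFree {A | c A = i}) ∧
    (∀ c : Finset (Fin 5) → Fin 6, ∃ i : Fin 6, ¬ TriangleFree {A | c A = i}) := by
  constructor
  · refine ⟨col, fun i A hA B hB C hC hBT => ?_⟩
    have hA' : col A = i := hA
    have hB' : col B = i := hB
    have hC' : col C = i := hC
    have h1 : colors.getD (msk A) 0 = colors.getD (msk B) 0 := hA'.trans hB'.symm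
    have h2 : colors.getD (msk B) 0 = colors.getD (msk C) 0 := hB'.trans hC'.symm
    have hf := PU ⟨msk A, msk_lt A⟩ ⟨msk B, msk_lt B⟩ ⟨msk C, msk_lt C⟩ h1 h2
    rw [(tb_iff A B C).mpr hBT] at hf
    simp at hf
  · intro c
    by_contra hno
    push_neg at hno
    have hcls : ∀ i, ∑ A ∈ Finset.univ.filter (fun A => c A = i), w A ≤ 10 := by
      intro i
      refine class_bound _ fun A hA B hB C hC => ?_
      exact hno i A ((Finset.mem_filter.mp hA).2) B ((Finset.mem_filter.mp hB).2)
        C ((Finset.mem_filter.mp hC).2)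
    have hfib := Finset.sum_fiberwise_of_maps_to (s := Finset.univ) (t := Finset.univ)
      (g := c) (fun x _ => Finset.mem_univ (c x)) w
    have habs : (70 : ℕ) ≤ 60 := by
      calc (70 : ℕ) = ∑ A ∈ Finset.univ, w A := sum_w_total.symm
        _ = ∑ i : Fin 6, ∑ A ∈ Finset.univ.filter (fun A => c A = i), w A := hfib.symm
        _ ≤ ∑ _i : Fin 6, 10 := Finset.sum_le_sum fun i _ => hcls i
        _ = 60 := by simp
    omega
end

section
/- Let n ≥ 6 be even. For any five pairwise distinct subsets M₁, M₂, M₃, M₄, M₅ of [n], each of size exactly n/2, some three of them form a Berge triangle. -/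
open Finset

lemma aux3 {α : Type*} [DecidableEq α] {S1 S2 S3 : Finset α} (h1 : S1.Nonempty)
    (h2 : S2.Nonempty) (h3 : 2 ≤ S3.card)
    (hno : ∀ x ∈ S1, ∀ y ∈ S2, ∀ z ∈ S3, x = y ∨ x = z ∨ y = z) :
    (∃ w, S1 = {w} ∧ S2 = {w}) ∨
      (∃ a b, a ≠ b ∧ S1 ⊆ {a, b} ∧ S2 ⊆ {a, b} ∧ S3 ⊆ {a, b}) := by
  by_cases hall : ∀ x ∈ S1, ∀ y ∈ S2, x = y
  · obtain ⟨x0, hx0⟩ := h1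
    obtain ⟨y0, hy0⟩ := h2
    left
    refine ⟨x0, ?_, ?_⟩
    · exact Finset.eq_singleton_iff_nonempty_unique_mem.mpr
        ⟨⟨x0, hx0⟩, fun x hx => (hall x hx y0 hy0).trans (hall x0 hx0 y0 hy0).symm⟩
    · exact Finset.eq_singleton_iff_nonempty_unique_mem.mpr
        ⟨⟨y0, hy0⟩, fun y hy => (hall x0 hx0 y hy).symm⟩
  · push_neg at hall
    obtain ⟨x1, hx1, y1, hy1, hne⟩ := hall
    have key : ∀ x ∈ S1, ∀ y ∈ S2, x ≠ y → S3 ⊆ {x, y} := by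
      intro x hx y hy hxy z hz
      rcases hno x hx y hy z hz with h | h | h
      · exact absurd h hxy
      · simp [← h]
      · simp [← h]
    have hS3 : S3 = {x1, y1} :=
      Finset.eq_of_subset_of_card_le (key x1 hx1 y1 hy1 hne)
        (by rw [Finset.card_pair hne]; exact h3)
    have hx1S3 : x1 ∈ S3 := by rw [hS3]; simp
    have hy1S3 : y1 ∈ S3 := by rw [hS3]; simp
    right
    refine ⟨x1, y1, hne, ?_, ?_, by rw [hS3]⟩
    · intro x hx
      by_contra hxm
      simp only [Finset.mem_insert, Finset.mem_singleton] at hxm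
      push_neg at hxm
      have h := key x hx y1 hy1 hxm.2 hx1S3
      simp only [Finset.mem_insert, Finset.mem_singleton] at h
      rcases h with h | h
      · exact hxm.1 h.symm
      · exact hne h
    · intro y hy
      by_contra hym
      simp only [Finset.mem_insert, Finset.mem_singleton] at hym
      push_neg at hym
      have h := key x1 hx1 y hy (fun hc => hym.1 hc.symm) hy1S3
      simp only [Finset.mem_insert, Finset.mem_singleton] at h
      rcases h with h | h
      · exact hne h.symm
      · exact hym.2 h.symm

lemma microHall {α : Type*} [DecidableEq α] {S1 S2 S3 : Finset α} (h1 : S1.Nonempty)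
    (h2 : S2.Nonempty) (h3 : S3.Nonempty)
    (hno : ∀ x ∈ S1, ∀ y ∈ S2, ∀ z ∈ S3, x = y ∨ x = z ∨ y = z) :
    (∃ w, S1 = {w} ∧ S2 = {w}) ∨ (∃ w, S1 = {w} ∧ S3 = {w}) ∨
      (∃ w, S2 = {w} ∧ S3 = {w}) ∨
      (∃ a b, a ≠ b ∧ S1 ⊆ {a, b} ∧ S2 ⊆ {a, b} ∧ S3 ⊆ {a, b}) := by
  rcases le_or_gt 2 S3.card with hc3 | hc3
  · rcases aux3 h1 h2 hc3 hno with ⟨w, e1, e2⟩ | ⟨a, b, hab, s1, s2, s3⟩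
    · exact Or.inl ⟨w, e1, e2⟩
    · exact Or.inr (Or.inr (Or.inr ⟨a, b, hab, s1, s2, s3⟩))
  · rcases le_or_gt 2 S2.card with hc2 | hc2
    · have hno' : ∀ x ∈ S1, ∀ z ∈ S3, ∀ y ∈ S2, x = z ∨ x = y ∨ z = y := by
        intro x hx z hz y hy
        rcases hno x hx y hy z hz with h | h | h
        · exact Or.inr (Or.inl h)
        · exact Or.inl h
        · exact Or.inr (Or.inr h.symm)
      rcases aux3 h1 h3 hc2 hno' with ⟨w, e1, e2⟩ | ⟨a, b, hab, s1, s3, s2⟩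
      · exact Or.inr (Or.inl ⟨w, e1, e2⟩)
      · exact Or.inr (Or.inr (Or.inr ⟨a, b, hab, s1, s2, s3⟩))
    · rcases le_or_gt 2 S1.card with hc1 | hc1
      · have hno' : ∀ y ∈ S2, ∀ z ∈ S3, ∀ x ∈ S1, y = z ∨ y = x ∨ z = x := by
          intro y hy z hz x hx
          rcases hno x hx y hy z hz with h | h | h
          · exact Or.inr (Or.inl h.symm)
          · exact Or.inr (Or.inr h.symm)
          · exact Or.inl h
        rcases aux3 h2 h3 hc1 hno' with ⟨w, e1, e2⟩ | ⟨a, b, hab, s2, s3, s1⟩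
        · exact Or.inr (Or.inr (Or.inl ⟨w, e1, e2⟩))
        · exact Or.inr (Or.inr (Or.inr ⟨a, b, hab, s1, s2, s3⟩))
      · obtain ⟨a, ha⟩ := Finset.card_eq_one.mp (le_antisymm (by omega) h1.card_pos)
        obtain ⟨b, hb⟩ := Finset.card_eq_one.mp (le_antisymm (by omega) h2.card_pos)
        obtain ⟨c, hc⟩ := Finset.card_eq_one.mp (le_antisymm (by omega) h3.card_pos)
        have := hno a (by simp [ha]) b (by simp [hb]) c (by simp [hc])
        rcases this with h | h | h
        · exact Or.inl ⟨a, ha, by rw [hb, h]⟩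
        · exact Or.inr (Or.inl ⟨a, ha, by rw [hc, h]⟩)
        · exact Or.inr (Or.inr (Or.inl ⟨b, hb, by rw [hc, h]⟩))

lemma boundThird {n k : ℕ} (hk : n = 2 * k) {A B C : Finset (Fin n)}
    (hA : A.card = k) (hB : B.card = k) (hC : C.card = k) {t0 : Fin n}
    (h1 : A ∩ B = {t0}) (h2 : A ∩ C = {t0}) : k - 1 ≤ (B ∩ C).card := by
  have e1 := Finset.card_union_add_card_inter A (B ∪ C)
  have e2 : A ∩ (B ∪ C) = {t0} := by
    rw [Finset.inter_union_distrib_left, h1, h2, Finset.union_self]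
  have e3 := Finset.card_union_add_card_inter B C
  have e4 : (A ∪ (B ∪ C)).card ≤ n := by
    have := Finset.card_le_univ (A ∪ (B ∪ C))
    simpa using this
  rw [e2, Finset.card_singleton] at e1
  omega

lemma subPair {α : Type*} [DecidableEq α] {S : Finset α} {a b : α} (hne : S.Nonempty)
    (hs : S ⊆ {a, b}) : S = {a} ∨ S = {b} ∨ S = {a, b} := by
  by_cases ha : a ∈ S <;> by_cases hb : b ∈ S
  · refine Or.inr (Or.inr (Finset.Subset.antisymm hs ?_))
    intro x hx
    simp only [Finset.mem_insert, Finset.mem_singleton] at hx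
    rcases hx with rfl | rfl <;> assumption
  · refine Or.inl (Finset.eq_singleton_iff_nonempty_unique_mem.mpr ⟨hne, fun x hx => ?_⟩)
    have := hs hx
    simp only [Finset.mem_insert, Finset.mem_singleton] at this
    rcases this with rfl | rfl
    · rfl
    · exact absurd hx hb
  · refine Or.inr (Or.inl (Finset.eq_singleton_iff_nonempty_unique_mem.mpr ⟨hne, fun x hx => ?_⟩))
    have := hs hx
    simp only [Finset.mem_insert, Finset.mem_singleton] at this
    rcases this with rfl | rfl
    · exact absurd hx ha
    · rfl
  · exfalso
    obtain ⟨x, hx⟩ := hne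
    have := hs hx
    simp only [Finset.mem_insert, Finset.mem_singleton] at this
    rcases this with rfl | rfl
    · exact ha hx
    · exact hb hx

lemma K1 {n k : ℕ} (hk : n = 2 * k) (hk3 : 3 ≤ k) {A B C : Finset (Fin n)}
    (hA : A.card = k) (hB : B.card = k) (hC : C.card = k)
    (hAB : A ≠ B) (hAC : A ≠ C) (hBC : B ≠ C)
    (h1 : (A ∩ B).Nonempty) (h2 : (A ∩ C).Nonempty) (h3 : (B ∩ C).Nonempty)
    (hfail : ¬ BergeTriangle A B C) :
    (∃ w, A ∩ B = {w} ∧ A ∩ C = {w} ∧ k - 1 ≤ (B ∩ C).card) ∨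
    (∃ w, A ∩ B = {w} ∧ B ∩ C = {w} ∧ k - 1 ≤ (A ∩ C).card) ∨
    (∃ w, A ∩ C = {w} ∧ B ∩ C = {w} ∧ k - 1 ≤ (A ∩ B).card) ∨
    (∃ a b, a ≠ b ∧ A ∩ B = {a, b} ∧ A ∩ C = {a, b} ∧ B ∩ C = {a, b}) := by
  have hno : ∀ x ∈ A ∩ B, ∀ y ∈ A ∩ C, ∀ z ∈ B ∩ C, x = y ∨ x = z ∨ y = z := by
    intro x hx y hy z hz
    by_contra hcon
    push_neg at hcon
    exact hfail ⟨hAB, hAC, hBC, x, y, z, hcon.1, hcon.2.1, hcon.2.2, hx, hy, hz⟩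
  have mk1 : ∀ w : Fin n, A ∩ B = {w} → A ∩ C = {w} →
      (∃ w, A ∩ B = {w} ∧ A ∩ C = {w} ∧ k - 1 ≤ (B ∩ C).card) ∨
      (∃ w, A ∩ B = {w} ∧ B ∩ C = {w} ∧ k - 1 ≤ (A ∩ C).card) ∨
      (∃ w, A ∩ C = {w} ∧ B ∩ C = {w} ∧ k - 1 ≤ (A ∩ B).card) ∨
      (∃ a b, a ≠ b ∧ A ∩ B = {a, b} ∧ A ∩ C = {a, b} ∧ B ∩ C = {a, b}) :=
    fun w e1 e2 => Or.inl ⟨w, e1, e2, boundThird hk hA hB hC e1 e2⟩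
  have mk2 : ∀ w : Fin n, A ∩ B = {w} → B ∩ C = {w} →
      (∃ w, A ∩ B = {w} ∧ A ∩ C = {w} ∧ k - 1 ≤ (B ∩ C).card) ∨
      (∃ w, A ∩ B = {w} ∧ B ∩ C = {w} ∧ k - 1 ≤ (A ∩ C).card) ∨
      (∃ w, A ∩ C = {w} ∧ B ∩ C = {w} ∧ k - 1 ≤ (A ∩ B).card) ∨
      (∃ a b, a ≠ b ∧ A ∩ B = {a, b} ∧ A ∩ C = {a, b} ∧ B ∩ C = {a, b}) := by
    intro w e1 e2
    refine Or.inr (Or.inl ⟨w, e1, e2, ?_⟩)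
    exact boundThird hk hB hA hC (by rw [Finset.inter_comm]; exact e1) e2
  have mk3 : ∀ w : Fin n, A ∩ C = {w} → B ∩ C = {w} →
      (∃ w, A ∩ B = {w} ∧ A ∩ C = {w} ∧ k - 1 ≤ (B ∩ C).card) ∨
      (∃ w, A ∩ B = {w} ∧ B ∩ C = {w} ∧ k - 1 ≤ (A ∩ C).card) ∨
      (∃ w, A ∩ C = {w} ∧ B ∩ C = {w} ∧ k - 1 ≤ (A ∩ B).card) ∨
      (∃ a b, a ≠ b ∧ A ∩ B = {a, b} ∧ A ∩ C = {a, b} ∧ B ∩ C = {a, b}) := by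
    intro w e1 e2
    refine Or.inr (Or.inr (Or.inl ⟨w, e1, e2, ?_⟩))
    exact boundThird hk hC hA hB (by rw [Finset.inter_comm]; exact e1)
      (by rw [Finset.inter_comm]; exact e2)
  have p12 : ∀ w : Fin n, w ∈ A ∩ B → w ∈ A ∩ C → w ∈ B ∩ C := by
    intro w hw1 hw2
    exact Finset.mem_inter.mpr ⟨(Finset.mem_inter.mp hw1).2, (Finset.mem_inter.mp hw2).2⟩
  have p13 : ∀ w : Fin n, w ∈ A ∩ B → w ∈ B ∩ C → w ∈ A ∩ C := by
    intro w hw1 hw2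
    exact Finset.mem_inter.mpr ⟨(Finset.mem_inter.mp hw1).1, (Finset.mem_inter.mp hw2).2⟩
  have p23 : ∀ w : Fin n, w ∈ A ∩ C → w ∈ B ∩ C → w ∈ A ∩ B := by
    intro w hw1 hw2
    exact Finset.mem_inter.mpr ⟨(Finset.mem_inter.mp hw1).1, (Finset.mem_inter.mp hw2).1⟩
  rcases microHall h1 h2 h3 hno with ⟨w, e1, e2⟩ | ⟨w, e1, e2⟩ | ⟨w, e1, e2⟩ |
    ⟨a, b, hab, s1, s2, s3⟩
  · exact mk1 w e1 e2
  · exact mk2 w e1 e2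
  · exact mk3 w e1 e2
  · rcases subPair h1 s1 with e1 | e1 | e1 <;>
    rcases subPair h2 s2 with e2 | e2 | e2 <;>
    rcases subPair h3 s3 with e3 | e3 | e3 <;>
    first
      | exact mk1 _ e1 e2
      | exact mk2 _ e1 e3
      | exact mk3 _ e2 e3
      | exact Or.inr (Or.inr (Or.inr ⟨a, b, hab, e1, e2, e3⟩))
      | (exfalso; first
          | (have hcon := p12 a (by simp [e1]) (by simp [e2]);
             rw [e3] at hcon; simp only [Finset.mem_singleton] at hcon; exact hab hcon)
          | (have hcon := p12 b (by simp [e1]) (by simp [e2]);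
             rw [e3] at hcon; simp only [Finset.mem_singleton] at hcon; exact hab hcon.symm)
          | (have hcon := p13 a (by simp [e1]) (by simp [e3]);
             rw [e2] at hcon; simp only [Finset.mem_singleton] at hcon; exact hab hcon)
          | (have hcon := p13 b (by simp [e1]) (by simp [e3]);
             rw [e2] at hcon; simp only [Finset.mem_singleton] at hcon; exact hab hcon.symm)
          | (have hcon := p23 a (by simp [e2]) (by simp [e3]);
             rw [e1] at hcon; simp only [Finset.mem_singleton] at hcon; exact hab hcon)
          | (have hcon := p23 b (by simp [e2]) (by simp [e3]);
             rw [e1] at hcon; simp only [Finset.mem_singleton] at hcon; exact hab hcon.symm))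


section Part2
variable {n k : ℕ}

lemma apexK4 {n k : ℕ} (hk : n = 2*k) (hk3 : 3 ≤ k) {P Q R T : Finset (Fin n)}
    (hP : P.card = k) (hQ : Q.card = k) (hR : R.card = k) (hT : T.card = k)
    {s t : Fin n} (hst : s ≠ t)
    (hPQ : P ∩ Q = {s, t}) (hPR : P ∩ R = {s, t}) (hQR : Q ∩ R = {s, t})
    {v : Fin n} (hTP : T ∩ P = {v}) (hTQ : T ∩ Q = {v}) (hTR : T ∩ R = {v}) : False := by
  have hsP : s ∈ P := (Finset.mem_inter.mp (by rw [hPQ]; simp : s ∈ P ∩ Q)).1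
  have htP : t ∈ P := (Finset.mem_inter.mp (by rw [hPQ]; simp : t ∈ P ∩ Q)).1
  have hsQ : s ∈ Q := (Finset.mem_inter.mp (by rw [hPQ]; simp : s ∈ P ∩ Q)).2
  have htQ : t ∈ Q := (Finset.mem_inter.mp (by rw [hPQ]; simp : t ∈ P ∩ Q)).2
  have hsR : s ∈ R := (Finset.mem_inter.mp (by rw [hPR]; simp : s ∈ P ∩ R)).2
  have htR : t ∈ R := (Finset.mem_inter.mp (by rw [hPR]; simp : t ∈ P ∩ R)).2
  set P' := P \ ({s, t} : Finset (Fin n)) with hP'def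
  set Q' := Q \ ({s, t} : Finset (Fin n)) with hQ'def
  set R' := R \ ({s, t} : Finset (Fin n)) with hR'def
  have hsubP : ({s, t} : Finset (Fin n)) ⊆ P := by
    intro x hx; simp only [Finset.mem_insert, Finset.mem_singleton] at hx
    rcases hx with rfl | rfl <;> assumption
  have hsubQ : ({s, t} : Finset (Fin n)) ⊆ Q := by
    intro x hx; simp only [Finset.mem_insert, Finset.mem_singleton] at hx
    rcases hx with rfl | rfl <;> assumption
  have hsubR : ({s, t} : Finset (Fin n)) ⊆ R := by
    intro x hx; simp only [Finset.mem_insert, Finset.mem_singleton] at hx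
    rcases hx with rfl | rfl <;> assumption
  have hcstp : ({s, t} : Finset (Fin n)).card = 2 := Finset.card_pair hst
  have hcP' : P'.card = k - 2 := by rw [hP'def, Finset.card_sdiff_of_subset hsubP, hcstp, hP]
  have hcQ' : Q'.card = k - 2 := by rw [hQ'def, Finset.card_sdiff_of_subset hsubQ, hcstp, hQ]
  have hcR' : R'.card = k - 2 := by rw [hR'def, Finset.card_sdiff_of_subset hsubR, hcstp, hR]
  have hU : P ∪ Q ∪ R = {s, t} ∪ P' ∪ Q' ∪ R' := by
    ext x
    simp only [Finset.mem_union, hP'def, hQ'def, hR'def, Finset.mem_sdiff,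
      Finset.mem_insert, Finset.mem_singleton]
    constructor
    · rintro ((hx | hx) | hx) <;> by_cases hxs : x = s ∨ x = t <;> tauto
    · rintro ((((hx | hx) | hx) | hx) | hx)
      · subst hx; tauto
      · subst hx; tauto
      · tauto
      · tauto
      · tauto
  have d1 : Disjoint ({s, t} : Finset (Fin n)) P' := Finset.disjoint_sdiff
  have d2 : Disjoint ({s, t} ∪ P') Q' := by
    rw [Finset.disjoint_union_left]
    constructor
    · exact Finset.disjoint_sdiff
    · rw [Finset.disjoint_left]
      intro x hx hxQ
      have h1 : x ∈ P ∩ Q := Finset.mem_inter.mpr ⟨(Finset.mem_sdiff.mp hx).1, (Finset.mem_sdiff.mp hxQ).1⟩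
      rw [hPQ] at h1
      exact (Finset.mem_sdiff.mp hx).2 h1
  have d3 : Disjoint ({s, t} ∪ P' ∪ Q') R' := by
    rw [Finset.disjoint_union_left, Finset.disjoint_union_left]
    refine ⟨⟨Finset.disjoint_sdiff, ?_⟩, ?_⟩
    · rw [Finset.disjoint_left]
      intro x hx hxR
      have h1 : x ∈ P ∩ R := Finset.mem_inter.mpr ⟨(Finset.mem_sdiff.mp hx).1, (Finset.mem_sdiff.mp hxR).1⟩
      rw [hPR] at h1
      exact (Finset.mem_sdiff.mp hx).2 h1
    · rw [Finset.disjoint_left]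
      intro x hx hxR
      have h1 : x ∈ Q ∩ R := Finset.mem_inter.mpr ⟨(Finset.mem_sdiff.mp hx).1, (Finset.mem_sdiff.mp hxR).1⟩
      rw [hQR] at h1
      exact (Finset.mem_sdiff.mp hx).2 h1
  have hUcard : (P ∪ Q ∪ R).card = 2 + (k - 2) + (k - 2) + (k - 2) := by
    rw [hU, Finset.card_union_of_disjoint d3, Finset.card_union_of_disjoint d2,
      Finset.card_union_of_disjoint d1, hcstp, hcP', hcQ', hcR']
  have hTU : T ∩ (P ∪ Q ∪ R) = {v} := by
    rw [Finset.inter_union_distrib_left, Finset.inter_union_distrib_left, hTP, hTQ, hTR]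
    simp
  have hTdiff := Finset.card_inter_add_card_sdiff T (P ∪ Q ∪ R)
  rw [hTU, Finset.card_singleton] at hTdiff
  have hdisj : Disjoint (P ∪ Q ∪ R) (T \ (P ∪ Q ∪ R)) := Finset.disjoint_sdiff
  have hfin : (P ∪ Q ∪ R).card + (T \ (P ∪ Q ∪ R)).card ≤ n := by
    rw [← Finset.card_union_of_disjoint hdisj]
    have := Finset.card_le_univ ((P ∪ Q ∪ R) ∪ (T \ (P ∪ Q ∪ R)))
    simpa using this
  omega

end Part2

section Part3
variable {n k : ℕ} (SS : Set (Finset (Fin n)))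

lemma nonemptyAux (hk : n = 2 * k) (hk3 : 3 ≤ k)
    (hf : ∀ X ∈ SS, ∀ Y ∈ SS, ∀ Z ∈ SS, ¬ BergeTriangle X Y Z)
    {P Q R S : Finset (Fin n)}
    (hP : P.card = k) (hQ : Q.card = k) (hR : R.card = k) (hS : S.card = k)
    (hQR' : Q ≠ R) (hQS : Q ≠ S) (hRS : R ≠ S)
    (hQm : Q ∈ SS) (hRm : R ∈ SS) (hSm : S ∈ SS)
    {s t : Fin n} (hst : s ≠ t)
    (hPQ : P ∩ Q = {s, t}) (hPR : P ∩ R = {s, t}) (hQR : Q ∩ R = {s, t})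
    (hSP : S ∩ P = ∅) : False := by
  have hsP : s ∈ P := (Finset.mem_inter.mp (by rw [hPQ]; simp : s ∈ P ∩ Q)).1
  have htP : t ∈ P := (Finset.mem_inter.mp (by rw [hPQ]; simp : t ∈ P ∩ Q)).1
  have hScompl : S = Finset.univ \ P := by
    apply Finset.eq_of_subset_of_card_le
    · intro x hx
      simp only [Finset.mem_sdiff, Finset.mem_univ, true_and]
      intro hxP
      have : x ∈ S ∩ P := Finset.mem_inter.mpr ⟨hx, hxP⟩
      rw [hSP] at this
      exact absurd this (Finset.notMem_empty x)
    · rw [Finset.card_sdiff_of_subset (Finset.subset_univ P), Finset.card_univ, Fintype.card_fin, hP, hS]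
      omega
  have hSQeq : S ∩ Q = Q \ P := by
    rw [hScompl]
    ext x
    simp only [Finset.mem_inter, Finset.mem_sdiff, Finset.mem_univ, true_and]
    tauto
  have hSReq : S ∩ R = R \ P := by
    rw [hScompl]
    ext x
    simp only [Finset.mem_inter, Finset.mem_sdiff, Finset.mem_univ, true_and]
    tauto
  have hQPc : (Q ∩ P).card = 2 := by rw [Finset.inter_comm, hPQ]; exact Finset.card_pair hst
  have hRPc : (R ∩ P).card = 2 := by rw [Finset.inter_comm, hPR]; exact Finset.card_pair hst
  have hSQc : (S ∩ Q).card = k - 2 := by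
    have := Finset.card_inter_add_card_sdiff Q P
    rw [hSQeq]; omega
  have hSRc : (S ∩ R).card = k - 2 := by
    have := Finset.card_inter_add_card_sdiff R P
    rw [hSReq]; omega
  have hSQne : (Q ∩ S).Nonempty := by
    rw [Finset.inter_comm]; apply Finset.card_pos.mp; omega
  have hSRne : (R ∩ S).Nonempty := by
    rw [Finset.inter_comm]; apply Finset.card_pos.mp; omega
  have hQRne : (Q ∩ R).Nonempty := ⟨s, by rw [hQR]; simp⟩
  rcases K1 hk hk3 hQ hR hS hQR' hQS hRS hQRne hSQne hSRne (hf Q hQm R hRm S hSm) with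
    ⟨w, e1, _, _⟩ | ⟨w, e1, _, _⟩ | ⟨w, e1, e2, _⟩ | ⟨a, b, hab, e1, e2, e3⟩
  · have := congrArg Finset.card (hQR.symm.trans e1)
    rw [Finset.card_pair hst, Finset.card_singleton] at this
    omega
  · have := congrArg Finset.card (hQR.symm.trans e1)
    rw [Finset.card_pair hst, Finset.card_singleton] at this
    omega
  · have hwQ : w ∈ Q ∩ S := by rw [e1]; simp
    have hwR : w ∈ R ∩ S := by rw [e2]; simp
    have hwQR : w ∈ Q ∩ R := Finset.mem_inter.mpr
      ⟨(Finset.mem_inter.mp hwQ).1, (Finset.mem_inter.mp hwR).1⟩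
    rw [hQR] at hwQR
    simp only [Finset.mem_insert, Finset.mem_singleton] at hwQR
    have hwP : w ∈ P := by rcases hwQR with rfl | rfl <;> assumption
    have hwS : w ∈ S := (Finset.mem_inter.mp hwQ).2
    rw [hScompl] at hwS
    exact (Finset.mem_sdiff.mp hwS).2 hwP
  · have hQSeq : Q ∩ S = Q ∩ R := e2.trans e1.symm
    have hsS : s ∈ Q ∩ S := by rw [hQSeq, hQR]; simp
    have hsS' : s ∈ S := (Finset.mem_inter.mp hsS).2
    rw [hScompl] at hsS'
    exact (Finset.mem_sdiff.mp hsS').2 hsP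

lemma ext1 (hk : n = 2 * k) (hk3 : 3 ≤ k)
    (hf : ∀ X ∈ SS, ∀ Y ∈ SS, ∀ Z ∈ SS, ¬ BergeTriangle X Y Z)
    {P Q R S : Finset (Fin n)}
    (hP : P.card = k) (hQ : Q.card = k) (hR : R.card = k) (hS : S.card = k)
    (hPQ' : P ≠ Q) (hPR' : P ≠ R) (hQR' : Q ≠ R)
    (hPS : P ≠ S) (hQS : Q ≠ S) (hRS : R ≠ S)
    (hPm : P ∈ SS) (hQm : Q ∈ SS) (hRm : R ∈ SS) (hSm : S ∈ SS)
    {s t : Fin n} (hst : s ≠ t)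
    (hPQ : P ∩ Q = {s, t}) (hPR : P ∩ R = {s, t}) (hQR : Q ∩ R = {s, t}) :
    S ∩ P = {s, t} ∧ S ∩ Q = {s, t} ∧ S ∩ R = {s, t} := by
  have hSPne : (S ∩ P).Nonempty := by
    rcases Finset.eq_empty_or_nonempty (S ∩ P) with h | h
    · exact absurd (nonemptyAux SS hk hk3 hf hP hQ hR hS hQR' hQS hRS hQm hRm hSm hst
        hPQ hPR hQR h) not_false
    · exact h
  have hSQne : (S ∩ Q).Nonempty := by
    rcases Finset.eq_empty_or_nonempty (S ∩ Q) with h | h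
    · exact absurd (nonemptyAux SS hk hk3 hf hQ hP hR hS hPR' hPS hRS hPm hRm hSm hst
        (by rw [Finset.inter_comm]; exact hPQ) hQR hPR h) not_false
    · exact h
  have hSRne : (S ∩ R).Nonempty := by
    rcases Finset.eq_empty_or_nonempty (S ∩ R) with h | h
    · exact absurd (nonemptyAux SS hk hk3 hf hR hP hQ hS hPQ' hPS hQS hPm hQm hSm hst
        (by rw [Finset.inter_comm]; exact hPR) (by rw [Finset.inter_comm]; exact hQR) hPQ h)
        not_false
    · exact h
  have hPQne : (P ∩ Q).Nonempty := ⟨s, by rw [hPQ]; simp⟩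
  have hPRne : (P ∩ R).Nonempty := ⟨s, by rw [hPR]; simp⟩
  have hQRne : (Q ∩ R).Nonempty := ⟨s, by rw [hQR]; simp⟩
  have hPSne : (P ∩ S).Nonempty := by rw [Finset.inter_comm]; exact hSPne
  have hQSne : (Q ∩ S).Nonempty := by rw [Finset.inter_comm]; exact hSQne
  have hRSne : (R ∩ S).Nonempty := by rw [Finset.inter_comm]; exact hSRne
  have cardPQ : (P ∩ Q).card = 2 := by rw [hPQ]; exact Finset.card_pair hst
  have cardPR : (P ∩ R).card = 2 := by rw [hPR]; exact Finset.card_pair hst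
  have cardQR : (Q ∩ R).card = 2 := by rw [hQR]; exact Finset.card_pair hst
  -- outcome for triple (P, Q, S)
  have oPQ : (∃ w, P ∩ S = {w} ∧ Q ∩ S = {w}) ∨ (P ∩ S = {s, t} ∧ Q ∩ S = {s, t}) := by
    rcases K1 hk hk3 hP hQ hS hPQ' hPS hQS hPQne hPSne hQSne (hf P hPm Q hQm S hSm) with
      ⟨w, e1, _, _⟩ | ⟨w, e1, _, _⟩ | ⟨w, e1, e2, _⟩ | ⟨a, b, _, e1, e2, e3⟩
    · rw [e1] at cardPQ; simp at cardPQ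
    · rw [e1] at cardPQ; simp at cardPQ
    · exact Or.inl ⟨w, e1, e2⟩
    · exact Or.inr ⟨e2.trans (e1.symm.trans hPQ), e3.trans (e1.symm.trans hPQ)⟩
  have oQR : (∃ w, Q ∩ S = {w} ∧ R ∩ S = {w}) ∨ (Q ∩ S = {s, t} ∧ R ∩ S = {s, t}) := by
    rcases K1 hk hk3 hQ hR hS hQR' hQS hRS hQRne hQSne hRSne (hf Q hQm R hRm S hSm) with
      ⟨w, e1, _, _⟩ | ⟨w, e1, _, _⟩ | ⟨w, e1, e2, _⟩ | ⟨a, b, _, e1, e2, e3⟩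
    · rw [e1] at cardQR; simp at cardQR
    · rw [e1] at cardQR; simp at cardQR
    · exact Or.inl ⟨w, e1, e2⟩
    · exact Or.inr ⟨e2.trans (e1.symm.trans hQR), e3.trans (e1.symm.trans hQR)⟩
  have oPR : (∃ w, P ∩ S = {w} ∧ R ∩ S = {w}) ∨ (P ∩ S = {s, t} ∧ R ∩ S = {s, t}) := by
    rcases K1 hk hk3 hP hR hS hPR' hPS hRS hPRne hPSne hRSne (hf P hPm R hRm S hSm) with
      ⟨w, e1, _, _⟩ | ⟨w, e1, _, _⟩ | ⟨w, e1, e2, _⟩ | ⟨a, b, _, e1, e2, e3⟩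
    · rw [e1] at cardPR; simp at cardPR
    · rw [e1] at cardPR; simp at cardPR
    · exact Or.inl ⟨w, e1, e2⟩
    · exact Or.inr ⟨e2.trans (e1.symm.trans hPR), e3.trans (e1.symm.trans hPR)⟩
  rcases oPQ with ⟨w1, hPSw, hQSw⟩ | ⟨hPS2, hQS2⟩
  · rcases oQR with ⟨w2, hQSw2, hRSw2⟩ | ⟨hQS2, _⟩
    · have hw12 : w1 = w2 := Finset.singleton_inj.mp (hQSw.symm.trans hQSw2)
      subst hw12
      exact absurd (apexK4 hk hk3 hP hQ hR hS hst hPQ hPR hQR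
        (by rw [Finset.inter_comm]; exact hPSw) (by rw [Finset.inter_comm]; exact hQSw)
        (by rw [Finset.inter_comm]; exact hRSw2)) not_false
    · have := congrArg Finset.card (hQSw.symm.trans hQS2)
      rw [Finset.card_singleton, Finset.card_pair hst] at this
      omega
  · rcases oPR with ⟨w3, hPSw3, _⟩ | ⟨_, hRS2⟩
    · have := congrArg Finset.card (hPSw3.symm.trans hPS2)
      rw [Finset.card_singleton, Finset.card_pair hst] at this
      omega
    · exact ⟨by rw [Finset.inter_comm]; exact hPS2, by rw [Finset.inter_comm]; exact hQS2,
        by rw [Finset.inter_comm]; exact hRS2⟩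

end Part3

section Part4
variable {n k : ℕ} (SS : Set (Finset (Fin n)))

lemma sunflowerFalse (hk : n = 2 * k) (hk3 : 3 ≤ k)
    (hf : ∀ X ∈ SS, ∀ Y ∈ SS, ∀ Z ∈ SS, ¬ BergeTriangle X Y Z)
    {P Q R S1 S2 : Finset (Fin n)}
    (hP : P.card = k) (hQ : Q.card = k) (hR : R.card = k)
    (hS1 : S1.card = k) (hS2 : S2.card = k)
    (dPQ : P ≠ Q) (dPR : P ≠ R) (dPS1 : P ≠ S1) (dPS2 : P ≠ S2)
    (dQR : Q ≠ R) (dQS1 : Q ≠ S1) (dQS2 : Q ≠ S2)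
    (dRS1 : R ≠ S1) (dRS2 : R ≠ S2) (dS12 : S1 ≠ S2)
    (hPm : P ∈ SS) (hQm : Q ∈ SS) (hRm : R ∈ SS) (hS1m : S1 ∈ SS) (hS2m : S2 ∈ SS)
    {s t : Fin n} (hst : s ≠ t)
    (hPQ : P ∩ Q = {s, t}) (hPR : P ∩ R = {s, t}) (hQR : Q ∩ R = {s, t}) : False := by
  obtain ⟨e1P, e1Q, e1R⟩ := ext1 SS hk hk3 hf hP hQ hR hS1 dPQ dPR dQR dPS1 dQS1 dRS1
    hPm hQm hRm hS1m hst hPQ hPR hQR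
  obtain ⟨e2P, e2Q, e2R⟩ := ext1 SS hk hk3 hf hP hQ hR hS2 dPQ dPR dQR dPS2 dQS2 dRS2
    hPm hQm hRm hS2m hst hPQ hPR hQR
  have hsP : s ∈ P := (Finset.mem_inter.mp (by rw [hPQ]; simp : s ∈ P ∩ Q)).1
  have htP : t ∈ P := (Finset.mem_inter.mp (by rw [hPQ]; simp : t ∈ P ∩ Q)).1
  have hsQ : s ∈ Q := (Finset.mem_inter.mp (by rw [hPQ]; simp : s ∈ P ∩ Q)).2
  have htQ : t ∈ Q := (Finset.mem_inter.mp (by rw [hPQ]; simp : t ∈ P ∩ Q)).2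
  have hsR : s ∈ R := (Finset.mem_inter.mp (by rw [hPR]; simp : s ∈ P ∩ R)).2
  have htR : t ∈ R := (Finset.mem_inter.mp (by rw [hPR]; simp : t ∈ P ∩ R)).2
  have hsS1 : s ∈ S1 := (Finset.mem_inter.mp (by rw [e1P]; simp : s ∈ S1 ∩ P)).1
  have htS1 : t ∈ S1 := (Finset.mem_inter.mp (by rw [e1P]; simp : t ∈ S1 ∩ P)).1
  have hsS2 : s ∈ S2 := (Finset.mem_inter.mp (by rw [e2P]; simp : s ∈ S2 ∩ P)).1
  have htS2 : t ∈ S2 := (Finset.mem_inter.mp (by rw [e2P]; simp : t ∈ S2 ∩ P)).1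
  have hcstp : ({s, t} : Finset (Fin n)).card = 2 := Finset.card_pair hst
  have hsub : ∀ X : Finset (Fin n), s ∈ X → t ∈ X → ({s, t} : Finset (Fin n)) ⊆ X := by
    intro X h1 h2 x hx
    simp only [Finset.mem_insert, Finset.mem_singleton] at hx
    rcases hx with rfl | rfl <;> assumption
  have hcP' : (P \ {s, t}).card = k - 2 := by
    rw [Finset.card_sdiff_of_subset (hsub P hsP htP), hcstp, hP]
  have hcQ' : (Q \ {s, t}).card = k - 2 := by
    rw [Finset.card_sdiff_of_subset (hsub Q hsQ htQ), hcstp, hQ]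
  have hcR' : (R \ {s, t}).card = k - 2 := by
    rw [Finset.card_sdiff_of_subset (hsub R hsR htR), hcstp, hR]
  have hcS1' : (S1 \ {s, t}).card = k - 2 := by
    rw [Finset.card_sdiff_of_subset (hsub S1 hsS1 htS1), hcstp, hS1]
  have hcS2' : (S2 \ {s, t}).card = k - 2 := by
    rw [Finset.card_sdiff_of_subset (hsub S2 hsS2 htS2), hcstp, hS2]
  -- generic petal disjointness
  have hdisjXY : ∀ X Y : Finset (Fin n), X ∩ Y = {s, t} →
      Disjoint (X \ {s, t}) (Y \ {s, t}) := by
    intro X Y hXY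
    rw [Finset.disjoint_left]
    intro x hx hy
    have : x ∈ X ∩ Y := Finset.mem_inter.mpr ⟨(Finset.mem_sdiff.mp hx).1, (Finset.mem_sdiff.mp hy).1⟩
    rw [hXY] at this
    exact (Finset.mem_sdiff.mp hx).2 this
  have dPQ' := hdisjXY P Q hPQ
  have dPR' := hdisjXY P R hPR
  have dQR' := hdisjXY Q R hQR
  have dPS1' := hdisjXY P S1 (by rw [Finset.inter_comm]; exact e1P)
  have dQS1' := hdisjXY Q S1 (by rw [Finset.inter_comm]; exact e1Q)
  have dRS1' := hdisjXY R S1 (by rw [Finset.inter_comm]; exact e1R)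
  set V : Finset (Fin n) := {s, t} ∪ P \ {s, t} ∪ Q \ {s, t} ∪ R \ {s, t} ∪ S1 \ {s, t}
    with hVdef
  have hVcard : V.card = 2 + (k - 2) + (k - 2) + (k - 2) + (k - 2) := by
    rw [hVdef]
    rw [Finset.card_union_of_disjoint, Finset.card_union_of_disjoint,
      Finset.card_union_of_disjoint, Finset.card_union_of_disjoint, hcstp, hcP', hcQ', hcR', hcS1']
    · exact Finset.disjoint_sdiff
    · rw [Finset.disjoint_union_left]
      exact ⟨Finset.disjoint_sdiff, dPQ'⟩
    · rw [Finset.disjoint_union_left, Finset.disjoint_union_left]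
      exact ⟨⟨Finset.disjoint_sdiff, dPR'⟩, dQR'⟩
    · rw [Finset.disjoint_union_left, Finset.disjoint_union_left, Finset.disjoint_union_left]
      exact ⟨⟨⟨Finset.disjoint_sdiff, dPS1'⟩, dQS1'⟩, dRS1'⟩
  have hVle : V.card ≤ n := by
    have := Finset.card_le_univ V
    simpa using this
  have hk3' : k = 3 := by omega
  have hVuniv : V = Finset.univ := by
    apply Finset.eq_univ_of_card
    rw [hVcard]
    simp [Fintype.card_fin]
    omega
  obtain ⟨e, he⟩ : ∃ e, S2 \ {s, t} = {e} := Finset.card_eq_one.mp (by omega)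
  have heS2 : e ∈ S2 := (Finset.mem_sdiff.mp (by rw [he]; simp : e ∈ S2 \ {s, t})).1
  have hest : e ∉ ({s, t} : Finset (Fin n)) :=
    (Finset.mem_sdiff.mp (by rw [he]; simp : e ∈ S2 \ {s, t})).2
  have heV : e ∈ V := by rw [hVuniv]; exact Finset.mem_univ e
  rw [hVdef] at heV
  simp only [Finset.mem_union] at heV
  have hnotP : e ∉ P \ {s, t} := by
    intro hc
    have : e ∈ S2 ∩ P := Finset.mem_inter.mpr ⟨heS2, (Finset.mem_sdiff.mp hc).1⟩
    rw [e2P] at this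
    exact hest this
  have hnotQ : e ∉ Q \ {s, t} := by
    intro hc
    have : e ∈ S2 ∩ Q := Finset.mem_inter.mpr ⟨heS2, (Finset.mem_sdiff.mp hc).1⟩
    rw [e2Q] at this
    exact hest this
  have hnotR : e ∉ R \ {s, t} := by
    intro hc
    have : e ∈ S2 ∩ R := Finset.mem_inter.mpr ⟨heS2, (Finset.mem_sdiff.mp hc).1⟩
    rw [e2R] at this
    exact hest this
  have heS1' : e ∈ S1 \ {s, t} := by
    rcases heV with ((((h | h) | h) | h) | h)
    · exact absurd h hest
    · exact absurd h hnotP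
    · exact absurd h hnotQ
    · exact absurd h hnotR
    · exact h
  have hS1e : S1 \ {s, t} = {e} := by
    apply (Finset.eq_of_subset_of_card_le (Finset.singleton_subset_iff.mpr heS1') (by rw [Finset.card_singleton]; omega)).symm
  have hS1eq : S1 = {s, t} ∪ {e} := by
    have h1 := Finset.union_sdiff_of_subset (hsub S1 hsS1 htS1)
    rw [hS1e] at h1
    exact h1.symm
  have hS2eq : S2 = {s, t} ∪ {e} := by
    have h1 := Finset.union_sdiff_of_subset (hsub S2 hsS2 htS2)
    rw [he] at h1
    exact h1.symm
  exact dS12 (hS1eq.trans hS2eq.symm)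

end Part4

section Part5
variable {n k : ℕ} (SS : Set (Finset (Fin n)))

lemma Wsub (hk : n = 2 * k) (hk3 : 3 ≤ k) {B C S : Finset (Fin n)}
    (hB : B.card = k) (hC : C.card = k) (hS : S.card = k)
    (hBCc : (B ∩ C).card = k - 1) {w : Fin n}
    (hScap : S ∩ (B ∪ C) = {w}) : Finset.univ \ (B ∪ C) ⊆ S := by
  have hBCu : (B ∪ C).card = k + 1 := by
    have := Finset.card_union_add_card_inter B C
    omega
  have hWc : (Finset.univ \ (B ∪ C)).card = k - 1 := by
    rw [Finset.card_sdiff_of_subset (Finset.subset_univ _), Finset.card_univ, Fintype.card_fin, hBCu]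
    omega
  have hSd : (S \ (B ∪ C)).card = k - 1 := by
    have := Finset.card_inter_add_card_sdiff S (B ∪ C)
    rw [hScap, Finset.card_singleton] at this
    omega
  have hsub : S \ (B ∪ C) ⊆ Finset.univ \ (B ∪ C) := by
    intro x hx
    exact Finset.mem_sdiff.mpr ⟨Finset.mem_univ x, (Finset.mem_sdiff.mp hx).2⟩
  have heq : S \ (B ∪ C) = Finset.univ \ (B ∪ C) :=
    Finset.eq_of_subset_of_card_le hsub (by omega)
  intro x hx
  rw [← heq] at hx
  exact (Finset.mem_sdiff.mp hx).1

lemma complCase (hk : n = 2 * k) {B C S : Finset (Fin n)}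
    (hB : B.card = k) (hS : S.card = k) (hSB' : S ∩ B = ∅) :
    Finset.univ \ (B ∪ C) ⊆ S := by
  have hScompl : S = Finset.univ \ B := by
    apply Finset.eq_of_subset_of_card_le
    · intro x hx
      simp only [Finset.mem_sdiff, Finset.mem_univ, true_and]
      intro hxB
      have : x ∈ S ∩ B := Finset.mem_inter.mpr ⟨hx, hxB⟩
      rw [hSB'] at this
      exact absurd this (Finset.notMem_empty x)
    · rw [Finset.card_sdiff_of_subset (Finset.subset_univ B), Finset.card_univ, Fintype.card_fin, hB, hS]
      omega
  rw [hScompl]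
  intro x hx
  rw [Finset.mem_sdiff] at hx ⊢
  exact ⟨hx.1, fun hc => hx.2 (Finset.mem_union.mpr (Or.inl hc))⟩

lemma getW (hk : n = 2 * k) (hk3 : 3 ≤ k)
    (hf : ∀ X ∈ SS, ∀ Y ∈ SS, ∀ Z ∈ SS, ¬ BergeTriangle X Y Z)
    {B C S X Y : Finset (Fin n)}
    (hB : B.card = k) (hC : C.card = k) (hS : S.card = k)
    (hX : X.card = k) (hY : Y.card = k)
    (dBC : B ≠ C) (dBS : B ≠ S) (dBX : B ≠ X) (dBY : B ≠ Y)
    (dCS : C ≠ S) (dCX : C ≠ X) (dCY : C ≠ Y)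
    (dSX : S ≠ X) (dSY : S ≠ Y) (dXY : X ≠ Y)
    (hBm : B ∈ SS) (hCm : C ∈ SS) (hSm : S ∈ SS) (hXm : X ∈ SS) (hYm : Y ∈ SS)
    (hBCc : (B ∩ C).card = k - 1) : Finset.univ \ (B ∪ C) ⊆ S := by
  by_cases hSB : (S ∩ B).Nonempty
  · by_cases hSC : (S ∩ C).Nonempty
    · have hBCne : (B ∩ C).Nonempty := Finset.card_pos.mp (by omega)
      rcases K1 hk hk3 hB hC hS dBC dBS dCS hBCne
        (by rw [Finset.inter_comm]; exact hSB) (by rw [Finset.inter_comm]; exact hSC)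
        (hf B hBm C hCm S hSm) with
        ⟨w, e1, _, _⟩ | ⟨w, e1, _, _⟩ | ⟨w, e1, e2, _⟩ | ⟨a, b, hab, e1, e2, e3⟩
      · rw [e1, Finset.card_singleton] at hBCc; omega
      · rw [e1, Finset.card_singleton] at hBCc; omega
      · apply Wsub hk hk3 hB hC hS hBCc (w := w)
        rw [Finset.inter_union_distrib_left, Finset.inter_comm S B, Finset.inter_comm S C,
          e1, e2, Finset.union_self]
      · exact absurd (sunflowerFalse SS hk hk3 hf hB hC hS hX hY dBC dBS dBX dBY dCS dCX dCY
          dSX dSY dXY hBm hCm hSm hXm hYm hab e1 e2 e3) not_false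
    · have hSC' : S ∩ C = ∅ := Finset.not_nonempty_iff_eq_empty.mp hSC
      rw [Finset.union_comm]
      exact complCase hk hC hS hSC'
  · exact complCase hk hB hS (Finset.not_nonempty_iff_eq_empty.mp hSB)

lemma mainF2 (hk : n = 2 * k) (hk3 : 3 ≤ k)
    (hf : ∀ X ∈ SS, ∀ Y ∈ SS, ∀ Z ∈ SS, ¬ BergeTriangle X Y Z)
    {A B C D E : Finset (Fin n)}
    (hA : A.card = k) (hB : B.card = k) (hC : C.card = k)
    (hD : D.card = k) (hE : E.card = k)
    (dAB : A ≠ B) (dAC : A ≠ C) (dAD : A ≠ D) (dAE : A ≠ E)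
    (dBC : B ≠ C) (dBD : B ≠ D) (dBE : B ≠ E)
    (dCD : C ≠ D) (dCE : C ≠ E) (dDE : D ≠ E)
    (hAm : A ∈ SS) (hBm : B ∈ SS) (hCm : C ∈ SS) (hDm : D ∈ SS) (hEm : E ∈ SS)
    {t0 : Fin n} (hAB1 : A ∩ B = {t0}) (hAC1 : A ∩ C = {t0})
    (hbc : k - 1 ≤ (B ∩ C).card) : False := by
  have hBCle : (B ∩ C).card ≤ k := by
    rw [← hB]; exact Finset.card_le_card Finset.inter_subset_left
  have hBCne : (B ∩ C).card ≠ k := by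
    intro h
    have h1 : B ∩ C = B := Finset.eq_of_subset_of_card_le Finset.inter_subset_left
      (by rw [h, hB])
    have h2 : B ⊆ C := Finset.inter_eq_left.mp h1
    exact dBC (Finset.eq_of_subset_of_card_le h2 (by rw [hB, hC]))
  have hBCc : (B ∩ C).card = k - 1 := by omega
  have hWA : Finset.univ \ (B ∪ C) ⊆ A := by
    apply Wsub hk hk3 hB hC hA hBCc (w := t0)
    rw [Finset.inter_union_distrib_left, hAB1, hAC1, Finset.union_self]
  have hWD : Finset.univ \ (B ∪ C) ⊆ D :=
    getW SS hk hk3 hf hB hC hD hA hE dBC dBD dAB.symm dBE dCD dAC.symm dCE dAD.symm dDE dAE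
      hBm hCm hDm hAm hEm hBCc
  have hWE : Finset.univ \ (B ∪ C) ⊆ E :=
    getW SS hk hk3 hf hB hC hE hA hD dBC dBE dAB.symm dBD dCE dAC.symm dCD dAE.symm dDE.symm dAD
      hBm hCm hEm hAm hDm hBCc
  have hBCu : (B ∪ C).card = k + 1 := by
    have := Finset.card_union_add_card_inter B C
    omega
  have hWc : (Finset.univ \ (B ∪ C)).card = k - 1 := by
    rw [Finset.card_sdiff_of_subset (Finset.subset_univ _), Finset.card_univ, Fintype.card_fin, hBCu]
    omega
  set W : Finset (Fin n) := Finset.univ \ (B ∪ C) with hWdef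
  have hWAD : W ⊆ A ∩ D := fun x hx => Finset.mem_inter.mpr ⟨hWA hx, hWD hx⟩
  have hWAE : W ⊆ A ∩ E := fun x hx => Finset.mem_inter.mpr ⟨hWA hx, hWE hx⟩
  have hWDE : W ⊆ D ∩ E := fun x hx => Finset.mem_inter.mpr ⟨hWD hx, hWE hx⟩
  have hWne : W.Nonempty := Finset.card_pos.mp (by omega)
  have hADne : (A ∩ D).Nonempty := hWne.mono hWAD
  have hAEne : (A ∩ E).Nonempty := hWne.mono hWAE
  have hDEne : (D ∩ E).Nonempty := hWne.mono hWDE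
  have hcard2 : 2 ≤ W.card := by omega
  rcases K1 hk hk3 hA hD hE dAD dAE dDE hADne hAEne hDEne (hf A hAm D hDm E hEm) with
    ⟨w, e1, _, _⟩ | ⟨w, e1, _, _⟩ | ⟨w, e1, _, _⟩ | ⟨a, b, hab, e1, e2, e3⟩
  · have := Finset.card_le_card hWAD
    rw [e1, Finset.card_singleton] at this
    omega
  · have := Finset.card_le_card hWAD
    rw [e1, Finset.card_singleton] at this
    omega
  · have := Finset.card_le_card hWAE
    rw [e1, Finset.card_singleton] at this
    omega
  · exact sunflowerFalse SS hk hk3 hf hA hD hE hB hC dAD dAE dAB dAC dDE dBD.symm dCD.symm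
      dBE.symm dCE.symm dBC hAm hDm hEm hBm hCm hab e1 e2 e3

lemma afterTriple (hk : n = 2 * k) (hk3 : 3 ≤ k)
    (hf : ∀ X ∈ SS, ∀ Y ∈ SS, ∀ Z ∈ SS, ¬ BergeTriangle X Y Z)
    {A B C D E : Finset (Fin n)}
    (hA : A.card = k) (hB : B.card = k) (hC : C.card = k)
    (hD : D.card = k) (hE : E.card = k)
    (dAB : A ≠ B) (dAC : A ≠ C) (dAD : A ≠ D) (dAE : A ≠ E)
    (dBC : B ≠ C) (dBD : B ≠ D) (dBE : B ≠ E)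
    (dCD : C ≠ D) (dCE : C ≠ E) (dDE : D ≠ E)
    (hAm : A ∈ SS) (hBm : B ∈ SS) (hCm : C ∈ SS) (hDm : D ∈ SS) (hEm : E ∈ SS)
    (h1 : (A ∩ B).Nonempty) (h2 : (A ∩ C).Nonempty) (h3 : (B ∩ C).Nonempty) : False := by
  rcases K1 hk hk3 hA hB hC dAB dAC dBC h1 h2 h3 (hf A hAm B hBm C hCm) with
    ⟨w, e1, e2, e3⟩ | ⟨w, e1, e2, e3⟩ | ⟨w, e1, e2, e3⟩ | ⟨a, b, hab, e1, e2, e3⟩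
  · exact mainF2 SS hk hk3 hf hA hB hC hD hE dAB dAC dAD dAE dBC dBD dBE dCD dCE dDE
      hAm hBm hCm hDm hEm e1 e2 e3
  · exact mainF2 SS hk hk3 hf hB hA hC hD hE dAB.symm dBC dBD dBE dAC dAD dAE dCD dCE dDE
      hBm hAm hCm hDm hEm (by rw [Finset.inter_comm]; exact e1) e2 e3
  · exact mainF2 SS hk hk3 hf hC hA hB hD hE dAC.symm dBC.symm dCD dCE dAB dAD dAE dBD dBE dDE
      hCm hAm hBm hDm hEm (by rw [Finset.inter_comm]; exact e1)
      (by rw [Finset.inter_comm]; exact e2) e3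
  · exact sunflowerFalse SS hk hk3 hf hA hB hC hD hE dAB dAC dAD dAE dBC dBD dBE dCD dCE dDE
      hAm hBm hCm hDm hEm hab e1 e2 e3

lemma complUnique (hk : n = 2 * k) {X Y Z : Finset (Fin n)}
    (hX : X.card = k) (hY : Y.card = k) (hZ : Z.card = k)
    (h1 : X ∩ Y = ∅) (h2 : X ∩ Z = ∅) : Y = Z := by
  have key : ∀ V : Finset (Fin n), V.card = k → X ∩ V = ∅ → V = Finset.univ \ X := by
    intro V hV hXV
    apply Finset.eq_of_subset_of_card_le
    · intro x hx
      simp only [Finset.mem_sdiff, Finset.mem_univ, true_and]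
      intro hxX
      have : x ∈ X ∩ V := Finset.mem_inter.mpr ⟨hxX, hx⟩
      rw [hXV] at this
      exact absurd this (Finset.notMem_empty x)
    · rw [Finset.card_sdiff_of_subset (Finset.subset_univ X), Finset.card_univ, Fintype.card_fin, hX, hV]
      omega
  rw [key Y hY h1, key Z hZ h2]

end Part5

/-- For even `n ≥ 6`, among any five pairwise distinct subsets of `[n]` of size exactly
`n / 2`, some three form a Berge triangle. -/
theorem five_medium_triangle (n : ℕ) (hn : 6 ≤ n) (hev : Even n)
    (M₁ M₂ M₃ M₄ M₅ : Finset (Fin n))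
    (hd : [M₁, M₂, M₃, M₄, M₅].Pairwise (· ≠ ·))
    (hcard : ∀ M ∈ ({M₁, M₂, M₃, M₄, M₅} : Set (Finset (Fin n))), M.card = n / 2) :
    ∃ A ∈ ({M₁, M₂, M₃, M₄, M₅} : Set (Finset (Fin n))),
      ∃ B ∈ ({M₁, M₂, M₃, M₄, M₅} : Set (Finset (Fin n))),
        ∃ C ∈ ({M₁, M₂, M₃, M₄, M₅} : Set (Finset (Fin n))),
          BergeTriangle A B C := by
  by_contra hcon
  set SS : Set (Finset (Fin n)) := {M₁, M₂, M₃, M₄, M₅} with hSSdef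
  have hf : ∀ X ∈ SS, ∀ Y ∈ SS, ∀ Z ∈ SS, ¬ BergeTriangle X Y Z :=
    fun X hX Y hY Z hZ hB => hcon ⟨X, hX, Y, hY, Z, hZ, hB⟩
  set k : ℕ := n / 2 with hkdef
  have hk : n = 2 * k := by
    obtain ⟨m, hm⟩ := hev
    omega
  have hk3 : 3 ≤ k := by omega
  have hm1 : M₁ ∈ SS := by rw [hSSdef]; left; rfl
  have hm2 : M₂ ∈ SS := by rw [hSSdef]; right; left; rfl
  have hm3 : M₃ ∈ SS := by rw [hSSdef]; right; right; left; rfl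
  have hm4 : M₄ ∈ SS := by rw [hSSdef]; right; right; right; left; rfl
  have hm5 : M₅ ∈ SS := by rw [hSSdef]; right; right; right; right; rfl
  have hc1 : M₁.card = k := hcard M₁ hm1
  have hc2 : M₂.card = k := hcard M₂ hm2
  have hc3 : M₃.card = k := hcard M₃ hm3
  have hc4 : M₄.card = k := hcard M₄ hm4
  have hc5 : M₅.card = k := hcard M₅ hm5
  simp only [List.pairwise_cons, List.mem_cons, List.mem_singleton, List.not_mem_nil,
    or_false, forall_eq_or_imp, forall_eq, List.Pairwise.nil, and_true] at hd
  obtain ⟨⟨d12, d13, d14, d15⟩, ⟨d23, d24, d25⟩, ⟨d34, d35⟩, d45, -⟩ := hd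
  by_cases h12 : (M₁ ∩ M₂).Nonempty
  · by_cases h13 : (M₁ ∩ M₃).Nonempty
    · by_cases h23 : (M₂ ∩ M₃).Nonempty
      · -- triple (1,2,3)
        exact afterTriple SS hk hk3 hf hc1 hc2 hc3 hc4 hc5 d12 d13 d14 d15 d23 d24 d25 d34 d35
          d45 hm1 hm2 hm3 hm4 hm5 h12 h13 h23
      · -- M₂ ∩ M₃ = ∅ : M₂'s complement is M₃
        have h23' : M₂ ∩ M₃ = ∅ := Finset.not_nonempty_iff_eq_empty.mp h23
        have h24 : (M₂ ∩ M₄).Nonempty := by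
          by_contra hc
          exact d34 (complUnique hk hc2 hc3 hc4 h23' (Finset.not_nonempty_iff_eq_empty.mp hc))
        have h25 : (M₂ ∩ M₅).Nonempty := by
          by_contra hc
          exact d35 (complUnique hk hc2 hc3 hc5 h23' (Finset.not_nonempty_iff_eq_empty.mp hc))
        by_cases h14 : (M₁ ∩ M₄).Nonempty
        · -- triple (M₂, M₁, M₄), rest (M₃, M₅)
          exact afterTriple SS hk hk3 hf hc2 hc1 hc4 hc3 hc5 d12.symm d24 d23 d25 d14 d13 d15
            d34.symm d45 d35 hm2 hm1 hm4 hm3 hm5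
            (by rw [Finset.inter_comm]; exact h12) h24 h14
        · by_cases h15 : (M₁ ∩ M₅).Nonempty
          · -- triple (M₂, M₁, M₅), rest (M₃, M₄)
            exact afterTriple SS hk hk3 hf hc2 hc1 hc5 hc3 hc4 d12.symm d25 d23 d24 d15 d13 d14
              d35.symm d45.symm d34 hm2 hm1 hm5 hm3 hm4
              (by rw [Finset.inter_comm]; exact h12) h25 h15
          · exact d45 (complUnique hk hc1 hc4 hc5
              (Finset.not_nonempty_iff_eq_empty.mp h14) (Finset.not_nonempty_iff_eq_empty.mp h15))
    · -- M₁ ∩ M₃ = ∅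
      have h13' : M₁ ∩ M₃ = ∅ := Finset.not_nonempty_iff_eq_empty.mp h13
      have h14 : (M₁ ∩ M₄).Nonempty := by
        by_contra hc
        exact d34 (complUnique hk hc1 hc3 hc4 h13' (Finset.not_nonempty_iff_eq_empty.mp hc))
      have h15 : (M₁ ∩ M₅).Nonempty := by
        by_contra hc
        exact d35 (complUnique hk hc1 hc3 hc5 h13' (Finset.not_nonempty_iff_eq_empty.mp hc))
      by_cases h24 : (M₂ ∩ M₄).Nonempty
      · -- triple (M₁, M₂, M₄), rest (M₃, M₅)
        exact afterTriple SS hk hk3 hf hc1 hc2 hc4 hc3 hc5 d12 d14 d13 d15 d24 d23 d25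
          d34.symm d45 d35 hm1 hm2 hm4 hm3 hm5 h12 h14 h24
      · by_cases h25 : (M₂ ∩ M₅).Nonempty
        · -- triple (M₁, M₂, M₅), rest (M₃, M₄)
          exact afterTriple SS hk hk3 hf hc1 hc2 hc5 hc3 hc4 d12 d15 d13 d14 d25 d23 d24
            d35.symm d45.symm d34 hm1 hm2 hm5 hm3 hm4 h12 h15 h25
        · exact d45 (complUnique hk hc2 hc4 hc5
            (Finset.not_nonempty_iff_eq_empty.mp h24) (Finset.not_nonempty_iff_eq_empty.mp h25))
  · -- M₁ ∩ M₂ = ∅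
    have h12' : M₁ ∩ M₂ = ∅ := Finset.not_nonempty_iff_eq_empty.mp h12
    have h13 : (M₁ ∩ M₃).Nonempty := by
      by_contra hc
      exact d23 (complUnique hk hc1 hc2 hc3 h12' (Finset.not_nonempty_iff_eq_empty.mp hc))
    have h14 : (M₁ ∩ M₄).Nonempty := by
      by_contra hc
      exact d24 (complUnique hk hc1 hc2 hc4 h12' (Finset.not_nonempty_iff_eq_empty.mp hc))
    have h15 : (M₁ ∩ M₅).Nonempty := by
      by_contra hc
      exact d25 (complUnique hk hc1 hc2 hc5 h12' (Finset.not_nonempty_iff_eq_empty.mp hc))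
    by_cases h34 : (M₃ ∩ M₄).Nonempty
    · -- triple (M₁, M₃, M₄), rest (M₂, M₅)
      exact afterTriple SS hk hk3 hf hc1 hc3 hc4 hc2 hc5 d13 d14 d12 d15 d34 d23.symm d35
        d24.symm d45 d25 hm1 hm3 hm4 hm2 hm5 h13 h14 h34
    · by_cases h35 : (M₃ ∩ M₅).Nonempty
      · -- triple (M₁, M₃, M₅), rest (M₂, M₄)
        exact afterTriple SS hk hk3 hf hc1 hc3 hc5 hc2 hc4 d13 d15 d12 d14 d35 d23.symm d34
          d25.symm d45.symm d24 hm1 hm3 hm5 hm2 hm4 h13 h15 h35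
      · exact d45 (complUnique hk hc3 hc4 hc5
          (Finset.not_nonempty_iff_eq_empty.mp h34) (Finset.not_nonempty_iff_eq_empty.mp h35))
end

section
/- Let n ≥ 6 be even. For any four pairwise distinct subsets of [n] consisting of three sets M₁, M₂, M₃ each of size exactly n/2 and one set L of size at least n/2 + 1, some three of the four sets form a Berge triangle. -/
open Finset

lemma pair2' {n : ℕ} {S T : Finset (Fin n)} (hS : S.Nonempty) (hT : T.Nonempty)
    (h : 2 ≤ (S ∪ T).card) : ∃ x ∈ S, ∃ y ∈ T, x ≠ y := by
  obtain ⟨x, hx⟩ := hS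
  obtain ⟨y, hy⟩ := hT
  by_cases hxy : x = y
  · subst hxy
    obtain ⟨w, hw, hwx⟩ := Finset.exists_mem_ne (s := S ∪ T) (by omega) x
    rcases Finset.mem_union.mp hw with h' | h'
    · exact ⟨w, h', x, hy, hwx⟩
    · exact ⟨x, hx, w, h', (Ne.symm hwx)⟩
  · exact ⟨x, hx, y, hy, hxy⟩

lemma sdr3_s8 {n : ℕ} {S1 S2 S3 : Finset (Fin n)} (h1 : S1.Nonempty) (h2 : S2.Nonempty)
    (h3 : S3.Nonempty) (h12 : 2 ≤ (S1 ∪ S2).card) (h13 : 2 ≤ (S1 ∪ S3).card)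
    (h23 : 2 ≤ (S2 ∪ S3).card) (h123 : 3 ≤ (S1 ∪ S2 ∪ S3).card) :
    ∃ x y z, x ≠ y ∧ x ≠ z ∧ y ≠ z ∧ x ∈ S1 ∧ y ∈ S2 ∧ z ∈ S3 := by
  obtain ⟨x, hx, y, hy, hxy⟩ := pair2' h1 h2 h12
  by_cases hz : ∃ z ∈ S3, z ≠ x ∧ z ≠ y
  · obtain ⟨z, hzS, hzx, hzy⟩ := hz
    exact ⟨x, y, z, hxy, Ne.symm hzx, Ne.symm hzy, hx, hy, hzS⟩
  push_neg at hz
  have hS3sub : S3 ⊆ {x, y} := by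
    intro t ht
    simp only [Finset.mem_insert, Finset.mem_singleton]
    by_cases h : t = x
    · exact Or.inl h
    · exact Or.inr (hz t ht h)
  have hns : ¬ (S1 ∪ S2 ∪ S3 ⊆ {x, y}) := by
    intro hsub
    have h1 := Finset.card_le_card hsub
    have h2 : ({x, y} : Finset (Fin n)).card ≤ 2 := Finset.card_le_two
    omega
  obtain ⟨w, hwU, hwxy⟩ := Finset.not_subset.mp hns
  have hwx : w ≠ x := fun h => hwxy (by simp [h])
  have hwy : w ≠ y := fun h => hwxy (by simp [h])
  have hwS3 : w ∉ S3 := fun h => hwxy (hS3sub h)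
  rcases Finset.mem_union.mp hwU with hw' | hw'
  swap
  · exact absurd hw' hwS3
  rcases Finset.mem_union.mp hw' with hwS1 | hwS2
  · by_cases hxS3 : x ∈ S3
    · exact ⟨w, y, x, hwy, hwx, Ne.symm hxy, hwS1, hy, hxS3⟩
    · have hyS3 : y ∈ S3 := by
        obtain ⟨z0, hz0⟩ := h3
        have := hS3sub hz0
        simp only [Finset.mem_insert, Finset.mem_singleton] at this
        rcases this with h | h
        · exact absurd (h ▸ hz0) hxS3
        · exact h ▸ hz0
      obtain ⟨u, hu, v, hv, huv⟩ := pair2' h2 h3 h23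
      have hvy : v = y := by
        have := hS3sub hv
        simp only [Finset.mem_insert, Finset.mem_singleton] at this
        rcases this with h | h
        · exact absurd (h ▸ hv) hxS3
        · exact h
      rw [hvy] at hv huv
      by_cases hux : u = x
      · subst hux
        exact ⟨w, u, y, fun h => hwx h, hwy, huv, hwS1, hu, hyS3⟩
      · exact ⟨x, u, y, fun h => hux h.symm, hxy, huv, hx, hu, hyS3⟩
  · by_cases hyS3 : y ∈ S3
    · exact ⟨x, w, y, Ne.symm hwx, hxy, hwy, hx, hwS2, hyS3⟩
    · have hxS3 : x ∈ S3 := by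
        obtain ⟨z0, hz0⟩ := h3
        have := hS3sub hz0
        simp only [Finset.mem_insert, Finset.mem_singleton] at this
        rcases this with h | h
        · exact h ▸ hz0
        · exact absurd (h ▸ hz0) hyS3
      obtain ⟨u, hu, v, hv, huv⟩ := pair2' h1 h3 h13
      have hvx : v = x := by
        have := hS3sub hv
        simp only [Finset.mem_insert, Finset.mem_singleton] at this
        rcases this with h | h
        · exact h
        · exact absurd (h ▸ hv) hyS3
      rw [hvx] at hv huv
      by_cases huy : u = y
      · subst huy
        exact ⟨u, w, x, Ne.symm hwy, huv, hwx, hu, hwS2, hxS3⟩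
      · exact ⟨u, y, x, huy, huv, Ne.symm hxy, hu, hy, hxS3⟩


def Fail0 {n : ℕ} (A B : Finset (Fin n)) : Prop :=
  (A ∩ B).card = 0 ∧ A ∩ B = ∅

def Fail2 {n : ℕ} (m : ℕ) (A B L : Finset (Fin n)) : Prop :=
  (A ∩ B).card = 1 ∧ A ∩ B = A ∩ L ∧ (A ∩ L).card = 1 ∧ (B ∩ L).card = m ∧
    B ∩ L = B ∧ L.card = m + 1

def Fail5 {n : ℕ} (m : ℕ) (A B L : Finset (Fin n)) : Prop :=
  (A ∩ B).card = 2 ∧ (A ∩ L).card = 2 ∧ (B ∩ L).card = 2 ∧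
    A ∩ L = A ∩ B ∧ B ∩ L = A ∩ B ∧ m = 3 ∧ L.card = 4 ∧
    L = (A ∩ B) ∪ (A ∪ B)ᶜ

section
variable {n m : ℕ}

lemma card_le_n (s : Finset (Fin n)) : s.card ≤ n := by
  simpa using Finset.card_le_univ s

lemma med_med_large (hm : 3 ≤ m) (hn : n = m + m)
    {A B L : Finset (Fin n)} (hA : A.card = m) (hB : B.card = m)
    (hL : m + 1 ≤ L.card)
    (hAB : A ≠ B) (hAL : A ≠ L) (hBL : B ≠ L) :
    BergeTriangle A B L ∨ Fail0 A B ∨ Fail2 m A B L ∨ Fail2 m B A L ∨ Fail5 m A B L := by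
  -- basic cardinality facts
  have eAL := Finset.card_inter_add_card_union A L
  have eBL := Finset.card_inter_add_card_union B L
  have eAB := Finset.card_inter_add_card_union A B
  have uAL := card_le_n (A ∪ L)
  have uBL := card_le_n (B ∪ L)
  have uAB := card_le_n (A ∪ B)
  have hq1 : 1 ≤ (A ∩ L).card := by omega
  have hq2 : 1 ≤ (B ∩ L).card := by omega
  -- p ≤ m - 1
  have hpm : (A ∩ B).card ≠ m := by
    intro h
    have h1 : A ∩ B = A :=
      Finset.eq_of_subset_of_card_le Finset.inter_subset_left (by omega)
    have h2 : A ⊆ B := Finset.inter_eq_left.mp h1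
    exact hAB (Finset.eq_of_subset_of_card_le h2 (by omega))
  have hple : (A ∩ B).card ≤ m := hA ▸ Finset.card_le_card Finset.inter_subset_left
  -- |A∩L ∪ B∩L| ≥ L.card - (A∩B).card
  have hdistr : (A ∪ B) ∩ L = A ∩ L ∪ B ∩ L := Finset.union_inter_distrib_right A B L
  have eABL := Finset.card_inter_add_card_union (A ∪ B) L
  have uABL := card_le_n ((A ∪ B) ∪ L)
  rw [hdistr] at eABL
  have h23 : 2 ≤ (A ∩ L ∪ B ∩ L).card := by omega
  by_cases hP : A ∩ B = ∅
  · exact Or.inr (Or.inl ⟨by simp [hP], hP⟩)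
  have h1ne : (A ∩ B).Nonempty := Finset.nonempty_iff_ne_empty.mpr hP
  have hp1 : 1 ≤ (A ∩ B).card := Finset.card_pos.mpr h1ne
  by_cases h12 : 2 ≤ ((A ∩ B) ∪ (A ∩ L)).card
  swap
  · -- Fail2 A B L
    have hle1 : ((A ∩ B) ∪ (A ∩ L)).card ≤ 1 := by omega
    have hge1 : 1 ≤ ((A ∩ B) ∪ (A ∩ L)).card :=
      le_trans hp1 (Finset.card_le_card Finset.subset_union_left)
    have hS1 : A ∩ B = (A ∩ B) ∪ (A ∩ L) :=
      Finset.eq_of_subset_of_card_le Finset.subset_union_left (by omega)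
    have hS2 : A ∩ L = (A ∩ B) ∪ (A ∩ L) :=
      Finset.eq_of_subset_of_card_le Finset.subset_union_right (by omega)
    have hSe : A ∩ B = A ∩ L := hS1.trans hS2.symm
    have hc1 : (A ∩ B).card = 1 := by rw [hS1]; omega
    have hc2 : (A ∩ L).card = 1 := by rw [hS2]; omega
    have hdist2 : A ∩ (B ∪ L) = (A ∩ B) ∪ (A ∩ L) := Finset.inter_union_distrib_left A B L
    have e2 := Finset.card_inter_add_card_union A (B ∪ L)
    have u2 := card_le_n (A ∪ (B ∪ L))
    rw [hdist2] at e2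
    have hq2m : (B ∩ L).card = m := by
      have : (B ∩ L).card ≤ m := hB ▸ Finset.card_le_card Finset.inter_subset_left
      omega
    have hBsub : B ∩ L = B :=
      Finset.eq_of_subset_of_card_le Finset.inter_subset_left (by omega)
    have hLm : L.card = m + 1 := by omega
    exact Or.inr (Or.inr (Or.inl ⟨hc1, hSe, hc2, hq2m, hBsub, hLm⟩))
  by_cases h13 : 2 ≤ ((A ∩ B) ∪ (B ∩ L)).card
  swap
  · -- Fail2 B A L
    have hge1 : 1 ≤ ((A ∩ B) ∪ (B ∩ L)).card :=
      le_trans hp1 (Finset.card_le_card Finset.subset_union_left)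
    have hS1 : A ∩ B = (A ∩ B) ∪ (B ∩ L) :=
      Finset.eq_of_subset_of_card_le Finset.subset_union_left (by omega)
    have hS2 : B ∩ L = (A ∩ B) ∪ (B ∩ L) :=
      Finset.eq_of_subset_of_card_le Finset.subset_union_right (by omega)
    have hSe : B ∩ A = B ∩ L := by rw [Finset.inter_comm B A]; exact hS1.trans hS2.symm
    have hc1 : (A ∩ B).card = 1 := by rw [hS1]; omega
    have hc2 : (B ∩ L).card = 1 := by rw [hS2]; omega
    have hdist2 : B ∩ (A ∪ L) = (B ∩ A) ∪ (B ∩ L) := Finset.inter_union_distrib_left B A L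
    have e2 := Finset.card_inter_add_card_union B (A ∪ L)
    have u2 := card_le_n (B ∪ (A ∪ L))
    rw [hdist2, ← Finset.inter_comm A B] at e2
    -- e2 : ((A∩B) ∪ (B∩L)).card + (B ∪ (A ∪ L)).card = B.card + (A ∪ L).card
    have hq1m : (A ∩ L).card = m := by
      have : (A ∩ L).card ≤ m := hA ▸ Finset.card_le_card Finset.inter_subset_left
      omega
    have hAsub : A ∩ L = A :=
      Finset.eq_of_subset_of_card_le Finset.inter_subset_left (by omega)
    have hLm : L.card = m + 1 := by omega
    exact Or.inr (Or.inr (Or.inr (Or.inl ⟨by rw [Finset.inter_comm B A]; exact hc1, hSe, hc2, hq1m, hAsub, hLm⟩)))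
  by_cases h123 : 3 ≤ ((A ∩ B) ∪ (A ∩ L) ∪ (B ∩ L)).card
  · left
    exact ⟨hAB, hAL, hBL,
      sdr3_s8 h1ne (Finset.card_pos.mp (by omega)) (Finset.card_pos.mp (by omega)) h12 h13 h23 h123⟩
  · -- Fail5
    right; right; right; right
    have hsub1 : A ∩ B ⊆ (A ∩ B) ∪ (A ∩ L) ∪ (B ∩ L) :=
      Finset.subset_union_left.trans Finset.subset_union_left |>.trans (le_refl _)
    have hsub23 : A ∩ L ∪ B ∩ L ⊆ (A ∩ B) ∪ (A ∩ L) ∪ (B ∩ L) := by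
      intro x hx
      rcases Finset.mem_union.mp hx with h | h
      · exact Finset.mem_union_left _ (Finset.mem_union_right _ h)
      · exact Finset.mem_union_right _ h
    have c1 := Finset.card_le_card hsub1
    have c23 := Finset.card_le_card hsub23
    -- now omega facts: p = 2, m = 3, L.card = 4
    have hm3 : m = 3 := by omega
    have hL4 : L.card = 4 := by omega
    have hp2 : (A ∩ B).card = 2 := by omega
    have hc23 : (A ∩ L ∪ B ∩ L).card = 2 := by omega
    have hU2 : ((A ∩ B) ∪ (A ∩ L) ∪ (B ∩ L)).card = 2 := by omega
    have hS1U : A ∩ B = (A ∩ B) ∪ (A ∩ L) ∪ (B ∩ L) :=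
      Finset.eq_of_subset_of_card_le hsub1 (by omega)
    have hS23U : A ∩ L ∪ B ∩ L = (A ∩ B) ∪ (A ∩ L) ∪ (B ∩ L) :=
      Finset.eq_of_subset_of_card_le hsub23 (by omega)
    have hS23 : A ∩ L ∪ B ∩ L = A ∩ B := hS23U.trans hS1U.symm
    -- L = (A∩B) ∪ (A∪B)ᶜ
    have hLsplit : L ∩ (A ∪ B) ∪ L \ (A ∪ B) = L := by
      rw [Finset.union_comm]; exact Finset.sdiff_union_inter L (A ∪ B)
    have hLint : L ∩ (A ∪ B) = A ∩ B := by
      rw [Finset.inter_comm, hdistr]; exact hS23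
    have ecs := Finset.card_inter_add_card_sdiff L (A ∪ B)
    have hsd2 : (L \ (A ∪ B)).card = 2 := by
      rw [hLint] at ecs; omega
    have hcompl := Finset.card_compl (A ∪ B)
    rw [Fintype.card_fin] at hcompl
    have hsubc : L \ (A ∪ B) ⊆ (A ∪ B)ᶜ := by
      intro x hx
      exact Finset.mem_compl.mpr (Finset.mem_sdiff.mp hx).2
    have hsdc : L \ (A ∪ B) = (A ∪ B)ᶜ :=
      Finset.eq_of_subset_of_card_le hsubc (by omega)
    have hLeq : L = (A ∩ B) ∪ (A ∪ B)ᶜ := by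
      rw [← hLsplit, hLint, hsdc]
    have hALeq : A ∩ L = A ∩ B := by
      rw [hLeq]
      ext x
      simp only [Finset.mem_inter, Finset.mem_union, Finset.mem_compl, Finset.mem_inter]
      tauto
    have hBLeq : B ∩ L = A ∩ B := by
      rw [hLeq]
      ext x
      simp only [Finset.mem_inter, Finset.mem_union, Finset.mem_compl, Finset.mem_inter]
      tauto
    exact ⟨hp2, by rw [hALeq]; omega, by rw [hBLeq]; omega, hALeq, hBLeq, hm3, hL4, hLeq⟩

end
section
variable {n m : ℕ}

-- two complementary pairs with a common set force equality of the other two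
lemma k1 (hn : n = m + m) {A B C : Finset (Fin n)} (hA : A.card = m) (hB : B.card = m)
    (hC : C.card = m) (hBC : B ≠ C) (h1 : A ∩ B = ∅) (h2 : A ∩ C = ∅) : False := by
  have hcompl := Finset.card_compl A
  rw [Fintype.card_fin] at hcompl
  have hsub1 : B ⊆ Aᶜ := by
    intro x hx
    refine Finset.mem_compl.mpr fun hxA => ?_
    have : x ∈ A ∩ B := Finset.mem_inter.mpr ⟨hxA, hx⟩
    simp [h1] at this
  have hsub2 : C ⊆ Aᶜ := by
    intro x hx
    refine Finset.mem_compl.mpr fun hxA => ?_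
    have : x ∈ A ∩ C := Finset.mem_inter.mpr ⟨hxA, hx⟩
    simp [h2] at this
  have e1 : B = Aᶜ := Finset.eq_of_subset_of_card_le hsub1 (by omega)
  have e2 : C = Aᶜ := Finset.eq_of_subset_of_card_le hsub2 (by omega)
  exact hBC (e1.trans e2.symm)

lemma k2a (hm : 3 ≤ m) {B C L : Finset (Fin n)} (hB : B.card = m) (hC : C.card = m)
    (hd : B ∩ C = ∅) (h1 : B ∩ L = B) (h2 : C ∩ L = C) (hLc : L.card = m + 1) : False := by
  have hsub : B ∪ C ⊆ L :=
    Finset.union_subset (Finset.inter_eq_left.mp h1) (Finset.inter_eq_left.mp h2)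
  have hcard := Finset.card_le_card hsub
  have hdisj : (B ∪ C).card = B.card + C.card :=
    Finset.card_union_of_disjoint (Finset.disjoint_iff_inter_eq_empty.mpr hd)
  omega

lemma k2b (hn : n = m + m) (hm : 3 ≤ m) {A B C : Finset (Fin n)} (hA : A.card = m)
    (hB : B.card = m) (hC : C.card = m) (hBC : B ∩ C = ∅)
    (h1 : (B ∩ A).card = 1) (h2 : (C ∩ A).card = 1) : False := by
  -- B ∪ C = univ
  have hdisj : (B ∪ C).card = B.card + C.card :=
    Finset.card_union_of_disjoint (Finset.disjoint_iff_inter_eq_empty.mpr hBC)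
  have huniv : B ∪ C = Finset.univ := by
    apply Finset.eq_univ_of_card
    rw [Fintype.card_fin]; omega
  have hAeq : A = (A ∩ B) ∪ (A ∩ C) := by
    rw [← Finset.inter_union_distrib_left, huniv, Finset.inter_univ]
  have hle := Finset.card_union_le (A ∩ B) (A ∩ C)
  rw [← hAeq] at hle
  rw [Finset.inter_comm B A] at h1
  rw [Finset.inter_comm C A] at h2
  omega

lemma k5 {n : ℕ} {A B C L : Finset (Fin n)} (hBC : B ≠ C)
    (h1 : A ∩ L = A ∩ B) (h2 : L = (A ∩ B) ∪ (A ∪ B)ᶜ)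
    (h3 : A ∩ L = A ∩ C) (h4 : L = (A ∩ C) ∪ (A ∪ C)ᶜ) : False := by
  have hABC : A ∩ B = A ∩ C := h1.symm.trans h3
  have hcompl : (A ∪ B)ᶜ = (A ∪ C)ᶜ := by
    ext x
    simp only [Finset.mem_compl, Finset.mem_union]
    constructor
    · intro hx
      push_neg at hx
      have hxL : x ∈ L := by
        rw [h2]
        exact Finset.mem_union_right _ (Finset.mem_compl.mpr (by simp [hx.1, hx.2]))
      rw [h4] at hxL
      rcases Finset.mem_union.mp hxL with h | h
      · exact absurd (Finset.mem_inter.mp h).1 hx.1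
      · have := Finset.mem_compl.mp h
        simp only [Finset.mem_union] at this
        push_neg
        exact ⟨hx.1, fun hc => this (Or.inr hc)⟩
    · intro hx
      push_neg at hx
      have hxL : x ∈ L := by
        rw [h4]
        exact Finset.mem_union_right _ (Finset.mem_compl.mpr (by simp [hx.1, hx.2]))
      rw [h2] at hxL
      rcases Finset.mem_union.mp hxL with h | h
      · exact absurd (Finset.mem_inter.mp h).1 hx.1
      · have := Finset.mem_compl.mp h
        simp only [Finset.mem_union] at this
        push_neg
        exact ⟨hx.1, fun hc => this (Or.inr hc)⟩
  have hAU : A ∪ B = A ∪ C := by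
    have := congrArg (·ᶜ) hcompl
    simpa using this
  apply hBC
  ext x
  have hi := Finset.ext_iff.mp hABC x
  have hu := Finset.ext_iff.mp hAU x
  simp only [Finset.mem_inter, Finset.mem_union] at hi hu
  constructor
  · intro hx; by_cases hxA : x ∈ A
    · exact (hi.mp ⟨hxA, hx⟩).2
    · rcases hu.mp (Or.inr hx) with h | h
      · exact absurd h hxA
      · exact h
  · intro hx; by_cases hxA : x ∈ A
    · exact (hi.mpr ⟨hxA, hx⟩).2
    · rcases hu.mpr (Or.inr hx) with h | h
      · exact absurd h hxA
      · exact h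

end
/-- For even `n ≥ 6`, among any four pairwise distinct subsets of `[n]` consisting of
three sets of size exactly `n / 2` and one set of size at least `n / 2 + 1`, some three
form a Berge triangle. -/
theorem three_medium_one_large_triangle (n : ℕ) (hn : 6 ≤ n) (hev : Even n)
    (M₁ M₂ M₃ L : Finset (Fin n))
    (hd : [M₁, M₂, M₃, L].Pairwise (· ≠ ·))
    (hM₁ : M₁.card = n / 2) (hM₂ : M₂.card = n / 2) (hM₃ : M₃.card = n / 2)
    (hL : n / 2 + 1 ≤ L.card) :
    ∃ A ∈ ({M₁, M₂, M₃, L} : Set (Finset (Fin n))),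
      ∃ B ∈ ({M₁, M₂, M₃, L} : Set (Finset (Fin n))),
        ∃ C ∈ ({M₁, M₂, M₃, L} : Set (Finset (Fin n))),
          BergeTriangle A B C := by
  obtain ⟨k, hk⟩ := hev
  have hn2 : n = n / 2 + n / 2 := by omega
  have hm3 : 3 ≤ n / 2 := by omega
  simp only [List.pairwise_cons, List.mem_cons, List.mem_singleton, List.not_mem_nil,
    List.Pairwise.nil] at hd
  obtain ⟨h1, h2, h3, -⟩ := hd
  have ne12 : M₁ ≠ M₂ := h1 M₂ (by simp)
  have ne13 : M₁ ≠ M₃ := h1 M₃ (by simp)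
  have ne1L : M₁ ≠ L := h1 L (by simp)
  have ne23 : M₂ ≠ M₃ := h2 M₃ (by simp)
  have ne2L : M₂ ≠ L := h2 L (by simp)
  have ne3L : M₃ ≠ L := h3 L (by simp)
  rcases med_med_large hm3 hn2 hM₁ hM₂ hL ne12 ne1L ne2L with t | f12
  · exact ⟨M₁, by simp, M₂, by simp, L, by simp, t⟩
  rcases med_med_large hm3 hn2 hM₁ hM₃ hL ne13 ne1L ne3L with t | f13
  · exact ⟨M₁, by simp, M₃, by simp, L, by simp, t⟩
  rcases med_med_large hm3 hn2 hM₂ hM₃ hL ne23 ne2L ne3L with t | f23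
  · exact ⟨M₂, by simp, M₃, by simp, L, by simp, t⟩
  exfalso
  rcases f12 with ⟨pz12, e12⟩ | ⟨pb12, sb12, q1b12, q2b12, lb12, Lb12⟩ |
    ⟨pc12, sc12, q2c12, q1c12, lc12, Lc12⟩ | ⟨pd12, qd121, qd122, sd121, sd122, md12, Ld12, LL12⟩ <;>
  rcases f13 with ⟨pz13, e13⟩ | ⟨pb13, sb13, q1b13, q3b13, lb13, Lb13⟩ |
    ⟨pc13, sc13, q3c13, q1c13, lc13, Lc13⟩ | ⟨pd13, qd131, qd132, sd131, sd132, md13, Ld13, LL13⟩ <;>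
  rcases f23 with ⟨pz23, e23⟩ | ⟨pb23, sb23, q2b23, q3b23, lb23, Lb23⟩ |
    ⟨pc23, sc23, q3c23, q2c23, lc23, Lc23⟩ | ⟨pd23, qd231, qd232, sd231, sd232, md23, Ld23, LL23⟩ <;>
  first
    | omega
    | exact k1 hn2 hM₁ hM₂ hM₃ ne23 e12 e13
    | exact k1 hn2 hM₂ hM₁ hM₃ ne13 (by rw [Finset.inter_comm]; exact e12) e23
    | exact k1 hn2 hM₃ hM₁ hM₂ ne12 (by rw [Finset.inter_comm]; exact e13)
        (by rw [Finset.inter_comm]; exact e23)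
    | exact k2a hm3 hM₁ hM₂ e12 lc13 lc23 Lc13
    | exact k2a hm3 hM₁ hM₃ e13 lc12 lb23 Lb23
    | exact k2a hm3 hM₂ hM₃ e23 lb12 lb13 Lb12
    | exact k2b hn2 hm3 hM₃ hM₁ hM₂ e12 pb13 pb23
    | exact k2b hn2 hm3 hM₂ hM₁ hM₃ e13 pb12 pc23
    | exact k2b hn2 hm3 hM₁ hM₂ hM₃ e23 pc12 pc13
    | exact k5 ne23 sd121 LL12 sd131 LL13
    | exact k5 (A := M₂) (B := M₁) (C := M₃) (L := L) ne13 (by rw [Finset.inter_comm M₂ M₁]; exact sd122)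
        (by rw [Finset.inter_comm M₂ M₁, Finset.union_comm M₂ M₁]; exact LL12) sd231 LL23
    | exact k5 (A := M₃) (B := M₁) (C := M₂) (L := L) ne12 (by rw [Finset.inter_comm M₃ M₁]; exact sd132)
        (by rw [Finset.inter_comm M₃ M₁, Finset.union_comm M₃ M₁]; exact LL13)
        (by rw [Finset.inter_comm M₃ M₂]; exact sd232)
        (by rw [Finset.inter_comm M₃ M₂, Finset.union_comm M₃ M₂]; exact LL23)
end

section
/- Let n ≥ 6 be even. Any three pairwise distinct subsets L₁, L₂, L₃ of [n], each of size at least n/2 + 1, form a Berge triangle. -/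
open Finset

namespace Finset

variable {α : Type*} [DecidableEq α]

theorem exists_injective_of_card_sub_one_le_card {ι : Type*} [Fintype ι]
    (t : ι → Finset α) (ht : ∀ i, Fintype.card ι - 1 ≤ #(t i))
    (hunion : Fintype.card ι ≤ #(univ.biUnion t)) :
    ∃ f : ι → α, Function.Injective f ∧ ∀ i, f i ∈ t i := by
  refine (all_card_le_biUnion_card_iff_exists_injective t).mp fun s ↦ ?_
  obtain rfl | hs := eq_or_ne s univ
  · simpa using hunion
  obtain rfl | ⟨i, hi⟩ := s.eq_empty_or_nonempty
  · simp
  calc #s ≤ Fintype.card ι - 1 := Nat.le_sub_one_of_lt ((card_lt_iff_ne_univ s).mpr hs)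
    _ ≤ #(t i) := ht i
    _ ≤ #(s.biUnion t) := card_le_card (subset_biUnion_of_mem t hi)

theorem exists_pairwise_ne_mem_of_two_le_card {P Q R : Finset α}
    (hP : 2 ≤ #P) (hQ : 2 ≤ #Q) (hR : 2 ≤ #R) (hunion : 3 ≤ #(P ∪ Q ∪ R)) :
    ∃ x ∈ P, ∃ y ∈ Q, ∃ z ∈ R, x ≠ y ∧ x ≠ z ∧ y ≠ z := by
  obtain ⟨f, hf, hmem⟩ := exists_injective_of_card_sub_one_le_card ![P, Q, R]
    (by simp [Fin.forall_fin_succ, hP, hQ, hR])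
    (by simpa [Fin.univ_succ, union_assoc] using hunion)
  exact ⟨f 0, hmem 0, f 1, hmem 1, f 2, hmem 2, hf.ne (by decide), hf.ne (by decide),
    hf.ne (by decide)⟩

variable [Fintype α]

theorem two_le_card_inter_of_card_add_card {A B : Finset α}
    (h : Fintype.card α + 2 ≤ #A + #B) : 2 ≤ #(A ∩ B) := by
  have := card_union_add_card_inter A B
  have := card_le_univ (A ∪ B)
  omega

theorem three_le_card_inter_union {A B C : Finset α}
    (hAB : Fintype.card α + 2 ≤ #A + #B) (hC : 3 ≤ #C) :
    3 ≤ #(A ∩ B ∪ A ∩ C ∪ B ∩ C) := by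
  by_contra! hlt
  have hABle : #(A ∩ B) ≤ 2 := by
    have := card_le_card (show A ∩ B ⊆ A ∩ B ∪ A ∩ C ∪ B ∩ C by grind)
    omega
  have hcover : A ∪ B = univ := by
    rw [← card_eq_iff_eq_univ]
    have := card_union_add_card_inter A B
    have := card_le_univ (A ∪ B)
    omega
  have hCsub : C ⊆ A ∩ B ∪ A ∩ C ∪ B ∩ C := fun x hx ↦ by
    have : x ∈ A ∪ B := hcover ▸ mem_univ x
    grind
  have := card_le_card hCsub
  omega

end Finset

/-- For even `n ≥ 6`, any three pairwise distinct subsets of `[n]`, each of size at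
least `n / 2 + 1`, form a Berge triangle. -/
theorem three_large_triangle (n : ℕ) (hn : 6 ≤ n) (hev : Even n)
    (L₁ L₂ L₃ : Finset (Fin n))
    (hd : [L₁, L₂, L₃].Pairwise (· ≠ ·))
    (hL₁ : n / 2 + 1 ≤ L₁.card) (hL₂ : n / 2 + 1 ≤ L₂.card) (hL₃ : n / 2 + 1 ≤ L₃.card) :
    BergeTriangle L₁ L₂ L₃ := by
  obtain ⟨h₁₂, h₁₃, h₂₃⟩ : L₁ ≠ L₂ ∧ L₁ ≠ L₃ ∧ L₂ ≠ L₃ := by simpa [and_assoc] using hd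
  have hlarge : ∀ {A B : Finset (Fin n)}, n / 2 + 1 ≤ #A → n / 2 + 1 ≤ #B →
      Fintype.card (Fin n) + 2 ≤ #A + #B := by
    intro A B hA hB
    rw [Fintype.card_fin]
    obtain ⟨k, rfl⟩ := hev
    omega
  obtain ⟨x, hx, y, hy, z, hz, hxy, hxz, hyz⟩ := exists_pairwise_ne_mem_of_two_le_card
    (two_le_card_inter_of_card_add_card (hlarge hL₁ hL₂))
    (two_le_card_inter_of_card_add_card (hlarge hL₁ hL₃))
    (two_le_card_inter_of_card_add_card (hlarge hL₂ hL₃))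
    (three_le_card_inter_union (hlarge hL₁ hL₂) (by omega))
  exact ⟨h₁₂, h₁₃, h₂₃, x, y, z, hxy, hxz, hyz, hx, hy, hz⟩
end

section
/- Let n ≥ 26 be even. For any five pairwise distinct subsets M₁, M₂, M₃, M₄, M₅ of [n], each of size exactly n/2, some four of them form a Berge four-cycle (in some cyclic order). -/
lemma compl_eq_of_medium {n : ℕ} (hn : 26 ≤ n) (hev : Even n) {S T U : Finset (Fin n)}
    (hS : S.card = n / 2) (hT : T.card = n / 2) (hU : U.card = n / 2)
    (h1 : S ∩ U = ∅) (h2 : T ∩ U = ∅) : S = T := by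
  obtain ⟨m, hm⟩ := hev
  have hcc : (Uᶜ : Finset (Fin n)).card = n - n / 2 := by
    rw [Finset.card_compl, Fintype.card_fin, hU]
  have hSc : S ⊆ Uᶜ := by
    intro z hz
    rw [Finset.mem_compl]
    intro hzU
    have : z ∈ S ∩ U := Finset.mem_inter.mpr ⟨hz, hzU⟩
    simp [h1] at this
  have hTc : T ⊆ Uᶜ := by
    intro z hz
    rw [Finset.mem_compl]
    intro hzU
    have : z ∈ T ∩ U := Finset.mem_inter.mpr ⟨hz, hzU⟩
    simp [h2] at this
  have e1 : S = Uᶜ := Finset.eq_of_subset_of_card_le hSc (by omega)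
  have e2 : T = Uᶜ := Finset.eq_of_subset_of_card_le hTc (by omega)
  rw [e1, e2]

lemma smallF2 {n : ℕ} (hn : 26 ≤ n) (hev : Even n) {A B C : Finset (Fin n)}
    (hA : A.card = n / 2) (hB : B.card = n / 2) (hC : C.card = n / 2)
    (h1 : (A ∩ B).card ≤ 3) (h2 : (A ∩ C).card ≤ 3) : 4 ≤ (B ∩ C).card := by
  obtain ⟨m, hm⟩ := hev
  have e1 : (B ∩ A).card + (B \ A).card = B.card := Finset.card_inter_add_card_sdiff B A
  have e2 : (C ∩ A).card + (C \ A).card = C.card := Finset.card_inter_add_card_sdiff C A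
  have e1' : (B ∩ A).card = (A ∩ B).card := by rw [Finset.inter_comm]
  have e2' : (C ∩ A).card = (A ∩ C).card := by rw [Finset.inter_comm]
  have e3 : ((B \ A) ∪ (C \ A)).card + ((B \ A) ∩ (C \ A)).card
      = (B \ A).card + (C \ A).card := Finset.card_union_add_card_inter _ _
  have e4 : (B \ A) ∪ (C \ A) ⊆ Aᶜ := by
    intro z hz
    rw [Finset.mem_compl]
    rcases Finset.mem_union.mp hz with h | h
    · exact (Finset.mem_sdiff.mp h).2
    · exact (Finset.mem_sdiff.mp h).2
  have e5 : ((B \ A) ∪ (C \ A)).card ≤ (Aᶜ : Finset (Fin n)).card := Finset.card_le_card e4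
  have e6 : (Aᶜ : Finset (Fin n)).card = n - n / 2 := by
    rw [Finset.card_compl, Fintype.card_fin, hA]
  have e7 : (B \ A) ∩ (C \ A) ⊆ B ∩ C := by
    intro z hz
    rw [Finset.mem_inter] at hz ⊢
    exact ⟨(Finset.mem_sdiff.mp hz.1).1, (Finset.mem_sdiff.mp hz.2).1⟩
  have e8 := Finset.card_le_card e7
  omega

set_option maxHeartbeats 4000000 in
set_option synthInstance.maxSize 10000 in
set_option synthInstance.maxHeartbeats 2000000 in
lemma matching_bool : ∀ a b c d e f g h i j : Bool,
    (a = true → b = true → e = true → False) →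
    (a = true → c = true → f = true → False) →
    (a = true → d = true → g = true → False) →
    (b = true → c = true → h = true → False) →
    (b = true → d = true → i = true → False) →
    (c = true → d = true → j = true → False) →
    (e = true → f = true → h = true → False) →
    (e = true → g = true → i = true → False) →
    (f = true → g = true → j = true → False) →
    (h = true → i = true → j = true → False) →
    (a = false ∧ h = false) ∨
    (b = false ∧ f = false) ∨
    (c = false ∧ e = false) ∨
    (a = false ∧ i = false) ∨
    (b = false ∧ g = false) ∨
    (d = false ∧ e = false) ∨
    (a = false ∧ j = false) ∨
    (c = false ∧ g = false) ∨
    (d = false ∧ f = false) ∨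
    (b = false ∧ j = false) ∨
    (c = false ∧ i = false) ∨
    (d = false ∧ h = false) ∨
    (e = false ∧ j = false) ∨
    (f = false ∧ i = false) ∨
    (g = false ∧ h = false) := by
  decide

lemma build_berge {n : ℕ} {A B C D : Finset (Fin n)}
    (hAB : A ≠ B) (hAC : A ≠ C) (hAD : A ≠ D) (hBC : B ≠ C) (hBD : B ≠ D) (hCD : C ≠ D)
    (h1 : 4 ≤ (A ∩ B).card) (h2 : 4 ≤ (C ∩ D).card)
    {x y : Fin n} (hx : x ∈ B ∩ C) (hy : y ∈ D ∩ A) (hxy : x ≠ y) : BergeC4 A B C D := by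
  have hp1 : 0 < ((A ∩ B) \ {x, y}).card := by
    have e1 : ((A ∩ B) \ {x, y}).card + ({x, y} : Finset (Fin n)).card
        = ((A ∩ B) ∪ {x, y}).card := Finset.card_sdiff_add_card _ _
    have e2 : ({x, y} : Finset (Fin n)).card ≤ 2 :=
      le_trans (Finset.card_insert_le _ _) (by simp)
    have e3 : (A ∩ B).card ≤ ((A ∩ B) ∪ {x, y}).card :=
      Finset.card_le_card Finset.subset_union_left
    omega
  obtain ⟨x1, hx1⟩ := Finset.card_pos.mp hp1
  rw [Finset.mem_sdiff] at hx1
  obtain ⟨hx1m, hx1n⟩ := hx1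
  simp only [Finset.mem_insert, Finset.mem_singleton, not_or] at hx1n
  have hp2 : 0 < ((C ∩ D) \ {x, y, x1}).card := by
    have e1 : ((C ∩ D) \ {x, y, x1}).card + ({x, y, x1} : Finset (Fin n)).card
        = ((C ∩ D) ∪ {x, y, x1}).card := Finset.card_sdiff_add_card _ _
    have e2 : ({x, y, x1} : Finset (Fin n)).card ≤ 3 := by
      have g1 := Finset.card_insert_le x ({y, x1} : Finset (Fin n))
      have g2 := Finset.card_insert_le y ({x1} : Finset (Fin n))
      have g3 : ({x1} : Finset (Fin n)).card = 1 := Finset.card_singleton x1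
      omega
    have e3 : (C ∩ D).card ≤ ((C ∩ D) ∪ {x, y, x1}).card :=
      Finset.card_le_card Finset.subset_union_left
    omega
  obtain ⟨x3, hx3⟩ := Finset.card_pos.mp hp2
  rw [Finset.mem_sdiff] at hx3
  obtain ⟨hx3m, hx3n⟩ := hx3
  simp only [Finset.mem_insert, Finset.mem_singleton, not_or] at hx3n
  exact ⟨hAB, hAC, hAD, hBC, hBD, hCD, x1, x, x3, y,
    hx1n.1, Ne.symm hx3n.2.2, hx1n.2, Ne.symm hx3n.1, hxy, hx3n.2.1,
    hx1m, hx, hx3m, hy⟩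

lemma core {n : ℕ} (hn : 26 ≤ n) (hev : Even n) {A B C D : Finset (Fin n)}
    (hA : A.card = n / 2) (hB : B.card = n / 2) (hC : C.card = n / 2) (hD : D.card = n / 2)
    (hAB : A ≠ B) (hAC : A ≠ C) (hAD : A ≠ D) (hBC : B ≠ C) (hBD : B ≠ D) (hCD : C ≠ D)
    (h1 : 4 ≤ (A ∩ B).card) (h2 : 4 ≤ (C ∩ D).card) :
    BergeC4 A B C D ∨ BergeC4 A B D C := by
  by_cases hS : ∃ x ∈ B ∩ C, ∃ y ∈ A ∩ D, x ≠ y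
  · obtain ⟨x, hx, y, hy, hxy⟩ := hS
    exact Or.inl (build_berge hAB hAC hAD hBC hBD hCD h1 h2 hx
      (Finset.mem_inter.mpr ⟨(Finset.mem_inter.mp hy).2, (Finset.mem_inter.mp hy).1⟩) hxy)
  by_cases hS2 : ∃ x ∈ B ∩ D, ∃ y ∈ A ∩ C, x ≠ y
  · obtain ⟨x, hx, y, hy, hxy⟩ := hS2
    exact Or.inr (build_berge hAB hAD hAC hBD hBC hCD.symm h1
      (by rwa [Finset.inter_comm] at h2) hx
      (Finset.mem_inter.mpr ⟨(Finset.mem_inter.mp hy).2, (Finset.mem_inter.mp hy).1⟩) hxy)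
  exfalso
  push_neg at hS hS2
  rcases Finset.eq_empty_or_nonempty (B ∩ C) with hE | ⟨p, hp⟩
  · rcases Finset.eq_empty_or_nonempty (B ∩ D) with hE2 | ⟨u, hu⟩
    · exact hCD (compl_eq_of_medium hn hev hC hD hB
        (by rw [Finset.inter_comm]; exact hE) (by rw [Finset.inter_comm]; exact hE2))
    · rcases Finset.eq_empty_or_nonempty (A ∩ C) with hE3 | ⟨v, hv⟩
      · exact hAB (compl_eq_of_medium hn hev hA hB hC hE3 hE)
      · have huv : u = v := hS2 u hu v hv
        have huC : u ∈ C := by rw [huv]; exact (Finset.mem_inter.mp hv).2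
        have : u ∈ B ∩ C := Finset.mem_inter.mpr ⟨(Finset.mem_inter.mp hu).1, huC⟩
        rw [hE] at this
        exact absurd this (Finset.notMem_empty u)
  · rcases Finset.eq_empty_or_nonempty (A ∩ D) with hE | ⟨q, hq⟩
    · rcases Finset.eq_empty_or_nonempty (B ∩ D) with hE2 | ⟨u, hu⟩
      · exact hAB (compl_eq_of_medium hn hev hA hB hD hE hE2)
      · rcases Finset.eq_empty_or_nonempty (A ∩ C) with hE3 | ⟨v, hv⟩
        · exact hCD (compl_eq_of_medium hn hev hC hD hA
            (by rw [Finset.inter_comm]; exact hE3) (by rw [Finset.inter_comm]; exact hE))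
        · have huv : u = v := hS2 u hu v hv
          have huA : u ∈ A := by rw [huv]; exact (Finset.mem_inter.mp hv).1
          have : u ∈ A ∩ D := Finset.mem_inter.mpr ⟨huA, (Finset.mem_inter.mp hu).2⟩
          rw [hE] at this
          exact absurd this (Finset.notMem_empty u)
    · have hpq : p = q := hS p hp q hq
      have hxA : q ∈ A := (Finset.mem_inter.mp hq).1
      have hxD : q ∈ D := (Finset.mem_inter.mp hq).2
      have hxB : q ∈ B := by rw [← hpq]; exact (Finset.mem_inter.mp hp).1
      have hxC : q ∈ C := by rw [← hpq]; exact (Finset.mem_inter.mp hp).2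
      have hBCx : ∀ z ∈ B ∩ C, z = q := fun z hz => hS z hz q hq
      have hADx : ∀ z ∈ A ∩ D, z = q := fun z hz => (hS p hp z hz).symm.trans hpq
      have hBDx : ∀ z ∈ B ∩ D, z = q := fun z hz =>
        hS2 z hz q (Finset.mem_inter.mpr ⟨hxA, hxC⟩)
      have hACx : ∀ z ∈ A ∩ C, z = q := fun z hz =>
        (hS2 q (Finset.mem_inter.mpr ⟨hxB, hxD⟩) z hz).symm
      obtain ⟨m, hm⟩ := hev
      have hsub : (C ∪ D).erase q ⊆ (A ∪ B)ᶜ := by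
        intro z hz
        obtain ⟨hzq, hzCD⟩ := Finset.mem_erase.mp hz
        rw [Finset.mem_compl]
        intro hzAB
        rcases Finset.mem_union.mp hzAB with hzA | hzB <;>
          rcases Finset.mem_union.mp hzCD with hzC | hzD
        · exact hzq (hACx z (Finset.mem_inter.mpr ⟨hzA, hzC⟩))
        · exact hzq (hADx z (Finset.mem_inter.mpr ⟨hzA, hzD⟩))
        · exact hzq (hBCx z (Finset.mem_inter.mpr ⟨hzB, hzC⟩))
        · exact hzq (hBDx z (Finset.mem_inter.mpr ⟨hzB, hzD⟩))
      have c7 := Finset.card_le_card hsub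
      have c1 : ((C ∪ D).erase q).card = (C ∪ D).card - 1 :=
        Finset.card_erase_of_mem (Finset.mem_union_left _ hxC)
      have c2 : (C ∪ D).card + (C ∩ D).card = C.card + D.card :=
        Finset.card_union_add_card_inter _ _
      have c5 : ((A ∪ B)ᶜ : Finset (Fin n)).card = n - (A ∪ B).card := by
        rw [Finset.card_compl, Fintype.card_fin]
      have c6 : (A ∪ B).card + (A ∩ B).card = A.card + B.card :=
        Finset.card_union_add_card_inter _ _
      have c8 : (A ∪ B).card ≤ n :=
        le_trans (Finset.card_le_univ _) (by simp)
      have hCDlt : (C ∩ D).card < n / 2 := by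
        have hle : (C ∩ D).card ≤ C.card := Finset.card_le_card Finset.inter_subset_left
        rcases lt_or_eq_of_le hle with hlt | heq
        · omega
        · exfalso
          have e : C ∩ D = C :=
            Finset.eq_of_subset_of_card_le Finset.inter_subset_left (le_of_eq heq.symm)
          have hsub2 : C ⊆ D := e ▸ Finset.inter_subset_right
          exact hCD (Finset.eq_of_subset_of_card_le hsub2 (by omega))
      have hABlt : (A ∩ B).card < n / 2 := by
        have hle : (A ∩ B).card ≤ A.card := Finset.card_le_card Finset.inter_subset_left
        rcases lt_or_eq_of_le hle with hlt | heq
        · omega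
        · exfalso
          have e : A ∩ B = A :=
            Finset.eq_of_subset_of_card_le Finset.inter_subset_left (le_of_eq heq.symm)
          have hsub2 : A ⊆ B := e ▸ Finset.inter_subset_right
          exact hAB (Finset.eq_of_subset_of_card_le hsub2 (by omega))
      omega

/-- For even `n ≥ 26`, among any five pairwise distinct subsets of `[n]` of size
exactly `n / 2`, some four form a Berge four-cycle in some cyclic order. -/
theorem five_medium_C4 (n : ℕ) (hn : 26 ≤ n) (hev : Even n)
    (M₁ M₂ M₃ M₄ M₅ : Finset (Fin n))
    (hd : [M₁, M₂, M₃, M₄, M₅].Pairwise (· ≠ ·))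
    (hcard : ∀ M ∈ ({M₁, M₂, M₃, M₄, M₅} : Set (Finset (Fin n))), M.card = n / 2) :
    ∃ A ∈ ({M₁, M₂, M₃, M₄, M₅} : Set (Finset (Fin n))),
      ∃ B ∈ ({M₁, M₂, M₃, M₄, M₅} : Set (Finset (Fin n))),
        ∃ C ∈ ({M₁, M₂, M₃, M₄, M₅} : Set (Finset (Fin n))),
          ∃ D ∈ ({M₁, M₂, M₃, M₄, M₅} : Set (Finset (Fin n))),
            BergeC4 A B C D := by
  rw [List.pairwise_cons] at hd
  obtain ⟨f1, hd⟩ := hd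
  rw [List.pairwise_cons] at hd
  obtain ⟨f2, hd⟩ := hd
  rw [List.pairwise_cons] at hd
  obtain ⟨f3, hd⟩ := hd
  rw [List.pairwise_cons] at hd
  obtain ⟨f4, hd⟩ := hd
  have h12 : M₁ ≠ M₂ := f1 M₂ (by simp)
  have h13 : M₁ ≠ M₃ := f1 M₃ (by simp)
  have h14 : M₁ ≠ M₄ := f1 M₄ (by simp)
  have h15 : M₁ ≠ M₅ := f1 M₅ (by simp)
  have h23 : M₂ ≠ M₃ := f2 M₃ (by simp)
  have h24 : M₂ ≠ M₄ := f2 M₄ (by simp)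
  have h25 : M₂ ≠ M₅ := f2 M₅ (by simp)
  have h34 : M₃ ≠ M₄ := f3 M₄ (by simp)
  have h35 : M₃ ≠ M₅ := f3 M₅ (by simp)
  have h45 : M₄ ≠ M₅ := f4 M₅ (by simp)
  have hc1 : (M₁).card = n / 2 := hcard M₁ (by simp)
  have hc2 : (M₂).card = n / 2 := hcard M₂ (by simp)
  have hc3 : (M₃).card = n / 2 := hcard M₃ (by simp)
  have hc4 : (M₄).card = n / 2 := hcard M₄ (by simp)
  have hc5 : (M₅).card = n / 2 := hcard M₅ (by simp)
  have t123 : decide ((M₁ ∩ M₂).card ≤ 3) = true → decide ((M₁ ∩ M₃).card ≤ 3) = true → decide ((M₂ ∩ M₃).card ≤ 3) = true → False := by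
    intro u v w
    have hu := of_decide_eq_true u
    have hv := of_decide_eq_true v
    have hw := of_decide_eq_true w
    have := smallF2 hn hev hc1 hc2 hc3 hu hv
    omega
  have t124 : decide ((M₁ ∩ M₂).card ≤ 3) = true → decide ((M₁ ∩ M₄).card ≤ 3) = true → decide ((M₂ ∩ M₄).card ≤ 3) = true → False := by
    intro u v w
    have hu := of_decide_eq_true u
    have hv := of_decide_eq_true v
    have hw := of_decide_eq_true w
    have := smallF2 hn hev hc1 hc2 hc4 hu hv
    omega
  have t125 : decide ((M₁ ∩ M₂).card ≤ 3) = true → decide ((M₁ ∩ M₅).card ≤ 3) = true → decide ((M₂ ∩ M₅).card ≤ 3) = true → False := by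
    intro u v w
    have hu := of_decide_eq_true u
    have hv := of_decide_eq_true v
    have hw := of_decide_eq_true w
    have := smallF2 hn hev hc1 hc2 hc5 hu hv
    omega
  have t134 : decide ((M₁ ∩ M₃).card ≤ 3) = true → decide ((M₁ ∩ M₄).card ≤ 3) = true → decide ((M₃ ∩ M₄).card ≤ 3) = true → False := by
    intro u v w
    have hu := of_decide_eq_true u
    have hv := of_decide_eq_true v
    have hw := of_decide_eq_true w
    have := smallF2 hn hev hc1 hc3 hc4 hu hv
    omega
  have t135 : decide ((M₁ ∩ M₃).card ≤ 3) = true → decide ((M₁ ∩ M₅).card ≤ 3) = true → decide ((M₃ ∩ M₅).card ≤ 3) = true → False := by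
    intro u v w
    have hu := of_decide_eq_true u
    have hv := of_decide_eq_true v
    have hw := of_decide_eq_true w
    have := smallF2 hn hev hc1 hc3 hc5 hu hv
    omega
  have t145 : decide ((M₁ ∩ M₄).card ≤ 3) = true → decide ((M₁ ∩ M₅).card ≤ 3) = true → decide ((M₄ ∩ M₅).card ≤ 3) = true → False := by
    intro u v w
    have hu := of_decide_eq_true u
    have hv := of_decide_eq_true v
    have hw := of_decide_eq_true w
    have := smallF2 hn hev hc1 hc4 hc5 hu hv
    omega
  have t234 : decide ((M₂ ∩ M₃).card ≤ 3) = true → decide ((M₂ ∩ M₄).card ≤ 3) = true → decide ((M₃ ∩ M₄).card ≤ 3) = true → False := by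
    intro u v w
    have hu := of_decide_eq_true u
    have hv := of_decide_eq_true v
    have hw := of_decide_eq_true w
    have := smallF2 hn hev hc2 hc3 hc4 hu hv
    omega
  have t235 : decide ((M₂ ∩ M₃).card ≤ 3) = true → decide ((M₂ ∩ M₅).card ≤ 3) = true → decide ((M₃ ∩ M₅).card ≤ 3) = true → False := by
    intro u v w
    have hu := of_decide_eq_true u
    have hv := of_decide_eq_true v
    have hw := of_decide_eq_true w
    have := smallF2 hn hev hc2 hc3 hc5 hu hv
    omega
  have t245 : decide ((M₂ ∩ M₄).card ≤ 3) = true → decide ((M₂ ∩ M₅).card ≤ 3) = true → decide ((M₄ ∩ M₅).card ≤ 3) = true → False := by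
    intro u v w
    have hu := of_decide_eq_true u
    have hv := of_decide_eq_true v
    have hw := of_decide_eq_true w
    have := smallF2 hn hev hc2 hc4 hc5 hu hv
    omega
  have t345 : decide ((M₃ ∩ M₄).card ≤ 3) = true → decide ((M₃ ∩ M₅).card ≤ 3) = true → decide ((M₄ ∩ M₅).card ≤ 3) = true → False := by
    intro u v w
    have hu := of_decide_eq_true u
    have hv := of_decide_eq_true v
    have hw := of_decide_eq_true w
    have := smallF2 hn hev hc3 hc4 hc5 hu hv
    omega
  have big := matching_bool (decide ((M₁ ∩ M₂).card ≤ 3)) (decide ((M₁ ∩ M₃).card ≤ 3)) (decide ((M₁ ∩ M₄).card ≤ 3)) (decide ((M₁ ∩ M₅).card ≤ 3)) (decide ((M₂ ∩ M₃).card ≤ 3)) (decide ((M₂ ∩ M₄).card ≤ 3)) (decide ((M₂ ∩ M₅).card ≤ 3)) (decide ((M₃ ∩ M₄).card ≤ 3)) (decide ((M₃ ∩ M₅).card ≤ 3)) (decide ((M₄ ∩ M₅).card ≤ 3)) t123 t124 t125 t134 t135 t145 t234 t235 t245 t345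
  rcases big with ⟨hu, hv⟩|⟨hu, hv⟩|⟨hu, hv⟩|⟨hu, hv⟩|⟨hu, hv⟩|⟨hu, hv⟩|⟨hu, hv⟩|⟨hu, hv⟩|⟨hu, hv⟩|⟨hu, hv⟩|⟨hu, hv⟩|⟨hu, hv⟩|⟨hu, hv⟩|⟨hu, hv⟩|⟨hu, hv⟩
  · have g1 : 4 ≤ (M₁ ∩ M₂).card := by have := of_decide_eq_false hu; omega
    have g2 : 4 ≤ (M₃ ∩ M₄).card := by have := of_decide_eq_false hv; omega
    rcases core hn hev hc1 hc2 hc3 hc4 h12 h13 h14 h23 h24 h34 g1 g2 with hB | hB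
    · exact ⟨M₁, by simp, M₂, by simp, M₃, by simp, M₄, by simp, hB⟩
    · exact ⟨M₁, by simp, M₂, by simp, M₄, by simp, M₃, by simp, hB⟩
  · have g1 : 4 ≤ (M₁ ∩ M₃).card := by have := of_decide_eq_false hu; omega
    have g2 : 4 ≤ (M₂ ∩ M₄).card := by have := of_decide_eq_false hv; omega
    rcases core hn hev hc1 hc3 hc2 hc4 h13 h12 h14 h23.symm h34 h24 g1 g2 with hB | hB
    · exact ⟨M₁, by simp, M₃, by simp, M₂, by simp, M₄, by simp, hB⟩
    · exact ⟨M₁, by simp, M₃, by simp, M₄, by simp, M₂, by simp, hB⟩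
  · have g1 : 4 ≤ (M₁ ∩ M₄).card := by have := of_decide_eq_false hu; omega
    have g2 : 4 ≤ (M₂ ∩ M₃).card := by have := of_decide_eq_false hv; omega
    rcases core hn hev hc1 hc4 hc2 hc3 h14 h12 h13 h24.symm h34.symm h23 g1 g2 with hB | hB
    · exact ⟨M₁, by simp, M₄, by simp, M₂, by simp, M₃, by simp, hB⟩
    · exact ⟨M₁, by simp, M₄, by simp, M₃, by simp, M₂, by simp, hB⟩
  · have g1 : 4 ≤ (M₁ ∩ M₂).card := by have := of_decide_eq_false hu; omega
    have g2 : 4 ≤ (M₃ ∩ M₅).card := by have := of_decide_eq_false hv; omega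
    rcases core hn hev hc1 hc2 hc3 hc5 h12 h13 h15 h23 h25 h35 g1 g2 with hB | hB
    · exact ⟨M₁, by simp, M₂, by simp, M₃, by simp, M₅, by simp, hB⟩
    · exact ⟨M₁, by simp, M₂, by simp, M₅, by simp, M₃, by simp, hB⟩
  · have g1 : 4 ≤ (M₁ ∩ M₃).card := by have := of_decide_eq_false hu; omega
    have g2 : 4 ≤ (M₂ ∩ M₅).card := by have := of_decide_eq_false hv; omega
    rcases core hn hev hc1 hc3 hc2 hc5 h13 h12 h15 h23.symm h35 h25 g1 g2 with hB | hB
    · exact ⟨M₁, by simp, M₃, by simp, M₂, by simp, M₅, by simp, hB⟩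
    · exact ⟨M₁, by simp, M₃, by simp, M₅, by simp, M₂, by simp, hB⟩
  · have g1 : 4 ≤ (M₁ ∩ M₅).card := by have := of_decide_eq_false hu; omega
    have g2 : 4 ≤ (M₂ ∩ M₃).card := by have := of_decide_eq_false hv; omega
    rcases core hn hev hc1 hc5 hc2 hc3 h15 h12 h13 h25.symm h35.symm h23 g1 g2 with hB | hB
    · exact ⟨M₁, by simp, M₅, by simp, M₂, by simp, M₃, by simp, hB⟩
    · exact ⟨M₁, by simp, M₅, by simp, M₃, by simp, M₂, by simp, hB⟩
  · have g1 : 4 ≤ (M₁ ∩ M₂).card := by have := of_decide_eq_false hu; omega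
    have g2 : 4 ≤ (M₄ ∩ M₅).card := by have := of_decide_eq_false hv; omega
    rcases core hn hev hc1 hc2 hc4 hc5 h12 h14 h15 h24 h25 h45 g1 g2 with hB | hB
    · exact ⟨M₁, by simp, M₂, by simp, M₄, by simp, M₅, by simp, hB⟩
    · exact ⟨M₁, by simp, M₂, by simp, M₅, by simp, M₄, by simp, hB⟩
  · have g1 : 4 ≤ (M₁ ∩ M₄).card := by have := of_decide_eq_false hu; omega
    have g2 : 4 ≤ (M₂ ∩ M₅).card := by have := of_decide_eq_false hv; omega
    rcases core hn hev hc1 hc4 hc2 hc5 h14 h12 h15 h24.symm h45 h25 g1 g2 with hB | hB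
    · exact ⟨M₁, by simp, M₄, by simp, M₂, by simp, M₅, by simp, hB⟩
    · exact ⟨M₁, by simp, M₄, by simp, M₅, by simp, M₂, by simp, hB⟩
  · have g1 : 4 ≤ (M₁ ∩ M₅).card := by have := of_decide_eq_false hu; omega
    have g2 : 4 ≤ (M₂ ∩ M₄).card := by have := of_decide_eq_false hv; omega
    rcases core hn hev hc1 hc5 hc2 hc4 h15 h12 h14 h25.symm h45.symm h24 g1 g2 with hB | hB
    · exact ⟨M₁, by simp, M₅, by simp, M₂, by simp, M₄, by simp, hB⟩
    · exact ⟨M₁, by simp, M₅, by simp, M₄, by simp, M₂, by simp, hB⟩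
  · have g1 : 4 ≤ (M₁ ∩ M₃).card := by have := of_decide_eq_false hu; omega
    have g2 : 4 ≤ (M₄ ∩ M₅).card := by have := of_decide_eq_false hv; omega
    rcases core hn hev hc1 hc3 hc4 hc5 h13 h14 h15 h34 h35 h45 g1 g2 with hB | hB
    · exact ⟨M₁, by simp, M₃, by simp, M₄, by simp, M₅, by simp, hB⟩
    · exact ⟨M₁, by simp, M₃, by simp, M₅, by simp, M₄, by simp, hB⟩
  · have g1 : 4 ≤ (M₁ ∩ M₄).card := by have := of_decide_eq_false hu; omega
    have g2 : 4 ≤ (M₃ ∩ M₅).card := by have := of_decide_eq_false hv; omega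
    rcases core hn hev hc1 hc4 hc3 hc5 h14 h13 h15 h34.symm h45 h35 g1 g2 with hB | hB
    · exact ⟨M₁, by simp, M₄, by simp, M₃, by simp, M₅, by simp, hB⟩
    · exact ⟨M₁, by simp, M₄, by simp, M₅, by simp, M₃, by simp, hB⟩
  · have g1 : 4 ≤ (M₁ ∩ M₅).card := by have := of_decide_eq_false hu; omega
    have g2 : 4 ≤ (M₃ ∩ M₄).card := by have := of_decide_eq_false hv; omega
    rcases core hn hev hc1 hc5 hc3 hc4 h15 h13 h14 h35.symm h45.symm h34 g1 g2 with hB | hB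
    · exact ⟨M₁, by simp, M₅, by simp, M₃, by simp, M₄, by simp, hB⟩
    · exact ⟨M₁, by simp, M₅, by simp, M₄, by simp, M₃, by simp, hB⟩
  · have g1 : 4 ≤ (M₂ ∩ M₃).card := by have := of_decide_eq_false hu; omega
    have g2 : 4 ≤ (M₄ ∩ M₅).card := by have := of_decide_eq_false hv; omega
    rcases core hn hev hc2 hc3 hc4 hc5 h23 h24 h25 h34 h35 h45 g1 g2 with hB | hB
    · exact ⟨M₂, by simp, M₃, by simp, M₄, by simp, M₅, by simp, hB⟩
    · exact ⟨M₂, by simp, M₃, by simp, M₅, by simp, M₄, by simp, hB⟩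
  · have g1 : 4 ≤ (M₂ ∩ M₄).card := by have := of_decide_eq_false hu; omega
    have g2 : 4 ≤ (M₃ ∩ M₅).card := by have := of_decide_eq_false hv; omega
    rcases core hn hev hc2 hc4 hc3 hc5 h24 h23 h25 h34.symm h45 h35 g1 g2 with hB | hB
    · exact ⟨M₂, by simp, M₄, by simp, M₃, by simp, M₅, by simp, hB⟩
    · exact ⟨M₂, by simp, M₄, by simp, M₅, by simp, M₃, by simp, hB⟩
  · have g1 : 4 ≤ (M₂ ∩ M₅).card := by have := of_decide_eq_false hu; omega
    have g2 : 4 ≤ (M₃ ∩ M₄).card := by have := of_decide_eq_false hv; omega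
    rcases core hn hev hc2 hc5 hc3 hc4 h25 h23 h24 h35.symm h45.symm h34 g1 g2 with hB | hB
    · exact ⟨M₂, by simp, M₅, by simp, M₃, by simp, M₄, by simp, hB⟩
    · exact ⟨M₂, by simp, M₅, by simp, M₄, by simp, M₃, by simp, hB⟩
end

section
/- Let n ≥ 26 be even. For any five pairwise distinct subsets of [n] consisting of four sets M₁, M₂, M₃, M₄ each of size exactly n/2 and one set L₁ of size at least n/2 + 1, some four of the five sets form a Berge four-cycle (in some cyclic order). -/
open Finset

section Counting

variable {α : Type*} [DecidableEq α]

theorem exists_mem_ne_of_one_lt_card_union {P Q : Finset α} (hP : P.Nonempty) (hQ : Q.Nonempty)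
    (h : 1 < #(P ∪ Q)) : ∃ p ∈ P, ∃ q ∈ Q, p ≠ q := by
  obtain ⟨p, hp⟩ := hP
  obtain ⟨q, hq⟩ := hQ
  rcases eq_or_ne p q with rfl | hpq
  · obtain ⟨y, hy, hyp⟩ := exists_mem_ne h p
    rcases mem_union.mp hy with hy | hy
    · exact ⟨y, hy, p, hq, hyp⟩
    · exact ⟨p, hp, y, hy, hyp.symm⟩
  · exact ⟨p, hp, q, hq, hpq⟩

theorem exists_mem_ne_ne {s : Finset α} (h : 2 < #s) (a b : α) : ∃ x ∈ s, x ≠ a ∧ x ≠ b := by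
  obtain ⟨x, hx, hxab⟩ :=
    exists_mem_notMem_of_card_lt_card (card_le_two.trans_lt h : #{a, b} < #s)
  simp only [mem_insert, mem_singleton, not_or] at hxab
  exact ⟨x, hx, hxab⟩

theorem card_lt_card_union_of_ne {s t : Finset α} (h : #s = #t) (hst : s ≠ t) :
    #s < #(s ∪ t) := by
  refine card_lt_card (ssubset_of_subset_of_ne subset_union_left fun hs => hst ?_)
  exact (eq_of_subset_of_card_le (hs ▸ subset_union_right) h.le).symm

variable [Fintype α]

theorem card_add_card_le_card_univ_add_card_inter (s t : Finset α) :
    #s + #t ≤ Fintype.card α + #(s ∩ t) := by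
  rw [← card_union_add_card_inter]
  exact Nat.add_le_add_right (card_le_univ _) _

variable {A B C D S : Finset α}

theorem inter_nonempty_or_inter_nonempty (hA : 2 * #A = Fintype.card α)
    (hB : 2 * #B = Fintype.card α) (hS : Fintype.card α ≤ 2 * #S) (hAB : A ≠ B) :
    (S ∩ A).Nonempty ∨ (S ∩ B).Nonempty := by
  have h := card_add_card_le_card_univ_add_card_inter S (A ∪ B)
  have := card_lt_card_union_of_ne (by omega) hAB
  rw [inter_union_distrib_left] at h
  exact union_nonempty.mp (card_pos.mp (by omega))

theorem four_le_card_inter_of_card_inter_le_three (hN : 20 ≤ Fintype.card α)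
    (hA : 2 * #A = Fintype.card α) (hB : 2 * #B = Fintype.card α) (hC : 2 * #C = Fintype.card α)
    (hAB : #(A ∩ B) ≤ 3) (hAC : #(A ∩ C) ≤ 3) : 4 ≤ #(B ∩ C) := by
  have hsub : B ∪ C ⊆ Aᶜ ∪ (A ∩ B ∪ A ∩ C) := by
    intro x
    simp only [mem_union, mem_compl, mem_inter]
    tauto
  have h₁ := card_le_card hsub
  have h₂ := card_union_le Aᶜ (A ∩ B ∪ A ∩ C)
  have h₃ := card_union_le (A ∩ B) (A ∩ C)
  have h₄ := card_union_add_card_inter B C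
  rw [card_compl] at h₂
  omega

theorem one_lt_card_inter_union (hN : 10 ≤ Fintype.card α) (hA : 2 * #A = Fintype.card α)
    (hB : 2 * #B = Fintype.card α) (hS : Fintype.card α ≤ 2 * #S) (hAB : #(A ∩ B) ≤ 3) :
    1 < #(S ∩ (A ∪ B)) := by
  have h := card_add_card_le_card_univ_add_card_inter S (A ∪ B)
  have := card_union_add_card_inter A B
  omega

theorem cross_inter_nonempty
    (hA : 2 * #A = Fintype.card α) (hB : 2 * #B = Fintype.card α)
    (hC : 2 * #C = Fintype.card α) (hD : 2 * #D = Fintype.card α) (hAB : A ≠ B) (hCD : C ≠ D) :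
    (A ∩ C).Nonempty ∧ (B ∩ D).Nonempty ∨ (A ∩ D).Nonempty ∧ (B ∩ C).Nonempty := by
  have hA' := inter_nonempty_or_inter_nonempty hC hD hA.ge hCD
  have hB' := inter_nonempty_or_inter_nonempty hC hD hB.ge hCD
  have hC' := inter_nonempty_or_inter_nonempty hA hB hC.ge hAB
  have hD' := inter_nonempty_or_inter_nonempty hA hB hD.ge hAB
  rw [inter_comm C, inter_comm C] at hC'
  rw [inter_comm D, inter_comm D] at hD'
  tauto

end Counting

theorem exists_path_or_perfect_matching {β : Type*} [DecidableEq β] {r : β → β → Prop}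
    (hr : ∀ a b, r a b → r b a) {s : Finset β} (hs : #s = 4)
    (h : ∀ a ∈ s, ∀ b ∈ s, ∀ c ∈ s, a ≠ b → a ≠ c → b ≠ c → ¬r a b → ¬r a c → r b c) :
    (∃ a ∈ s, ∃ b ∈ s, ∃ c ∈ s, a ≠ b ∧ a ≠ c ∧ b ≠ c ∧ r a b ∧ r b c) ∨
      ∃ a ∈ s, ∃ b ∈ s, ∃ c ∈ s, ∃ d ∈ s, a ≠ b ∧ a ≠ c ∧ a ≠ d ∧ b ≠ c ∧ b ≠ d ∧ c ≠ d ∧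
        r a b ∧ r c d ∧ ¬r a c ∧ ¬r a d ∧ ¬r b c ∧ ¬r b d := by
  by_cases hpath : ∃ a ∈ s, ∃ b ∈ s, ∃ c ∈ s, a ≠ b ∧ a ≠ c ∧ b ≠ c ∧ r a b ∧ r b c
  · exact .inl hpath
  push Not at hpath
  right
  obtain ⟨a, ha⟩ := card_pos.mp (by omega : 0 < #s)
  obtain ⟨b, hb, hab, hrab⟩ : ∃ b ∈ s, a ≠ b ∧ r a b := by
    by_contra! hna
    obtain ⟨x, y, z, hxy, hxz, hyz, hxyz⟩ :=
      card_eq_three.mp (by rw [card_erase_of_mem ha, hs] : #(s.erase a) = 3)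
    have hx : x ∈ s.erase a := by simp [hxyz]
    have hy : y ∈ s.erase a := by simp [hxyz]
    have hz : z ∈ s.erase a := by simp [hxyz]
    simp only [mem_erase] at hx hy hz
    exact hpath x hx.2 y hy.2 z hz.2 hxy hxz hyz
      (h a ha x hx.2 y hy.2 hx.1.symm hy.1.symm hxy (hna x hx.2 hx.1.symm) (hna y hy.2 hy.1.symm))
      (h a ha y hy.2 z hz.2 hy.1.symm hz.1.symm hyz (hna y hy.2 hy.1.symm) (hna z hz.2 hz.1.symm))
  obtain ⟨c, d, hcd, hcd'⟩ :=
    card_eq_two.mp (by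
      rw [card_erase_of_mem (mem_erase.mpr ⟨hab.symm, hb⟩), card_erase_of_mem ha, hs] :
        #((s.erase a).erase b) = 2)
  have hc : c ∈ (s.erase a).erase b := by simp [hcd']
  have hd : d ∈ (s.erase a).erase b := by simp [hcd']
  simp only [mem_erase] at hc hd
  have hac : ¬r a c := fun hrac => hpath c hc.2.2 a ha b hb hc.2.1 hc.1 hab (hr a c hrac) hrab
  have had : ¬r a d := fun hrad => hpath d hd.2.2 a ha b hb hd.2.1 hd.1 hab (hr a d hrad) hrab
  exact ⟨a, ha, b, hb, c, hc.2.2, d, hd.2.2, hab, hc.2.1.symm, hd.2.1.symm, hc.1.symm, hd.1.symm,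
    hcd, hrab, h a ha c hc.2.2 d hd.2.2 hc.2.1.symm hd.2.1.symm hcd hac had, hac, had,
    hpath a ha b hb c hc.2.2 hab hc.2.1.symm hc.1.symm hrab,
    hpath a ha b hb d hd.2.2 hab hd.2.1.symm hd.1.symm hrab⟩

def HasBergeC4 {n : ℕ} (F : Set (Finset (Fin n))) : Prop :=
  ∃ A ∈ F, ∃ B ∈ F, ∃ C ∈ F, ∃ D ∈ F, BergeC4 A B C D

theorem HasBergeC4.mono {n : ℕ} {F G : Set (Finset (Fin n))} (hFG : F ⊆ G) (h : HasBergeC4 F) :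
    HasBergeC4 G := by
  obtain ⟨A, hA, B, hB, C, hC, D, hD, h⟩ := h
  exact ⟨A, hFG hA, B, hFG hB, C, hFG hC, D, hFG hD, h⟩

section

variable {n : ℕ} {A B C D L : Finset (Fin n)}

theorem BergeC4.of_four_le_card_inter (hAB : A ≠ B) (hAC : A ≠ C) (hAD : A ≠ D) (hBC : B ≠ C)
    (hBD : B ≠ D) (hCD : C ≠ D) (h₁ : 4 ≤ #(A ∩ B)) {x₂ x₃ x₄ : Fin n} (h₂ : x₂ ∈ B ∩ C)
    (h₃ : x₃ ∈ C ∩ D) (h₄ : x₄ ∈ D ∩ A) (h₂₃ : x₂ ≠ x₃) (h₂₄ : x₂ ≠ x₄) (h₃₄ : x₃ ≠ x₄) :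
    BergeC4 A B C D := by
  obtain ⟨x₁, hx₁, hx₁'⟩ :=
    exists_mem_notMem_of_card_lt_card (card_le_three.trans_lt h₁ : #{x₂, x₃, x₄} < #(A ∩ B))
  simp only [mem_insert, mem_singleton, not_or] at hx₁'
  exact ⟨hAB, hAC, hAD, hBC, hBD, hCD, x₁, x₂, x₃, x₄, hx₁'.1, hx₁'.2.1, hx₁'.2.2, h₂₃, h₂₄, h₃₄,
    hx₁, h₂, h₃, h₄⟩

theorem BergeC4.of_three_le_card_inter (hAB : A ≠ B) (hAC : A ≠ C) (hAD : A ≠ D) (hBC : B ≠ C)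
    (hBD : B ≠ D) (hCD : C ≠ D) (h₁ : 4 ≤ #(A ∩ B)) (h₃ : 3 ≤ #(C ∩ D)) {x₂ x₄ : Fin n}
    (h₂ : x₂ ∈ B ∩ C) (h₄ : x₄ ∈ D ∩ A) (h₂₄ : x₂ ≠ x₄) : BergeC4 A B C D := by
  obtain ⟨x₃, hx₃, hx₃₂, hx₃₄⟩ := exists_mem_ne_ne h₃ x₂ x₄
  exact .of_four_le_card_inter hAB hAC hAD hBC hBD hCD h₁ h₂ hx₃ h₄ hx₃₂.symm h₂₄ hx₃₄

theorem BergeC4.of_mem_erase {x : Fin n} (hAB : A ≠ B) (hAC : A ≠ C) (hAL : A ≠ L)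
    (hBC : B ≠ C) (hBL : B ≠ L) (hCL : C ≠ L) (h₁ : 4 ≤ #(A ∩ B)) (hx : x ∈ B ∩ C)
    (h₃ : (L.erase x ∩ C).Nonempty) (h₄ : (L.erase x ∩ A).Nonempty)
    (h₃₄ : 1 < #(L.erase x ∩ (C ∪ A))) : BergeC4 A B C L := by
  rw [inter_union_distrib_left] at h₃₄
  obtain ⟨x₃, hx₃, x₄, hx₄, hx₃₄⟩ := exists_mem_ne_of_one_lt_card_union h₃ h₄ h₃₄
  simp only [mem_inter, mem_erase] at hx₃ hx₄
  exact .of_four_le_card_inter hAB hAC hAL hBC hBL hCL h₁ hx (mem_inter.mpr ⟨hx₃.2, hx₃.1.2⟩)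
    (mem_inter.mpr ⟨hx₄.1.2, hx₄.2⟩) (Ne.symm hx₃.1.1) (Ne.symm hx₄.1.1) hx₃₄

theorem BergeC4.of_path (hA : 2 * #A = n) (hC : 2 * #C = n) (hL : n < 2 * #L) (hAB : A ≠ B)
    (hAC : A ≠ C) (hBC : B ≠ C) (hBL : B ≠ L) (h₁ : 4 ≤ #(A ∩ B)) (h₂ : 3 ≤ #(B ∩ C)) :
    BergeC4 A B C L := by
  have hCA := card_lt_card_union_of_ne (by omega) hAC.symm
  have hLCA := card_add_card_le_card_univ_add_card_inter L (C ∪ A)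
  have hLC := card_add_card_le_card_univ_add_card_inter L C
  have hLA := card_add_card_le_card_univ_add_card_inter L A
  rw [Fintype.card_fin] at hLCA hLC hLA
  rw [inter_union_distrib_left] at hLCA
  obtain ⟨x₃, hx₃, x₄, hx₄, hx₃₄⟩ := exists_mem_ne_of_one_lt_card_union
    (card_pos.mp (by omega : 0 < #(L ∩ C))) (card_pos.mp (by omega : 0 < #(L ∩ A))) (by omega)
  obtain ⟨x₂, hx₂, hx₂₃, hx₂₄⟩ := exists_mem_ne_ne h₂ x₃ x₄
  exact .of_four_le_card_inter hAB hAC (by rintro rfl; omega) hBC hBL (by rintro rfl; omega) h₁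
    hx₂ (by rwa [inter_comm]) hx₄ hx₂₃ hx₂₄ hx₃₄

theorem hasBergeC4_of_mem_inter_of_mem_inter (hn : 10 ≤ n) (hA : 2 * #A = n)
    (hB : 2 * #B = n) (hC : 2 * #C = n) (hD : 2 * #D = n) (hL : n < 2 * #L) (hAB : A ≠ B)
    (hAC : A ≠ C) (hAD : A ≠ D) (hBC : B ≠ C) (hBD : B ≠ D) (hCD : C ≠ D)
    (hAB₄ : 4 ≤ #(A ∩ B)) (hAD₃ : #(A ∩ D) ≤ 3) (hBC₃ : #(B ∩ C) ≤ 3) {x : Fin n}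
    (hxBD : x ∈ B ∩ D) (hxAC : x ∈ A ∩ C) : HasBergeC4 {A, B, C, D, L} := by
  have hcard : Fintype.card (Fin n) = n := Fintype.card_fin n
  have hL' : n ≤ 2 * #(L.erase x) := by
    have := pred_card_le_card_erase (s := L) (a := x)
    omega
  have hmeet {X Y : Finset (Fin n)} (hX : 2 * #X = n) (hY : 2 * #Y = n) (hXY : X ≠ Y) :
      (L.erase x ∩ X).Nonempty ∨ (L.erase x ∩ Y).Nonempty :=
    inter_nonempty_or_inter_nonempty (hX.trans hcard.symm) (hY.trans hcard.symm)
      (hcard.trans_le hL') hXY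
  have hAL : A ≠ L := by rintro rfl; omega
  have hBL : B ≠ L := by rintro rfl; omega
  have hCL : C ≠ L := by rintro rfl; omega
  have hDL : D ≠ L := by rintro rfl; omega
  by_cases hDA : (L.erase x ∩ D).Nonempty ∧ (L.erase x ∩ A).Nonempty
  · refine ⟨A, by simp, B, by simp, D, by simp, L, by simp, ?_⟩
    exact .of_mem_erase hAB hAD hAL hBD hBL hDL hAB₄ hxBD hDA.1 hDA.2
      (one_lt_card_inter_union (hn.trans_eq hcard.symm) (hD.trans hcard.symm)
        (hA.trans hcard.symm) (hcard.trans_le hL') (by rwa [inter_comm]))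
  have hC₀ : (L.erase x ∩ C).Nonempty := by
    rcases not_and_or.mp hDA with h | h
    · exact (hmeet hC hD hCD).resolve_right h
    · exact (hmeet hC hA hAC.symm).resolve_right h
  have hB₀ : (L.erase x ∩ B).Nonempty := by
    rcases not_and_or.mp hDA with h | h
    · exact (hmeet hB hD hBD).resolve_right h
    · exact (hmeet hB hA hAB.symm).resolve_right h
  refine ⟨B, by simp, A, by simp, C, by simp, L, by simp, ?_⟩
  exact .of_mem_erase hAB.symm hBC hBL hAC hAL hCL (by rwa [inter_comm]) hxAC hC₀ hB₀
    (one_lt_card_inter_union (hn.trans_eq hcard.symm) (hC.trans hcard.symm)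
      (hB.trans hcard.symm) (hcard.trans_le hL') (by rwa [inter_comm]))

theorem hasBergeC4_of_perfect_matching_of_nonempty (hn : 10 ≤ n) (hA : 2 * #A = n)
    (hB : 2 * #B = n) (hC : 2 * #C = n) (hD : 2 * #D = n) (hL : n < 2 * #L) (hAB : A ≠ B)
    (hAC : A ≠ C) (hAD : A ≠ D) (hBC : B ≠ C) (hBD : B ≠ D) (hCD : C ≠ D)
    (hAB₄ : 4 ≤ #(A ∩ B)) (hCD₄ : 4 ≤ #(C ∩ D)) (hAD₃ : #(A ∩ D) ≤ 3) (hBC₃ : #(B ∩ C) ≤ 3)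
    (hAC₀ : (A ∩ C).Nonempty) (hBD₀ : (B ∩ D).Nonempty) :
    HasBergeC4 {A, B, C, D, L} := by
  by_cases h : ∃ y ∈ B ∩ D, ∃ z ∈ A ∩ C, y ≠ z
  · obtain ⟨y, hy, z, hz, hyz⟩ := h
    refine ⟨A, by simp, B, by simp, D, by simp, C, by simp, ?_⟩
    exact .of_three_le_card_inter hAB hAD hAC hBD hBC hCD.symm hAB₄ (by rw [inter_comm]; omega)
      hy (by rwa [inter_comm]) hyz
  push Not at h
  obtain ⟨x, hxBD⟩ := hBD₀
  obtain ⟨z, hzAC⟩ := hAC₀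
  exact hasBergeC4_of_mem_inter_of_mem_inter hn hA hB hC hD hL hAB hAC hAD hBC hBD hCD hAB₄ hAD₃
    hBC₃ hxBD (h x hxBD z hzAC ▸ hzAC)

theorem hasBergeC4_of_perfect_matching (hn : 10 ≤ n) (hA : 2 * #A = n) (hB : 2 * #B = n)
    (hC : 2 * #C = n) (hD : 2 * #D = n) (hL : n < 2 * #L) (hAB : A ≠ B) (hAC : A ≠ C)
    (hAD : A ≠ D) (hBC : B ≠ C) (hBD : B ≠ D) (hCD : C ≠ D) (hAB₄ : 4 ≤ #(A ∩ B))
    (hCD₄ : 4 ≤ #(C ∩ D)) (hAC₃ : #(A ∩ C) ≤ 3) (hAD₃ : #(A ∩ D) ≤ 3) (hBC₃ : #(B ∩ C) ≤ 3)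
    (hBD₃ : #(B ∩ D) ≤ 3) : HasBergeC4 {A, B, C, D, L} := by
  have hcard : Fintype.card (Fin n) = n := Fintype.card_fin n
  rcases cross_inter_nonempty (hA.trans hcard.symm) (hB.trans hcard.symm) (hC.trans hcard.symm)
    (hD.trans hcard.symm) hAB hCD with ⟨hAC₀, hBD₀⟩ | ⟨hAD₀, hBC₀⟩
  · exact hasBergeC4_of_perfect_matching_of_nonempty hn hA hB hC hD hL hAB hAC hAD hBC hBD hCD
      hAB₄ hCD₄ hAD₃ hBC₃ hAC₀ hBD₀
  · refine (hasBergeC4_of_perfect_matching_of_nonempty hn hA hB hD hC hL hAB hAD hAC hBD hBC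
      hCD.symm hAB₄ (by rwa [inter_comm]) hAC₃ hBD₃ hAD₀ hBC₀).mono ?_
    simp [Set.insert_subset_iff]

end

theorem hasBergeC4_insert_of_card_eq_four {n : ℕ} (hn : 20 ≤ n) {Ms : Finset (Finset (Fin n))}
    (hMs : #Ms = 4) (hM : ∀ X ∈ Ms, 2 * #X = n) {L : Finset (Fin n)} (hL : n < 2 * #L) :
    HasBergeC4 (insert L (Ms : Set (Finset (Fin n)))) := by
  have hcard : Fintype.card (Fin n) = n := Fintype.card_fin n
  rcases exists_path_or_perfect_matching (r := fun X Y => 4 ≤ #(X ∩ Y))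
      (fun X Y h => by rwa [inter_comm]) hMs
      (fun A hA B hB C hC _ _ _ hAB hAC => four_le_card_inter_of_card_inter_le_three
        (hn.trans_eq hcard.symm) ((hM A hA).trans hcard.symm) ((hM B hB).trans hcard.symm)
        ((hM C hC).trans hcard.symm) (by omega) (by omega)) with
    ⟨A, hA, B, hB, C, hC, hAB, hAC, hBC, hAB₄, hBC₄⟩ |
      ⟨A, hA, B, hB, C, hC, D, hD, hAB, hAC, hAD, hBC, hBD, hCD, hAB₄, hCD₄, hAC₃, hAD₃, hBC₃,
        hBD₃⟩
  · have hBL : B ≠ L := by rintro rfl; have := hM B hB; omega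
    exact ⟨A, .inr hA, B, .inr hB, C, .inr hC, L, .inl rfl,
      .of_path (hM A hA) (hM C hC) hL hAB hAC hBC hBL hAB₄ (by omega)⟩
  · refine (hasBergeC4_of_perfect_matching (by omega) (hM A hA) (hM B hB) (hM C hC) (hM D hD) hL
      hAB hAC hAD hBC hBD hCD hAB₄ hCD₄ (by omega) (by omega) (by omega) (by omega)).mono ?_
    simp [Set.insert_subset_iff, hA, hB, hC, hD]

/-- For even `n ≥ 26`, among any five pairwise distinct subsets of `[n]` consisting of
four sets of size exactly `n / 2` and one set of size at least `n / 2 + 1`, some four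
form a Berge four-cycle in some cyclic order. -/
theorem four_medium_one_large_C4 (n : ℕ) (hn : 26 ≤ n) (hev : Even n)
    (M₁ M₂ M₃ M₄ L₁ : Finset (Fin n))
    (hd : [M₁, M₂, M₃, M₄, L₁].Pairwise (· ≠ ·))
    (hM₁ : M₁.card = n / 2) (hM₂ : M₂.card = n / 2)
    (hM₃ : M₃.card = n / 2) (hM₄ : M₄.card = n / 2)
    (hL₁ : n / 2 + 1 ≤ L₁.card) :
    ∃ A ∈ ({M₁, M₂, M₃, M₄, L₁} : Set (Finset (Fin n))),
      ∃ B ∈ ({M₁, M₂, M₃, M₄, L₁} : Set (Finset (Fin n))),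
        ∃ C ∈ ({M₁, M₂, M₃, M₄, L₁} : Set (Finset (Fin n))),
          ∃ D ∈ ({M₁, M₂, M₃, M₄, L₁} : Set (Finset (Fin n))),
            BergeC4 A B C D := by
  have h2 := Nat.two_mul_div_two_of_even hev
  simp only [List.pairwise_cons, List.mem_cons, List.not_mem_nil, forall_eq_or_imp] at hd
  have h4 : #({M₁, M₂, M₃, M₄} : Finset (Finset (Fin n))) = 4 := by
    simp [card_insert_of_notMem, hd]
  refine (hasBergeC4_insert_of_card_eq_four (L := L₁) (by omega) h4 ?_ (by omega)).mono ?_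
  · simp only [mem_insert, mem_singleton]
    rintro X (rfl | rfl | rfl | rfl) <;> omega
  · simp [Set.insert_subset_iff]
end
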